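/- arXiv:1201.1585 — 4 statements merged into one kernel-verified Lean document; each statement's English description precedes it below -/
import Mathlib

section
/- For every continuous character χ : F^× → ℂ^× and every f ∈ C_c^∞(F), there exists a Laurent polynomial P ∈ ℂ[X, X⁻¹] such that ζ_ψ(s,χ,f) = P(q_F^{−s}) · L(s,χ) for all s with Re(s) > −σ_χ; in particular, ζ_ψ(s,χ,f) extends to a rational function of q_F^{−s}. -/
set_option linter.unusedSectionVars false
set_option linter.unusedVariables false
set_option linter.unnecessarySimpa false
set_option maxHeartbeats 1000000
open Filter
open scoped Topology NNReal ENNReal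


open MeasureTheory Complex
open scoped Classical

noncomputable section

/-- The normalized absolute value `|x|_F = q^{-ord x}` (with `|0|_F = 0`). -/
def absF {F : Type*} [Field F] (q : ℕ) (ord : F → ℤ) (x : F) : ℝ :=
  if x = 0 then 0 else (q : ℝ) ^ (-(ord x))

/-- The fractional ideal `𝔭_F^n = {x | ord_F x ≥ n} ∪ {0}`; `𝒪_F = pF ord 0`,
`𝔭_F = pF ord 1`. -/
def pF {F : Type*} [Field F] (ord : F → ℤ) (n : ℤ) : Set F :=
  {x | x = 0 ∨ n ≤ ord x}

/-- A continuous non-trivial additive character `F → ℂ^×`. -/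
def IsAddCharF {F : Type*} [Field F] [TopologicalSpace F] (ψ : F → ℂ) : Prop :=
  Continuous ψ ∧ (∀ x y : F, ψ (x + y) = ψ x * ψ y) ∧ (∀ x : F, ψ x ≠ 0) ∧
    ψ ≠ fun _ => (1 : ℂ)

/-- `ψ` has level `l`: it is trivial on `𝔭_F^l` but not on `𝔭_F^{l-1}`. -/
def IsLevel {F : Type*} [Field F] (ord : F → ℤ) (ψ : F → ℂ) (l : ℤ) : Prop :=
  (∀ x ∈ pF ord l, ψ x = 1) ∧ ∃ x ∈ pF ord (l - 1), ψ x ≠ 1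

/-- The Fourier transform `𝓕_ψ(f)(x) = ∫ f(y) ψ(xy) dμ(y)`. -/
def FT {F : Type*} [Field F] [MeasurableSpace F] (ψ : F → ℂ) (μ : Measure F)
    (f : F → ℂ) (x : F) : ℂ :=
  ∫ y, f y * ψ (x * y) ∂μ

/-- The multiplicative Haar measure `dμ^×(x) = (q/(q-1)) |x|_F⁻¹ dμ(x)`. -/
def mulMeasure {F : Type*} [Field F] [MeasurableSpace F] (q : ℕ) (ord : F → ℤ)
    (μ : Measure F) : Measure F :=
  μ.withDensity fun x => ENNReal.ofReal ((q : ℝ) / ((q : ℝ) - 1) * (absF q ord x)⁻¹)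

/-- The local zeta integral `ζ_ψ(s,χ,f) = ∫_{F^×} f(x) χ(x) |x|_F^s dμ_ψ^×(x)`. -/
def zetaF {F : Type*} [Field F] [MeasurableSpace F] (q : ℕ) (ord : F → ℤ)
    (μ : Measure F) (χ : F → ℂ) (s : ℂ) (f : F → ℂ) : ℂ :=
  ∫ x, f x * χ x * (↑(absF q ord x) : ℂ) ^ s ∂(mulMeasure q ord μ)

/-- A continuous multiplicative character of `F^×` (recorded as a function on `F`
whose value at `0` is irrelevant). -/
def IsMultCharF {F : Type*} [Field F] [TopologicalSpace F] (χ : F → ℂ) : Prop :=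
  ContinuousOn χ {x : F | x ≠ 0} ∧
    (∀ x y : F, x ≠ 0 → y ≠ 0 → χ (x * y) = χ x * χ y) ∧
    ∀ x : F, x ≠ 0 → χ x ≠ 0

/-- Tate's local functional equation, with γ-factor `γ(s,χ,ψ) = Γ(q^{-s})` for a
rational function `Γ ∈ ℂ(X)`:
`ζ_ψ(1-s, χ⁻¹, 𝓕_ψ(f)) = Γ(q^{-s}) ζ_ψ(s,χ,f)` for all `f ∈ C_c^∞(F)` and all `s`
in the strip `-σ_χ < Re s < 1 - σ_χ`. -/
def TateFE {F : Type*} [Field F] [TopologicalSpace F] [MeasurableSpace F]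
    (q : ℕ) (ord : F → ℤ) (χ : F → ℂ) (σ : ℝ) (ψ : F → ℂ) (μ : Measure F)
    (Γ : RatFunc ℂ) : Prop :=
  ∀ f : F → ℂ, IsLocallyConstant f → HasCompactSupport f →
    ∀ s : ℂ, -σ < s.re → s.re < 1 - σ →
      zetaF q ord μ (fun x => (χ x)⁻¹) (1 - s) (FT ψ μ f)
        = RatFunc.eval (RingHom.id ℂ) ((q : ℂ) ^ (-s)) Γ * zetaF q ord μ χ s f

/-- The local L-factor `L(s,χ)`: `(1 - χ(ϖ) q^{-s})⁻¹` if `χ` is unramified, `1`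
if `χ` is ramified. -/
def Lfactor {F : Type*} [Field F] (q : ℕ) (ord : F → ℤ) (ϖ : F) (χ : F → ℂ)
    (s : ℂ) : ℂ :=
  if ∀ x : F, x ≠ 0 → ord x = 0 → χ x = 1 then
    (1 - χ ϖ * (q : ℂ) ^ (-s))⁻¹ else 1


namespace ZetaAux

variable {F : Type} [Field F]

theorem ord_one (ord : F → ℤ)
    (hord_mul : ∀ x y : F, x ≠ 0 → y ≠ 0 → ord (x * y) = ord x + ord y) :
    ord 1 = 0 := by
  have := hord_mul 1 1 one_ne_zero one_ne_zero
  simp at this; omega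

theorem ord_inv (ord : F → ℤ)
    (hord_mul : ∀ x y : F, x ≠ 0 → y ≠ 0 → ord (x * y) = ord x + ord y)
    (x : F) (hx : x ≠ 0) : ord x⁻¹ = - ord x := by
  have := hord_mul x x⁻¹ hx (inv_ne_zero hx)
  rw [mul_inv_cancel₀ hx, ord_one ord hord_mul] at this
  omega

theorem ord_neg (ord : F → ℤ)
    (hord_mul : ∀ x y : F, x ≠ 0 → y ≠ 0 → ord (x * y) = ord x + ord y)
    (x : F) (hx : x ≠ 0) : ord (-x) = ord x := by
  have h1 : ord ((-1 : F) * (-1)) = ord (-1) + ord (-1) :=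
    hord_mul _ _ (by simp) (by simp)
  rw [neg_one_mul, neg_neg, ord_one ord hord_mul] at h1
  have := hord_mul (-1) x (by simp) hx
  rw [neg_one_mul] at this
  omega

theorem ord_pow (ord : F → ℤ)
    (hord_mul : ∀ x y : F, x ≠ 0 → y ≠ 0 → ord (x * y) = ord x + ord y)
    (x : F) (hx : x ≠ 0) : ∀ n : ℕ, ord (x ^ n) = n * ord x := by
  intro n
  induction n with
  | zero => simpa using ord_one ord hord_mul
  | succ n ih =>
    rw [pow_succ, hord_mul _ _ (pow_ne_zero _ hx) hx, ih]
    push_cast; ring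

theorem ord_zpow (ord : F → ℤ)
    (hord_mul : ∀ x y : F, x ≠ 0 → y ≠ 0 → ord (x * y) = ord x + ord y)
    (x : F) (hx : x ≠ 0) : ∀ k : ℤ, ord (x ^ k) = k * ord x := by
  intro k
  rcases k with n | n
  · simpa using ord_pow ord hord_mul x hx n
  · rw [zpow_negSucc, ord_inv ord hord_mul _ (pow_ne_zero _ hx),
      ord_pow ord hord_mul x hx, Int.negSucc_eq]
    push_cast; ring

theorem mem_pF_iff {ord : F → ℤ} {n : ℤ} {x : F} :
    x ∈ pF ord n ↔ x = 0 ∨ n ≤ ord x := Iff.rfl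

theorem pF_antitone (ord : F → ℤ) {m n : ℤ} (h : m ≤ n) : pF ord n ⊆ pF ord m :=
  fun _ hx => hx.imp id (le_trans h)

theorem pF_zero_mem (ord : F → ℤ) (n : ℤ) : (0 : F) ∈ pF ord n := Or.inl rfl

theorem pF_neg_mem (ord : F → ℤ)
    (hord_mul : ∀ x y : F, x ≠ 0 → y ≠ 0 → ord (x * y) = ord x + ord y)
    {n : ℤ} {x : F} (hx : x ∈ pF ord n) : -x ∈ pF ord n := by
  rcases eq_or_ne x 0 with rfl | hx0
  · simpa using pF_zero_mem ord n
  rcases hx with h0 | h1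
  · exact absurd h0 hx0
  · exact Or.inr (by rw [ord_neg ord hord_mul x hx0]; exact h1)

theorem pF_add_mem (ord : F → ℤ)
    (hord_add : ∀ x y : F, x ≠ 0 → y ≠ 0 → x + y ≠ 0 →
      min (ord x) (ord y) ≤ ord (x + y))
    {n : ℤ} {x y : F} (hx : x ∈ pF ord n) (hy : y ∈ pF ord n) :
    x + y ∈ pF ord n := by
  rcases eq_or_ne x 0 with rfl | hx0
  · simpa using hy
  rcases eq_or_ne y 0 with rfl | hy0
  · simpa using hx
  rcases eq_or_ne (x + y) 0 with h0 | hxy0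
  · exact Or.inl h0
  · exact Or.inr (le_trans (le_min (hx.resolve_left hx0) (hy.resolve_left hy0))
      (hord_add x y hx0 hy0 hxy0))

end ZetaAux

namespace ZetaAux2

variable {F : Type} [Field F] [TopologicalSpace F] [IsTopologicalRing F]

theorem pF_antitone (ord : F → ℤ) {m n : ℤ} (h : m ≤ n) : pF ord n ⊆ pF ord m :=
  fun _ hx => hx.imp id (le_trans h)

theorem pF_zero_mem (ord : F → ℤ) (n : ℤ) : (0 : F) ∈ pF ord n := Or.inl rfl

theorem t2_of_pF (ord : F → ℤ) (hopen : ∀ n : ℤ, IsOpen (pF ord n)) :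
    T2Space F :=
  IsTopologicalAddGroup.t2Space_of_zero_sep fun x hx =>
    ⟨pF ord (ord x + 1), (hopen _).mem_nhds (pF_zero_mem ord _),
      fun h => h.elim hx fun h1 => by omega⟩

theorem pF_basis (ord : F → ℤ)
    (hcompact : ∀ n : ℤ, IsCompact (pF ord n))
    (hopen : ∀ n : ℤ, IsOpen (pF ord n))
    (U : Set F) (hU : U ∈ 𝓝 (0 : F)) : ∃ n : ℤ, pF ord n ⊆ U := by
  haveI : T2Space F := t2_of_pF ord hopen
  by_contra hcon
  push_neg at hcon
  have hW : (0 : F) ∈ interior U := mem_interior_iff_mem_nhds.mpr hU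
  set K : ℕ → Set F := fun i => pF ord i ∩ (interior U)ᶜ with hK
  have hdir : Directed (fun a b : Set F => a ⊇ b) K := fun i j =>
    ⟨max i j, Set.inter_subset_inter_left _ (pF_antitone ord (by exact_mod_cast le_max_left i j)),
      Set.inter_subset_inter_left _ (pF_antitone ord (by exact_mod_cast le_max_right i j))⟩
  have hne : ∀ i, (K i).Nonempty := by
    intro i
    obtain ⟨x, hx1, hx2⟩ := Set.not_subset.mp (hcon i)
    exact ⟨x, hx1, fun hc => hx2 (interior_subset hc)⟩
  obtain ⟨x, hx⟩ := IsCompact.nonempty_iInter_of_directed_nonempty_isCompact_isClosed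
    K hdir hne (fun i => (hcompact _).inter_right isOpen_interior.isClosed_compl)
    (fun i => ((hcompact _).isClosed).inter isOpen_interior.isClosed_compl)
  have hx0 : x = 0 := by
    by_contra hx0
    have := Set.mem_iInter.mp hx ((ord x).toNat + 1)
    rcases this.1 with h | h
    · exact hx0 h
    · have := Int.self_le_toNat (ord x); omega
  exact (Set.mem_iInter.mp hx 0).2 (hx0 ▸ hW)

theorem supp_bound (ord : F → ℤ) (hopen : ∀ n : ℤ, IsOpen (pF ord n))
    (f : F → ℂ) (hf2 : HasCompactSupport f) :
    ∃ n0 : ℤ, tsupport f ⊆ pF ord n0 := by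
  have hcover : tsupport f ⊆ ⋃ i : ℕ, pF ord (-(i : ℤ)) := by
    intro x _
    rcases eq_or_ne x 0 with rfl | hx0
    · exact Set.mem_iUnion.mpr ⟨0, Or.inl rfl⟩
    · refine Set.mem_iUnion.mpr ⟨(-ord x).toNat, Or.inr ?_⟩
      have := Int.self_le_toNat (-ord x); omega
  obtain ⟨t, ht⟩ := hf2.elim_finite_subcover
    (fun i : ℕ => pF ord (-(i : ℤ))) (fun i => hopen _) hcover
  refine ⟨-(t.sup id : ℕ), fun x hx => ?_⟩
  obtain ⟨i, hit, hxi⟩ := Set.mem_iUnion₂.mp (ht hx)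
  exact pF_antitone ord (by
    have : i ≤ t.sup id := Finset.le_sup (f := id) hit
    omega) hxi

theorem unif_const (ord : F → ℤ)
    (hord_mul : ∀ x y : F, x ≠ 0 → y ≠ 0 → ord (x * y) = ord x + ord y)
    (hord_add : ∀ x y : F, x ≠ 0 → y ≠ 0 → x + y ≠ 0 →
      min (ord x) (ord y) ≤ ord (x + y))
    (hcompact : ∀ n : ℤ, IsCompact (pF ord n))
    (hopen : ∀ n : ℤ, IsOpen (pF ord n))
    (f : F → ℂ) (hf1 : IsLocallyConstant f)
    (n0 : ℤ) (hsupp : tsupport f ⊆ pF ord n0)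
    (pF_neg_mem : ∀ {n : ℤ} {x : F}, x ∈ pF ord n → -x ∈ pF ord n)
    (pF_add_mem : ∀ {n : ℤ} {x y : F}, x ∈ pF ord n → y ∈ pF ord n →
      x + y ∈ pF ord n) :
    ∃ M : ℤ, n0 ≤ M ∧ ∀ x y : F, y ∈ pF ord M → f (x + y) = f x := by
  have hloc : ∀ x : F, ∃ n : ℤ, ∀ y ∈ pF ord n, f (x + y) = f x := by
    intro x
    obtain ⟨U, hUo, hxU, hUc⟩ := hf1.exists_open x
    have hcont : Continuous fun y : F => x + y := continuous_const.add continuous_id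
    have hmem : (fun y : F => x + y) ⁻¹' U ∈ 𝓝 (0 : F) := by
      apply hcont.continuousAt.preimage_mem_nhds
      simpa using hUo.mem_nhds hxU
    obtain ⟨n, hn⟩ := pF_basis ord hcompact hopen _ hmem
    exact ⟨n, fun y hy => hUc _ (hn hy)⟩
  choose n hn using hloc
  obtain ⟨t, htmem, htcov⟩ := (hcompact n0).elim_nhds_subcover
    (fun x => (fun y => -x + y) ⁻¹' pF ord (n x)) (fun x _ => by
      have hcont : Continuous fun y : F => -x + y := continuous_const.add continuous_id
      refine ((hopen _).preimage hcont).mem_nhds ?_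
      simp only [Set.mem_preimage, neg_add_cancel]
      exact pF_zero_mem ord _)
  set M : ℤ := n0 + (t.sup fun x => (n x - n0).toNat) with hMdef
  have hM0 : n0 ≤ M := by simp [hMdef]
  have hMx : ∀ x ∈ t, n x ≤ M := by
    intro x hx
    have h1 : (n x - n0).toNat ≤ t.sup fun x => (n x - n0).toNat :=
      Finset.le_sup (f := fun x => (n x - n0).toNat) hx
    have := Int.self_le_toNat (n x - n0)
    omega
  refine ⟨M, hM0, fun x y hy => ?_⟩
  by_cases hx : x ∈ pF ord n0
  · obtain ⟨x₀, hx₀t, hxV⟩ := Set.mem_iUnion₂.mp (htcov hx)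
    have h1 : -x₀ + x ∈ pF ord (n x₀) := hxV
    have h2 : (-x₀ + x) + y ∈ pF ord (n x₀) :=
      pF_add_mem h1 (pF_antitone ord (hMx x₀ hx₀t) hy)
    have e1 : f x = f x₀ := by
      rw [show x = x₀ + (-x₀ + x) by ring]; exact hn x₀ _ h1
    have e2 : f (x + y) = f x₀ := by
      rw [show x + y = x₀ + ((-x₀ + x) + y) by ring]; exact hn x₀ _ h2
    rw [e1, e2]
  · have hxy : x + y ∉ pF ord n0 := by
      intro h
      apply hx
      have := pF_add_mem h (pF_neg_mem (pF_antitone ord hM0 hy))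
      simpa using this
    rw [image_eq_zero_of_notMem_tsupport (fun hc => hx (hsupp hc)),
      image_eq_zero_of_notMem_tsupport (fun hc => hxy (hsupp hc))]

end ZetaAux2

namespace ZetaAux3

variable {F : Type} [Field F] [TopologicalSpace F] [IsTopologicalRing F]
    [MeasurableSpace F] [BorelSpace F]

theorem absF_nonneg (q : ℕ) (ord : F → ℤ) (x : F) : 0 ≤ absF q ord x := by
  unfold absF; split
  · exact le_refl 0
  · positivity

theorem absF_eq_of_ne (q : ℕ) (ord : F → ℤ) {x : F} (hx : x ≠ 0) :
    absF q ord x = (q : ℝ) ^ (-(ord x)) := if_neg hx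

theorem absF_pos (q : ℕ) (hq : 1 < q) (ord : F → ℤ) {x : F} (hx : x ≠ 0) :
    0 < absF q ord x := by
  rw [absF_eq_of_ne q ord hx]
  have : (0:ℝ) < q := by positivity
  positivity

theorem mem_shell_iff (ord : F → ℤ) (k : ℤ) (x : F) :
    x ∈ pF ord k \ pF ord (k + 1) ↔ x ≠ 0 ∧ ord x = k := by
  simp only [Set.mem_diff, pF, Set.mem_setOf_eq]
  constructor
  · rintro ⟨h1, h2⟩
    push_neg at h2
    refine ⟨h2.1, ?_⟩
    rcases h1 with h | h
    · exact absurd h h2.1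
    · omega
  · rintro ⟨h1, h2⟩
    exact ⟨Or.inr (by omega), by push_neg; exact ⟨h1, by omega⟩⟩

theorem measurableSet_pF (ord : F → ℤ) (hopen : ∀ n : ℤ, IsOpen (pF ord n))
    (n : ℤ) : MeasurableSet (pF ord n) := (hopen n).measurableSet

theorem measurableSet_shell (ord : F → ℤ) (hopen : ∀ n : ℤ, IsOpen (pF ord n))
    (k : ℤ) : MeasurableSet (pF ord k \ pF ord (k + 1)) :=
  (measurableSet_pF ord hopen k).diff (measurableSet_pF ord hopen (k + 1))

theorem measurable_ord (ord : F → ℤ)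
    (hopen : ∀ n : ℤ, IsOpen (pF ord n)) : Measurable ord := by
  haveI : T2Space F := ZetaAux2.t2_of_pF ord hopen
  apply measurable_to_countable'
  intro n
  have hset : ord ⁻¹' {n} =
      (pF ord n \ pF ord (n + 1)) ∪ (if ord (0 : F) = n then {(0 : F)} else ∅) := by
    ext x
    simp only [Set.mem_preimage, Set.mem_singleton_iff, Set.mem_union,
      mem_shell_iff ord n x]
    constructor
    · intro h
      by_cases hx0 : x = 0
      · subst hx0; right; simp [h]
      · exact Or.inl ⟨hx0, h⟩
    · intro h
      rcases h with ⟨_, h⟩ | h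
      · exact h
      · split at h
        · rcases h with rfl; assumption
        · exact absurd h (Set.notMem_empty x)
  rw [hset]
  refine (measurableSet_shell ord hopen n).union ?_
  split
  · exact MeasurableSet.singleton 0
  · exact MeasurableSet.empty

theorem measurable_absF (q : ℕ) (ord : F → ℤ)
    (hopen : ∀ n : ℤ, IsOpen (pF ord n)) : Measurable (absF q ord) := by
  haveI : T2Space F := ZetaAux2.t2_of_pF ord hopen
  have h0 : MeasurableSet {x : F | x = 0} := by
    simpa using MeasurableSet.singleton (0 : F)
  exact Measurable.ite h0 measurable_const
    ((measurable_of_countable (fun k : ℤ => (q : ℝ) ^ (-k))).comp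
      (measurable_ord ord hopen))

theorem measurable_absF_cpow (q : ℕ) (ord : F → ℤ)
    (hopen : ∀ n : ℤ, IsOpen (pF ord n)) (s : ℂ) :
    Measurable (fun x => ((absF q ord x : ℝ) : ℂ) ^ s) := by
  haveI : T2Space F := ZetaAux2.t2_of_pF ord hopen
  have h0 : MeasurableSet {x : F | x = 0} := by
    simpa using MeasurableSet.singleton (0 : F)
  have : (fun x => ((absF q ord x : ℝ) : ℂ) ^ s) =
      fun x => if x = 0 then (((0:ℝ) : ℂ)) ^ s
        else ((((q : ℝ) ^ (-(ord x)) : ℝ) : ℂ)) ^ s := by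
    funext x
    by_cases hx : x = 0 <;> simp [absF, hx]
  rw [this]
  exact Measurable.ite h0 measurable_const
    ((measurable_of_countable (fun k : ℤ => ((((q:ℝ) ^ (-k) : ℝ)) : ℂ) ^ s)).comp
      (measurable_ord ord hopen))

end ZetaAux3

namespace ZetaAux4

variable {F : Type} [Field F] [TopologicalSpace F] [IsTopologicalRing F]
    [MeasurableSpace F] [BorelSpace F]

theorem absF_eq_of_ne (q : ℕ) (ord : F → ℤ) {x : F} (hx : x ≠ 0) :
    absF q ord x = (q : ℝ) ^ (-(ord x)) := if_neg hx

theorem absF_inv (q : ℕ) (hq : 1 < q) (ord : F → ℤ)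
    (hinv : ∀ x : F, x ≠ 0 → ord x⁻¹ = - ord x)
    {x : F} (hx : x ≠ 0) : absF q ord x⁻¹ = (absF q ord x)⁻¹ := by
  rw [absF_eq_of_ne q ord (inv_ne_zero hx), absF_eq_of_ne q ord hx, hinv x hx,
    neg_neg, ← zpow_neg, neg_neg]

theorem map_mul_left (q : ℕ) (hq : 1 < q) (ord : F → ℤ)
    (hinv : ∀ x : F, x ≠ 0 → ord x⁻¹ = - ord x)
    (μψ : Measure F)
    (hμscale : ∀ a : F, a ≠ 0 → ∀ A : Set F,
      μψ ((a * ·) '' A) = ENNReal.ofReal (absF q ord a) * μψ A)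
    (a : F) (ha : a ≠ 0) :
    μψ.map (fun x => a * x) = ENNReal.ofReal ((absF q ord a)⁻¹) • μψ := by
  ext A hA
  rw [Measure.map_apply (measurable_const_mul a) hA]
  have himg : (fun x => a * x) ⁻¹' A = (a⁻¹ * ·) '' A := by
    ext x
    simp only [Set.mem_preimage, Set.mem_image]
    constructor
    · intro h
      exact ⟨a * x, h, by field_simp⟩
    · rintro ⟨y, hy, rfl⟩
      have : a * (a⁻¹ * y) = y := by field_simp
      rwa [this]
  rw [himg, hμscale a⁻¹ (inv_ne_zero ha) A, absF_inv q hq ord hinv ha]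
  simp [Measure.smul_apply]

theorem integral_comp_mul_left (q : ℕ) (hq : 1 < q) (ord : F → ℤ)
    (hinv : ∀ x : F, x ≠ 0 → ord x⁻¹ = - ord x)
    (μψ : Measure F)
    (hμscale : ∀ a : F, a ≠ 0 → ∀ A : Set F,
      μψ ((a * ·) '' A) = ENNReal.ofReal (absF q ord a) * μψ A)
    (a : F) (ha : a ≠ 0) (g : F → ℂ) (hg : AEStronglyMeasurable g μψ) :
    ∫ x, g (a * x) ∂μψ = (absF q ord a)⁻¹ • ∫ x, g x ∂μψ := by
  have hmap := map_mul_left q hq ord hinv μψ hμscale a ha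
  have h1 : ∫ x, g (a * x) ∂μψ = ∫ y, g y ∂(μψ.map (fun x => a * x)) := by
    refine (integral_map (measurable_const_mul a).aemeasurable ?_).symm
    rw [hmap]
    exact hg.mono_ac Measure.smul_absolutelyContinuous
  rw [h1, hmap, integral_smul_measure, ENNReal.toReal_ofReal (by
    have := ZetaAux3.absF_nonneg (F := F) q ord a
    positivity)]

theorem image_pF (q : ℕ) (ord : F → ℤ)
    (hord_mul : ∀ x y : F, x ≠ 0 → y ≠ 0 → ord (x * y) = ord x + ord y)
    (ϖ : F) (hϖ0 : ϖ ≠ 0) (hϖ1 : ord ϖ = 1) (k : ℤ) :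
    ((ϖ ^ k * ·) '' pF ord 0) = pF ord k := by
  have hzp : ∀ j : ℤ, ord (ϖ ^ j) = j := by
    intro j; rw [ZetaAux.ord_zpow ord hord_mul ϖ hϖ0 j, hϖ1, mul_one]
  ext x
  simp only [Set.mem_image, pF, Set.mem_setOf_eq]
  constructor
  · rintro ⟨y, hy, rfl⟩
    rcases hy with rfl | hy
    · exact Or.inl (by simp)
    · rcases eq_or_ne y 0 with rfl | hy0
      · exact Or.inl (by simp)
      · refine Or.inr ?_
        rw [hord_mul _ _ (zpow_ne_zero _ hϖ0) hy0, hzp]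
        omega
  · intro hx
    rcases hx with rfl | hx
    · exact ⟨0, Or.inl rfl, by simp⟩
    · refine ⟨ϖ ^ (-k) * x, ?_, ?_⟩
      · rcases eq_or_ne x 0 with rfl | hx0
        · exact Or.inl (by simp)
        · refine Or.inr ?_
          rw [hord_mul _ _ (zpow_ne_zero _ hϖ0) hx0, hzp]
          omega
      · rw [← mul_assoc, ← zpow_add₀ hϖ0]
        simp

theorem meas_pF (q : ℕ) (hq : 1 < q) (ord : F → ℤ)
    (hord_mul : ∀ x y : F, x ≠ 0 → y ≠ 0 → ord (x * y) = ord x + ord y)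
    (ϖ : F) (hϖ0 : ϖ ≠ 0) (hϖ1 : ord ϖ = 1)
    (μψ : Measure F)
    (hμscale : ∀ a : F, a ≠ 0 → ∀ A : Set F,
      μψ ((a * ·) '' A) = ENNReal.ofReal (absF q ord a) * μψ A)
    (k : ℤ) :
    μψ (pF ord k) = ENNReal.ofReal ((q : ℝ) ^ (-k)) * μψ (pF ord 0) := by
  rw [← image_pF q ord hord_mul ϖ hϖ0 hϖ1 k,
    hμscale (ϖ ^ k) (zpow_ne_zero _ hϖ0),
    absF_eq_of_ne q ord (zpow_ne_zero _ hϖ0),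
    ZetaAux.ord_zpow ord hord_mul ϖ hϖ0 k, hϖ1, mul_one]

end ZetaAux4


/-- Context: `F` is a non-archimedean local field with normalized additive valuation
`ord`, uniformizer `ϖ`, residue cardinality `q`, a continuous non-trivial additive
character `ψ` of level `l`, and Haar measure `μψ` normalized by `μψ(𝒪_F) = q^{l/2}`. -/
theorem zeta_integral_is_laurent_multiple_of_L
    (F : Type) [Field F] [TopologicalSpace F] [IsTopologicalRing F]
    [LocallyCompactSpace F] [MeasurableSpace F] [BorelSpace F]
    (q : ℕ) (hq : 1 < q)
    (ord : F → ℤ)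
    (hord_mul : ∀ x y : F, x ≠ 0 → y ≠ 0 → ord (x * y) = ord x + ord y)
    (hord_add : ∀ x y : F, x ≠ 0 → y ≠ 0 → x + y ≠ 0 →
      min (ord x) (ord y) ≤ ord (x + y))
    (ϖ : F) (hϖ0 : ϖ ≠ 0) (hϖ1 : ord ϖ = 1)
    (hcompact : ∀ n : ℤ, IsCompact (pF ord n))
    (hopen : ∀ n : ℤ, IsOpen (pF ord n))
    (ψ : F → ℂ) (hψ : IsAddCharF ψ)
    (l : ℤ) (hl : IsLevel ord ψ l)
    (μψ : Measure F) [μψ.IsAddHaarMeasure]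
    (hμψ : μψ (pF ord 0) = ENNReal.ofReal ((q : ℝ) ^ ((l : ℝ) / 2)))
    (hμscale : ∀ a : F, a ≠ 0 → ∀ A : Set F,
      μψ ((a * ·) '' A) = ENNReal.ofReal (absF q ord a) * μψ A)
    (χ : F → ℂ) (hχ : IsMultCharF χ)
    (σ : ℝ) (hσ : ∀ x : F, x ≠ 0 → ‖χ x‖ = (absF q ord x) ^ σ)
    (f : F → ℂ) (hf1 : IsLocallyConstant f) (hf2 : HasCompactSupport f) :
    -- there is a Laurent polynomial `P(X) = X^m · P₀(X)` with
    -- `ζ_ψ(s,χ,f) = P(q^{-s}) L(s,χ)` on the domain of convergence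
    ∃ (P : Polynomial ℂ) (m : ℤ), ∀ s : ℂ, -σ < s.re →
      zetaF q ord μψ χ s f
        = Polynomial.eval ((q : ℂ) ^ (-s)) P * ((q : ℂ) ^ (-s)) ^ m *
            Lfactor q ord ϖ χ s := by
  classical
  haveI hT2 : T2Space F := ZetaAux2.t2_of_pF ord hopen
  obtain ⟨hχc, hχm, hχ0⟩ := hχ
  have hq0R : (0:ℝ) < q := by exact_mod_cast (by omega : 0 < q)
  have hq1R : (1:ℝ) < q := by exact_mod_cast hq
  have hqC : (q:ℂ) ≠ 0 := Nat.cast_ne_zero.mpr (by omega)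
  set c : ℝ := (q : ℝ) / ((q : ℝ) - 1) with hc
  have hc0 : 0 ≤ c := by
    apply div_nonneg (by positivity); linarith
  have hordinv : ∀ x : F, x ≠ 0 → ord x⁻¹ = - ord x :=
    ZetaAux.ord_inv ord hord_mul
  have hzp : ∀ j : ℤ, ord (ϖ ^ j) = j := by
    intro j; rw [ZetaAux.ord_zpow ord hord_mul ϖ hϖ0 j, hϖ1, mul_one]
  have hχ1 : χ 1 = 1 := by
    have := hχm 1 1 one_ne_zero one_ne_zero
    rw [mul_one] at this
    have h0 := hχ0 1 one_ne_zero
    field_simp at this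
    tauto
  have hχinv : ∀ x : F, x ≠ 0 → χ x⁻¹ = (χ x)⁻¹ := by
    intro x hx
    have := hχm x x⁻¹ hx (inv_ne_zero hx)
    rw [mul_inv_cancel₀ hx, hχ1] at this
    exact eq_inv_of_mul_eq_one_right this.symm
  have hχpow : ∀ n : ℕ, χ (ϖ ^ n) = (χ ϖ) ^ n := by
    intro n
    induction n with
    | zero => simpa using hχ1
    | succ n ih => rw [pow_succ, hχm _ _ (pow_ne_zero _ hϖ0) hϖ0, ih, pow_succ]
  have hχzpow : ∀ k : ℤ, χ (ϖ ^ k) = (χ ϖ) ^ k := by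
    intro k
    rcases k with n | n
    · simpa using hχpow n
    · rw [zpow_negSucc, hχinv _ (pow_ne_zero _ hϖ0), hχpow, zpow_negSucc]
  -- support bound and uniform constancy
  obtain ⟨n0, hn0⟩ := ZetaAux2.supp_bound ord hopen f hf2
  obtain ⟨M, hMn0, hM⟩ := ZetaAux2.unif_const ord hord_mul hord_add hcompact hopen
    f hf1 n0 hn0 (fun hx => ZetaAux.pF_neg_mem ord hord_mul hx)
    (fun hx hy => ZetaAux.pF_add_mem ord hord_add hx hy)
  have hfM : ∀ x ∈ pF ord M, f x = f 0 := by
    intro x hx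
    have := hM 0 x hx
    simpa using this
  -- shells
  set S : ℤ → Set F := fun k => pF ord k \ pF ord (k + 1) with hSdef
  have hSmem : ∀ (k : ℤ) (x : F), x ∈ S k ↔ x ≠ 0 ∧ ord x = k :=
    fun k x => ZetaAux3.mem_shell_iff ord k x
  have hSmeas : ∀ k, MeasurableSet (S k) :=
    fun k => ZetaAux3.measurableSet_shell ord hopen k
  have h0meas : MeasurableSet ({0} : Set F) := MeasurableSet.singleton 0
  have hSsub0 : ∀ k, S k ⊆ ({0}ᶜ : Set F) := by
    intro k x hx
    exact ((hSmem k x).mp hx).1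
  have hSdisjoint : ∀ a b : ℤ, a ≠ b → Disjoint (S a) (S b) := by
    intro a b hab
    rw [Set.disjoint_left]
    intro x hxa hxb
    obtain ⟨_, ha⟩ := (hSmem a x).mp hxa
    obtain ⟨_, hb⟩ := (hSmem b x).mp hxb
    omega
  have hUnion : ∀ N : ℤ, pF ord N \ {0} = ⋃ i : ℕ, S (N + i) := by
    intro N
    ext x
    simp only [Set.mem_diff, Set.mem_singleton_iff, Set.mem_iUnion]
    constructor
    · rintro ⟨hpf, hx0⟩
      have hN : N ≤ ord x := hpf.resolve_left hx0
      exact ⟨(ord x - N).toNat, (hSmem _ x).mpr ⟨hx0, by omega⟩⟩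
    · rintro ⟨i, hi⟩
      obtain ⟨hx0, hxo⟩ := (hSmem _ x).mp hi
      exact ⟨Or.inr (by omega), hx0⟩
  -- χ measurable away from 0
  have hχaem : AEMeasurable χ (μψ.restrict ({0}ᶜ : Set F)) := by
    have hset : ({0}ᶜ : Set F) = {x : F | x ≠ 0} := by ext x; simp
    rw [hset]
    exact hχc.aemeasurable (by rw [← hset]; exact h0meas.compl)
  have hχaemS : ∀ k, AEMeasurable χ (μψ.restrict (S k)) :=
    fun k => hχaem.mono_measure (Measure.restrict_mono (hSsub0 k) le_rfl)
  have hASMind : ∀ k, AEStronglyMeasurable (Set.indicator (S k) χ) μψ :=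
    fun k => (aestronglyMeasurable_indicator_iff (hSmeas k)).mpr
      (hχaemS k).aestronglyMeasurable
  -- the constants
  set J0 : ℂ := ∫ x, Set.indicator (S 0) χ x ∂μψ with hJ0def
  have habsϖk : ∀ k : ℤ, absF q ord (ϖ ^ k) = (q:ℝ) ^ (-k) := by
    intro k
    rw [ZetaAux4.absF_eq_of_ne q ord (zpow_ne_zero _ hϖ0), hzp]
  have hJshell : ∀ k : ℤ, ∫ x in S k, χ x ∂μψ
      = ((q:ℝ) ^ (-k) : ℝ) • ((χ ϖ) ^ k * J0) := by
    intro k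
    have hcov := ZetaAux4.integral_comp_mul_left q hq ord hordinv μψ hμscale
      (ϖ ^ k) (zpow_ne_zero _ hϖ0) (Set.indicator (S k) χ) (hASMind k)
    have hpt : ∀ x : F, Set.indicator (S k) χ (ϖ ^ k * x)
        = χ (ϖ ^ k) * Set.indicator (S 0) χ x := by
      intro x
      by_cases hx : x ∈ S 0
      · obtain ⟨hx0, hxo⟩ := (hSmem 0 x).mp hx
        have hmem : ϖ ^ k * x ∈ S k := (hSmem k _).mpr
          ⟨mul_ne_zero (zpow_ne_zero _ hϖ0) hx0,
            by rw [hord_mul _ _ (zpow_ne_zero _ hϖ0) hx0, hzp, hxo, add_zero]⟩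
        rw [Set.indicator_of_mem hmem, Set.indicator_of_mem hx,
          hχm _ _ (zpow_ne_zero _ hϖ0) hx0]
      · have hmem : ϖ ^ k * x ∉ S k := by
          intro hcon
          obtain ⟨hc0, hck⟩ := (hSmem k _).mp hcon
          apply hx
          have hx0 : x ≠ 0 := by rintro rfl; simp at hc0
          refine (hSmem 0 x).mpr ⟨hx0, ?_⟩
          rw [hord_mul _ _ (zpow_ne_zero _ hϖ0) hx0, hzp] at hck
          omega
        rw [Set.indicator_of_notMem hmem, Set.indicator_of_notMem hx, mul_zero]
    simp only [hpt] at hcov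
    rw [MeasureTheory.integral_const_mul, habsϖk k, ← hJ0def, hχzpow k,
      integral_indicator (hSmeas k)] at hcov
    have hwpos : (0:ℝ) < (q:ℝ) ^ (-k) := zpow_pos hq0R _
    rw [hcov, smul_smul, mul_inv_cancel₀ (ne_of_gt hwpos), one_smul]
  set ck : ℤ → ℂ := fun k => (c * (q:ℝ) ^ (k:ℤ)) • ∫ x in S k, f x * χ x ∂μψ
    with hckdef
  set D : ℂ := (c:ℝ) • (f 0 * J0) with hDdef
  have hcktail : ∀ k : ℤ, M ≤ k → ck k = D * (χ ϖ) ^ k := by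
    intro k hk
    have hsub : S k ⊆ pF ord M := by
      intro x hx
      obtain ⟨hx0, hxo⟩ := (hSmem k x).mp hx
      exact Or.inr (by omega)
    have hcongr : ∀ x ∈ S k, f x * χ x = f 0 * χ x := by
      intro x hx
      rw [hfM x (hsub hx)]
    rw [hckdef]
    simp only
    rw [setIntegral_congr_fun (hSmeas k) hcongr, MeasureTheory.integral_const_mul,
      hJshell k, hDdef]
    rw [Complex.real_smul, Complex.real_smul, Complex.real_smul]
    push_cast
    have hq0C : ((q:ℂ)) ^ (k:ℤ) ≠ 0 := zpow_ne_zero _ hqC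
    field_simp
    have hqk : (q:ℂ) ^ k * (q:ℂ) ^ (-k) = 1 := by
      rw [← zpow_add₀ hqC, add_neg_cancel, zpow_zero]
    linear_combination ((c:ℂ) * f 0 * (χ ϖ) ^ k * J0) * hqk
  set unram := ∀ x : F, x ≠ 0 → ord x = 0 → χ x = 1 with hunram
  have hJ0ram : ¬ unram → J0 = 0 := by
    intro hur
    rw [hunram] at hur
    push_neg at hur
    obtain ⟨u, hu0, huord, huχ⟩ := hur
    have hcov := ZetaAux4.integral_comp_mul_left q hq ord hordinv μψ hμscale
      u hu0 (Set.indicator (S 0) χ) (hASMind 0)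
    have hpt : ∀ x : F, Set.indicator (S 0) χ (u * x)
        = χ u * Set.indicator (S 0) χ x := by
      intro x
      by_cases hx : x ∈ S 0
      · obtain ⟨hx0, hxo⟩ := (hSmem 0 x).mp hx
        have hmem : u * x ∈ S 0 := (hSmem 0 _).mpr
          ⟨mul_ne_zero hu0 hx0, by rw [hord_mul _ _ hu0 hx0, huord, hxo]; ring⟩
        rw [Set.indicator_of_mem hmem, Set.indicator_of_mem hx, hχm _ _ hu0 hx0]
      · have hmem : u * x ∉ S 0 := by
          intro hcon
          obtain ⟨hc0, hck⟩ := (hSmem 0 _).mp hcon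
          apply hx
          have hx0 : x ≠ 0 := by rintro rfl; simp at hc0
          refine (hSmem 0 x).mpr ⟨hx0, ?_⟩
          rw [hord_mul _ _ hu0 hx0, huord] at hck
          omega
        rw [Set.indicator_of_notMem hmem, Set.indicator_of_notMem hx, mul_zero]
    simp only [hpt] at hcov
    rw [MeasureTheory.integral_const_mul, ← hJ0def] at hcov
    have habsu : absF q ord u = 1 := by
      rw [ZetaAux4.absF_eq_of_ne q ord hu0, huord]
      simp
    rw [habsu] at hcov
    simp only [inv_one, one_smul] at hcov
    have hfac : (χ u - 1) * J0 = 0 := by linear_combination hcov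
    rcases mul_eq_zero.mp hfac with h | h
    · exact absurd (by linear_combination h) huχ
    · exact h
  set L0 : ℂ := if unram then χ ϖ else 0 with hL0def
  set D' : ℂ := if unram then D * (χ ϖ) ^ (M:ℤ) else 0 with hD'def
  set P : Polynomial ℂ :=
    (∑ k ∈ Finset.Icc n0 (M - 1), Polynomial.C (ck k) * Polynomial.X ^ ((k - n0).toNat))
      * (1 - Polynomial.C L0 * Polynomial.X)
    + Polynomial.C D' * Polynomial.X ^ ((M - n0).toNat) with hPdef
  refine ⟨P, n0, fun s hs => ?_⟩
  -- now for a fixed s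
  set Qs : ℂ := (q:ℂ) ^ (-s) with hQs
  have hQne : Qs ≠ 0 := by
    rw [hQs, Complex.cpow_def_of_ne_zero hqC]
    exact Complex.exp_ne_zero _
  have hQabs : ‖Qs‖ = (q:ℝ) ^ (-s.re) := by
    rw [hQs, show ((q:ℂ)) = (((q:ℝ)):ℂ) by push_cast; rfl,
      Complex.norm_cpow_eq_rpow_re_of_pos hq0R]
    simp
  set τ : ℝ := σ + s.re with hτ
  have hτ0 : 0 < τ := by
    rw [hτ]; linarith [hs]
  have hrrnorm : ‖χ ϖ * Qs‖ < 1 := by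
    rw [norm_mul, hσ ϖ hϖ0, hQabs,
      ZetaAux4.absF_eq_of_ne q ord hϖ0, hϖ1]
    rw [show ((q:ℝ) ^ (-(1:ℤ))) = (q:ℝ) ^ ((-1 : ℝ)) by
        rw [← Real.rpow_intCast (q:ℝ) (-1)]; norm_num,
      ← Real.rpow_mul hq0R.le, ← Real.rpow_add hq0R]
    exact Real.rpow_lt_one_of_one_lt_of_neg hq1R (by rw [hτ] at hτ0; linarith)
  have hrr0 : χ ϖ * Qs ≠ 0 := mul_ne_zero (hχ0 ϖ hϖ0) hQne
  have hL0norm : ‖L0 * Qs‖ < 1 := by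
    rw [hL0def]
    split
    · exact hrrnorm
    · simpa using zero_lt_one
  have hLne : 1 - L0 * Qs ≠ 0 := by
    intro hcon
    have heq : L0 * Qs = 1 := by linear_combination -hcon
    rw [heq] at hL0norm
    simp at hL0norm
  have hLf : Lfactor q ord ϖ χ s = (1 - L0 * Qs)⁻¹ := by
    rw [Lfactor, hL0def]
    split
    · rfl
    · simp
  -- the integrand over μψ
  set h : F → ℂ := fun x =>
    (c * (absF q ord x)⁻¹) • (f x * χ x * ((absF q ord x : ℝ) : ℂ) ^ s) with hhdef
  have hh0 : h 0 = 0 := by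
    rw [hhdef]
    simp [absF]
  have hzeta : zetaF q ord μψ χ s f = ∫ x, h x ∂μψ := by
    rw [zetaF, mulMeasure]
    have hmeasnn : Measurable fun x => (c * (absF q ord x)⁻¹).toNNReal :=
      (measurable_const.mul (ZetaAux3.measurable_absF q ord hopen).inv).real_toNNReal
    rw [show (fun x : F => ENNReal.ofReal ((q:ℝ)/((q:ℝ)-1) * (absF q ord x)⁻¹))
        = (fun x : F => (((c * (absF q ord x)⁻¹).toNNReal : ℝ≥0) : ℝ≥0∞)) from rfl,
      integral_withDensity_eq_integral_smul hmeasnn _]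
    refine integral_congr_ae (Filter.Eventually.of_forall fun x => ?_)
    have hnn : 0 ≤ c * (absF q ord x)⁻¹ :=
      mul_nonneg hc0 (inv_nonneg.mpr (ZetaAux3.absF_nonneg q ord x))
    rw [hhdef]
    simp only [NNReal.smul_def, Real.coe_toNNReal _ hnn]
  have hASMh : AEStronglyMeasurable h μψ := by
    have hind : h = Set.indicator ({0}ᶜ : Set F) h := by
      funext x
      rcases eq_or_ne x 0 with rfl | hx0
      · rw [Set.indicator_of_notMem (by simp)]
        exact hh0
      · rw [Set.indicator_of_mem (by simpa using hx0)]
    rw [hind]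
    apply (aestronglyMeasurable_indicator_iff h0meas.compl).mpr
    have hmr : AEMeasurable (fun x => c * (absF q ord x)⁻¹)
        (μψ.restrict ({0}ᶜ : Set F)) :=
      (measurable_const.mul (ZetaAux3.measurable_absF q ord hopen).inv).aemeasurable
    have hfm : AEMeasurable f (μψ.restrict ({0}ᶜ : Set F)) :=
      hf1.continuous.measurable.aemeasurable
    have hpm : AEMeasurable (fun x => ((absF q ord x : ℝ) : ℂ) ^ s)
        (μψ.restrict ({0}ᶜ : Set F)) :=
      (ZetaAux3.measurable_absF_cpow q ord hopen s).aemeasurable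
    exact (hmr.smul ((hfm.mul hχaem).mul hpm)).aestronglyMeasurable
  -- vanishing off the support annulus
  have hvanish : ∀ x ∉ pF ord n0 \ {0}, h x = 0 := by
    intro x hx
    rcases eq_or_ne x 0 with rfl | hx0
    · exact hh0
    · have hxn : x ∉ pF ord n0 := fun hcon => hx ⟨hcon, hx0⟩
      have hf0 : f x = 0 := image_eq_zero_of_notMem_tsupport (fun hcon => hxn (hn0 hcon))
      rw [hhdef]
      simp [hf0]
  -- norm bound on shells
  obtain ⟨B, hB⟩ := hf2.exists_bound_of_continuous hf1.continuous
  have hB0 : 0 ≤ B := le_trans (norm_nonneg _) (hB 0)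
  have hnorm_shell : ∀ (k : ℤ) (x : F), x ∈ S k →
      ‖h x‖ ≤ (c * B * (q:ℝ) ^ (k:ℤ)) * ((q:ℝ) ^ (-k:ℤ)) ^ τ := by
    intro k x hx
    obtain ⟨hx0, hxk⟩ := (hSmem k x).mp hx
    have habs : absF q ord x = (q:ℝ) ^ (-k) := by
      rw [ZetaAux4.absF_eq_of_ne q ord hx0, hxk]
    have hw0 : (0:ℝ) < (q:ℝ) ^ (-k:ℤ) := zpow_pos hq0R _
    have hcabs : ‖((((q:ℝ) ^ (-k) : ℝ)) : ℂ) ^ s‖ = ((q:ℝ) ^ (-k:ℤ)) ^ s.re := by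
      rw [Complex.norm_cpow_eq_rpow_re_of_pos hw0]
    have hχabs : ‖χ x‖ = ((q:ℝ) ^ (-k:ℤ)) ^ σ := by
      rw [hσ x hx0, habs]
    have hnormh : ‖h x‖ = (c * (q:ℝ) ^ (k:ℤ)) * (‖f x‖ * ((q:ℝ) ^ (-k:ℤ)) ^ τ) := by
      rw [hhdef]
      simp only [habs, norm_smul, norm_mul, hχabs, hcabs,
        Real.norm_of_nonneg (mul_nonneg hc0 (inv_nonneg.mpr hw0.le))]
      rw [show ((q:ℝ) ^ (-k:ℤ))⁻¹ = (q:ℝ) ^ (k:ℤ) by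
        rw [← zpow_neg, neg_neg]]
      rw [hτ, Real.rpow_add hw0]
      ring
    rw [hnormh]
    have hle : ‖f x‖ * ((q:ℝ) ^ (-k:ℤ)) ^ τ ≤ B * ((q:ℝ) ^ (-k:ℤ)) ^ τ :=
      mul_le_mul_of_nonneg_right (hB x) (Real.rpow_nonneg hw0.le _)
    calc (c * (q:ℝ) ^ (k:ℤ)) * (‖f x‖ * ((q:ℝ) ^ (-k:ℤ)) ^ τ)
        ≤ (c * (q:ℝ) ^ (k:ℤ)) * (B * ((q:ℝ) ^ (-k:ℤ)) ^ τ) := by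
          apply mul_le_mul_of_nonneg_left hle
          positivity
      _ = (c * B * (q:ℝ) ^ (k:ℤ)) * ((q:ℝ) ^ (-k:ℤ)) ^ τ := by ring
  -- integrability
  have hμ0fin : μψ (pF ord 0) < ⊤ := (hcompact 0).measure_lt_top
  have hmeaspF : ∀ k : ℤ, μψ (pF ord k)
      = ENNReal.ofReal ((q:ℝ) ^ (-k)) * μψ (pF ord 0) :=
    ZetaAux4.meas_pF q hq ord hord_mul ϖ hϖ0 hϖ1 μψ hμscale
  set t : ℝ := (q:ℝ) ^ (-τ) with ht
  have ht0 : 0 < t := Real.rpow_pos_of_pos hq0R _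
  have ht1 : t < 1 := Real.rpow_lt_one_of_one_lt_of_neg hq1R (by linarith)
  have hwt : ∀ (N : ℤ) (i : ℕ), ((q:ℝ) ^ (-(N + i):ℤ)) ^ τ
      = ((q:ℝ) ^ (-N:ℤ)) ^ τ * t ^ i := by
    intro N i
    rw [ht, ← Real.rpow_intCast (q:ℝ) (-(N + i)), ← Real.rpow_intCast (q:ℝ) (-N),
      ← Real.rpow_natCast ((q:ℝ) ^ (-τ)) i,
      ← Real.rpow_mul hq0R.le, ← Real.rpow_mul hq0R.le, ← Real.rpow_mul hq0R.le,
      ← Real.rpow_add hq0R]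
    congr 1
    push_cast
    ring
  have hshellbound : ∀ (N : ℤ) (i : ℕ),
      ∫⁻ a in S (N + i), ENNReal.ofReal ‖h a‖ ∂μψ
      ≤ (ENNReal.ofReal (c * B * ((q:ℝ) ^ (-N:ℤ)) ^ τ) * μψ (pF ord 0))
          * ENNReal.ofReal t ^ i := by
    intro N i
    have h1 : ∫⁻ a in S (N + i), ENNReal.ofReal ‖h a‖ ∂μψ
        ≤ ∫⁻ _ in S (N + i),
            ENNReal.ofReal ((c * B * (q:ℝ) ^ ((N + i):ℤ)) * ((q:ℝ) ^ (-(N + i):ℤ)) ^ τ) ∂μψ :=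
      setLIntegral_mono measurable_const
        (fun x hx => ENNReal.ofReal_le_ofReal (hnorm_shell _ x hx))
    have h2 : μψ (S (N + i)) ≤ ENNReal.ofReal ((q:ℝ) ^ (-(N + i):ℤ)) * μψ (pF ord 0) := by
      rw [← hmeaspF]
      exact measure_mono Set.diff_subset
    calc ∫⁻ a in S (N + i), ENNReal.ofReal ‖h a‖ ∂μψ
        ≤ ENNReal.ofReal ((c * B * (q:ℝ) ^ ((N + i):ℤ)) * ((q:ℝ) ^ (-(N + i):ℤ)) ^ τ)
            * μψ (S (N + i)) := by
          refine le_trans h1 ?_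
          rw [setLIntegral_const]
      _ ≤ ENNReal.ofReal ((c * B * (q:ℝ) ^ ((N + i):ℤ)) * ((q:ℝ) ^ (-(N + i):ℤ)) ^ τ)
            * (ENNReal.ofReal ((q:ℝ) ^ (-(N + i):ℤ)) * μψ (pF ord 0)) := by
          exact mul_le_mul_right h2 _
      _ = (ENNReal.ofReal (c * B * ((q:ℝ) ^ (-N:ℤ)) ^ τ) * μψ (pF ord 0))
            * ENNReal.ofReal t ^ i := by
          rw [← mul_assoc, ← ENNReal.ofReal_mul (by positivity)]
          rw [show (c * B * (q:ℝ) ^ ((N + i):ℤ)) * ((q:ℝ) ^ (-(N + i):ℤ)) ^ τ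
              * ((q:ℝ) ^ (-(N + i):ℤ))
              = (c * B * ((q:ℝ) ^ (-N:ℤ)) ^ τ) * t ^ i by
            rw [hwt N i]
            have hcancel : (q:ℝ) ^ ((N + i):ℤ) * (q:ℝ) ^ (-(N + i):ℤ) = 1 := by
              rw [← zpow_add₀ (ne_of_gt hq0R), add_neg_cancel, zpow_zero]
            linear_combination (c * B * ((q:ℝ) ^ (-N:ℤ)) ^ τ * t ^ i) * hcancel]
          rw [ENNReal.ofReal_mul (by positivity), ENNReal.ofReal_pow ht0.le]
          ring
  have hInth : Integrable h μψ := by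
    refine ⟨hASMh, ?_⟩
    rw [hasFiniteIntegral_iff_norm]
    have hzero' : (fun a => ENNReal.ofReal ‖h a‖)
        = Set.indicator (⋃ i : ℕ, S (n0 + i)) (fun a => ENNReal.ofReal ‖h a‖) := by
      funext a
      by_cases ha : a ∈ ⋃ i : ℕ, S (n0 + i)
      · rw [Set.indicator_of_mem ha]
      · rw [Set.indicator_of_notMem ha]
        have : h a = 0 := hvanish a (by rw [hUnion n0]; exact ha)
        simp [this]
    rw [hzero', lintegral_indicator (MeasurableSet.iUnion fun i => hSmeas _),
      lintegral_iUnion (fun i => hSmeas _)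
        (fun i j hij => hSdisjoint _ _ (by omega))]
    have hsum := ENNReal.tsum_le_tsum (hshellbound n0)
    refine lt_of_le_of_lt hsum ?_
    rw [ENNReal.tsum_mul_left, ENNReal.tsum_geometric]
    have hofin : ENNReal.ofReal (c * B * ((q:ℝ) ^ (-n0:ℤ)) ^ τ) * μψ (pF ord 0) < ⊤ :=
      ENNReal.mul_lt_top ENNReal.ofReal_lt_top hμ0fin
    have hinvfin : (1 - ENNReal.ofReal t)⁻¹ < ⊤ := by
      rw [ENNReal.inv_lt_top]
      exact tsub_pos_of_lt (ENNReal.ofReal_lt_one.mpr ht1)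
    exact ENNReal.mul_lt_top hofin hinvfin
  -- shell integral formula
  have hcpow_shell : ∀ k : ℤ, ((((q:ℝ) ^ (-k) : ℝ)) : ℂ) ^ s = Qs ^ k := by
    intro k
    have h1 : ((((q:ℝ) ^ (-k) : ℝ)) : ℂ) = (q:ℂ) ^ ((-k : ℤ) : ℂ) := by
      rw [Complex.cpow_intCast]
      push_cast [Complex.ofReal_zpow]
      ring
    have hlog : Complex.log (q:ℂ) = ((Real.log q : ℝ) : ℂ) := by
      rw [show ((q:ℂ)) = (((q:ℝ)):ℂ) by push_cast; rfl, Complex.ofReal_log hq0R.le]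
    have him1 : -Real.pi < (Complex.log (q:ℂ) * ((-k : ℤ) : ℂ)).im := by
      rw [hlog]
      simp only [← Complex.ofReal_intCast, ← Complex.ofReal_mul, Complex.ofReal_im]
      exact neg_neg_of_pos Real.pi_pos
    have him2 : (Complex.log (q:ℂ) * ((-k : ℤ) : ℂ)).im ≤ Real.pi := by
      rw [hlog]
      simp only [← Complex.ofReal_intCast, ← Complex.ofReal_mul, Complex.ofReal_im]
      exact Real.pi_pos.le
    rw [h1, ← Complex.cpow_mul s him1 him2,
      show ((-k : ℤ) : ℂ) * s = (k : ℤ) * (-s) by push_cast; ring,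
      Complex.cpow_int_mul]
  have hshell : ∀ k : ℤ, ∫ x in S k, h x ∂μψ = ck k * Qs ^ k := by
    intro k
    have hcongr : ∀ x ∈ S k, h x
        = Qs ^ k * ((c * (q:ℝ) ^ (k:ℤ)) • (f x * χ x)) := by
      intro x hx
      obtain ⟨hx0, hxk⟩ := (hSmem k x).mp hx
      have habs : absF q ord x = (q:ℝ) ^ (-k) := by
        rw [ZetaAux4.absF_eq_of_ne q ord hx0, hxk]
      rw [hhdef]
      simp only [habs]
      rw [hcpow_shell k, Complex.real_smul, Complex.real_smul,
        show ((q:ℝ) ^ (-k:ℤ))⁻¹ = (q:ℝ) ^ (k:ℤ) by rw [← zpow_neg, neg_neg]]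
      ring
    rw [setIntegral_congr_fun (hSmeas k) hcongr, MeasureTheory.integral_const_mul,
      integral_smul, hckdef]
    ring
  -- decomposition of the domain
  have hdecomp : pF ord n0 \ {0} =
      (⋃ k ∈ Finset.Icc n0 (M - 1), S k) ∪ (pF ord M \ {0}) := by
    ext x
    simp only [Set.mem_diff, Set.mem_singleton_iff, Set.mem_union, Set.mem_iUnion,
      Finset.mem_Icc, exists_prop]
    constructor
    · rintro ⟨hpf, hx0⟩
      have hn : n0 ≤ ord x := hpf.resolve_left hx0
      by_cases hMle : M ≤ ord x
      · exact Or.inr ⟨Or.inr hMle, hx0⟩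
      · exact Or.inl ⟨ord x, ⟨hn, by omega⟩, (hSmem _ x).mpr ⟨hx0, rfl⟩⟩
    · rintro (⟨k, ⟨hk1, hk2⟩, hx⟩ | ⟨hpf, hx0⟩)
      · obtain ⟨hx0, hxo⟩ := (hSmem k x).mp hx
        exact ⟨Or.inr (by omega), hx0⟩
      · rcases hpf with h | h
        · exact absurd h hx0
        · exact ⟨Or.inr (by omega), hx0⟩
  have hTmeas : MeasurableSet (pF ord M \ {0}) :=
    (ZetaAux3.measurableSet_pF ord hopen M).diff h0meas
  have hdisj : Disjoint (⋃ k ∈ Finset.Icc n0 (M - 1), S k) (pF ord M \ {0}) := by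
    rw [Set.disjoint_left]
    intro x hxA hxT
    obtain ⟨k, hk, hxk⟩ := Set.mem_iUnion₂.mp hxA
    obtain ⟨hx0, hxo⟩ := (hSmem k x).mp hxk
    obtain ⟨hpf, hx0'⟩ := hxT
    have : M ≤ ord x := hpf.resolve_left (by simpa using hx0')
    have hk' := Finset.mem_Icc.mp hk
    omega
  have hIA : ∫ x in (⋃ k ∈ Finset.Icc n0 (M - 1), S k), h x ∂μψ
      = ∑ k ∈ Finset.Icc n0 (M - 1), ck k * Qs ^ k := by
    rw [MeasureTheory.integral_biUnion_finset _ (fun k _ => hSmeas k)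
      (fun a _ b _ hab => hSdisjoint a b hab) (fun k _ => hInth.integrableOn)]
    exact Finset.sum_congr rfl fun k _ => hshell k
  have hIT : ∫ x in (pF ord M \ {0}), h x ∂μψ
      = D * ((χ ϖ * Qs) ^ (M:ℤ)) * (1 - χ ϖ * Qs)⁻¹ := by
    rw [hUnion M, MeasureTheory.integral_iUnion (fun i => hSmeas _)
      (fun i j hij => hSdisjoint _ _ (by omega))
      (by rw [← hUnion M]; exact hInth.integrableOn)]
    have hterm : ∀ i : ℕ, ∫ x in S (M + i), h x ∂μψ
        = (D * (χ ϖ * Qs) ^ (M:ℤ)) * (χ ϖ * Qs) ^ (i:ℕ) := by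
      intro i
      rw [hshell (M + i), hcktail (M + i) (by omega)]
      rw [show (D * (χ ϖ) ^ ((M + i):ℤ)) * Qs ^ ((M + i):ℤ)
          = D * ((χ ϖ * Qs) ^ ((M + i):ℤ)) by rw [mul_zpow]; ring]
      rw [zpow_add₀ hrr0, zpow_natCast]
      ring
    rw [tsum_congr hterm, tsum_mul_left, tsum_geometric_of_norm_lt_one hrrnorm]
  have hIT' : ∫ x in (pF ord M \ {0}), h x ∂μψ
      = D' * Qs ^ (M:ℤ) * (1 - L0 * Qs)⁻¹ := by
    rw [hIT, hD'def, hL0def]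
    split
    · rw [mul_zpow]; ring
    · rename_i hur
      rw [hJ0ram hur] at hDdef
      rw [hDdef]
      simp
  -- put everything together
  have hsplit : ∫ x, h x ∂μψ
      = ∑ k ∈ Finset.Icc n0 (M - 1), ck k * Qs ^ k
        + D' * Qs ^ (M:ℤ) * (1 - L0 * Qs)⁻¹ := by
    rw [← setIntegral_eq_integral_of_forall_compl_eq_zero hvanish, hdecomp,
      setIntegral_union hdisj hTmeas hInth.integrableOn hInth.integrableOn,
      hIA, hIT']
  rw [hzeta, hsplit, hLf]
  -- final algebra
  have hev : Polynomial.eval Qs P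
      = (∑ k ∈ Finset.Icc n0 (M - 1), ck k * Qs ^ ((k - n0).toNat))
          * (1 - L0 * Qs)
        + D' * Qs ^ ((M - n0).toNat) := by
    rw [hPdef]
    simp [Polynomial.eval_finset_sum]
  have hkey : ∀ k : ℤ, n0 ≤ k → (Qs ^ ((k - n0).toNat) : ℂ) * Qs ^ (n0:ℤ) = Qs ^ (k:ℤ) := by
    intro k hk
    rw [← zpow_natCast Qs ((k - n0).toNat), ← zpow_add₀ hQne]
    congr 1
    omega
  have hsum : (∑ k ∈ Finset.Icc n0 (M - 1), ck k * Qs ^ k)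
      = (∑ k ∈ Finset.Icc n0 (M - 1), ck k * Qs ^ ((k - n0).toNat)) * Qs ^ (n0:ℤ) := by
    rw [Finset.sum_mul]
    refine Finset.sum_congr rfl fun k hk => ?_
    rw [mul_assoc, hkey k (Finset.mem_Icc.mp hk).1]
  have hQM : (Qs ^ ((M - n0).toNat) : ℂ) * Qs ^ (n0:ℤ) = Qs ^ (M:ℤ) := hkey M hMn0
  rw [hev, hsum, ← hQM]
  field_simp
end
end

section
/- For every continuous character χ : F^× → ℂ^×, one has γ(s,χ,ψ) · γ(1−s, χ⁻¹, ψ̄) = 1 as an identity of rational functions of q_F^{−s}, where ψ̄ = ψ^{−1} is the conjugate additive character x ↦ ψ(−x) (which has the same level as ψ, so μ_{ψ̄} = μ_ψ). In particular γ(s,χ,ψ) is a non-zero rational function of q_F^{−s}. -/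
open MeasureTheory Complex
open scoped Classical ENNReal NNReal

noncomputable section

/-- Context: `F` is a non-archimedean local field with normalized additive valuation
`ord`, uniformizer `ϖ`, residue cardinality `q`, a continuous non-trivial additive
character `ψ` of level `l`, and Haar measure `μψ` normalized by `μψ(𝒪_F) = q^{l/2}`. -/
theorem gamma_factor_functional_identity
    (F : Type) [Field F] [TopologicalSpace F] [IsTopologicalRing F]
    [LocallyCompactSpace F] [MeasurableSpace F] [BorelSpace F]
    (q : ℕ) (hq : 1 < q)
    (ord : F → ℤ)
    (hord_mul : ∀ x y : F, x ≠ 0 → y ≠ 0 → ord (x * y) = ord x + ord y)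
    (hord_add : ∀ x y : F, x ≠ 0 → y ≠ 0 → x + y ≠ 0 →
      min (ord x) (ord y) ≤ ord (x + y))
    (ϖ : F) (hϖ0 : ϖ ≠ 0) (hϖ1 : ord ϖ = 1)
    (hcompact : ∀ n : ℤ, IsCompact (pF ord n))
    (hopen : ∀ n : ℤ, IsOpen (pF ord n))
    (ψ : F → ℂ) (hψ : IsAddCharF ψ)
    (l : ℤ) (hl : IsLevel ord ψ l)
    (μψ : Measure F) [μψ.IsAddHaarMeasure]
    (hμψ : μψ (pF ord 0) = ENNReal.ofReal ((q : ℝ) ^ ((l : ℝ) / 2)))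
    (hμscale : ∀ a : F, a ≠ 0 → ∀ A : Set F,
      μψ ((a * ·) '' A) = ENNReal.ofReal (absF q ord a) * μψ A)
    (χ : F → ℂ) (hχ : IsMultCharF χ)
    (σ : ℝ) (hσ : ∀ x : F, x ≠ 0 → ‖χ x‖ = (absF q ord x) ^ σ)
    -- `Γ` realizes `γ(s,χ,ψ)` and `Γbar` realizes `γ(s,χ⁻¹,ψ̄)`, where
    -- `ψ̄ = ψ^{-1}` has the same level as `ψ`, so `μ_{ψ̄} = μ_ψ`
    (Γ Γbar : RatFunc ℂ)
    (hΓ : TateFE q ord χ σ ψ μψ Γ)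
    (hΓbar : TateFE q ord (fun x => (χ x)⁻¹) (-σ) (fun x => ψ (-x)) μψ Γbar) :
    -- `γ(s,χ,ψ)` is a non-zero rational function of `q^{-s}`, and
    Γ ≠ 0 ∧
    -- `γ(s,χ,ψ) · γ(1-s,χ⁻¹,ψ̄) = 1`
    (∀ s : ℂ, -σ < s.re → s.re < 1 - σ →
        RatFunc.eval (RingHom.id ℂ) ((q : ℂ) ^ (-s)) Γ *
          RatFunc.eval (RingHom.id ℂ) ((q : ℂ) ^ (-(1 - s))) Γbar = 1) := by
    classical
  obtain ⟨hψc, hψadd, hψne, hψnt⟩ := hψ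
  obtain ⟨hχc, hχmul, hχne⟩ := hχ
  obtain ⟨hl1, z, hzpF, hzψ⟩ := hl
  have hqR : (1:ℝ) < (q:ℝ) := by exact_mod_cast hq
  have hqpos : (0:ℝ) < (q:ℝ) := by linarith
  have hqne : (q:ℝ) ≠ 0 := ne_of_gt hqpos
  -- basic valuation facts
  have ord_one : ord (1:F) = 0 := by
    have := hord_mul 1 1 one_ne_zero one_ne_zero
    simp only [mul_one] at this; omega
  have ord_inv : ∀ x : F, x ≠ 0 → ord x⁻¹ = -ord x := by
    intro x hx
    have := hord_mul x x⁻¹ hx (inv_ne_zero hx)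
    rw [mul_inv_cancel₀ hx, ord_one] at this
    omega
  have ord_neg : ∀ x : F, x ≠ 0 → ord (-x) = ord x := by
    have hm1 : ord (-1 : F) = 0 := by
      have := hord_mul (-1) (-1) (by norm_num) (by norm_num)
      simp only [neg_mul_neg, one_mul, ord_one] at this; omega
    intro x hx
    have := hord_mul (-1) x (by norm_num) hx
    rw [hm1] at this
    simpa using this
  have ψ_zero : ψ 0 = 1 := by
    have h : ψ 0 * 1 = ψ 0 * ψ 0 := by rw [mul_one]; exact hψadd 0 0 ▸ (by rw [add_zero])
    exact (mul_left_cancel₀ (hψne 0) h).symm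
  -- pF basics
  have pF_zero_mem : ∀ n : ℤ, (0:F) ∈ pF ord n := fun n => Or.inl rfl
  have pF_mono : ∀ m n : ℤ, m ≤ n → pF ord n ⊆ pF ord m := by
    intro m n hmn x hx
    rcases hx with h | h
    · exact Or.inl h
    · exact Or.inr (le_trans hmn h)
  have pF_neg_mem : ∀ (n : ℤ) (x : F), x ∈ pF ord n → -x ∈ pF ord n := by
    intro n x hx
    rcases hx with h | h
    · exact Or.inl (by rw [h, neg_zero])
    · by_cases hx0 : x = 0
      · exact Or.inl (by rw [hx0, neg_zero])
      · exact Or.inr (by rw [ord_neg x hx0]; exact h)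
  have pF_add_mem : ∀ (n : ℤ) (x y : F), x ∈ pF ord n → y ∈ pF ord n → x + y ∈ pF ord n := by
    intro n x y hx hy
    by_cases hx0 : x = 0
    · simpa [hx0] using hy
    by_cases hy0 : y = 0
    · simpa [hy0] using hx
    by_cases hxy : x + y = 0
    · exact Or.inl hxy
    have hx' : n ≤ ord x := hx.resolve_left hx0
    have hy' : n ≤ ord y := hy.resolve_left hy0
    refine Or.inr (le_trans ?_ (hord_add x y hx0 hy0 hxy))
    exact le_min hx' hy'
  have pF_mul_mem : ∀ (i j : ℤ) (a b : F), a ∈ pF ord i → b ∈ pF ord j →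
      a * b ∈ pF ord (i + j) := by
    intro i j a b ha hb
    by_cases ha0 : a = 0
    · exact Or.inl (by rw [ha0, zero_mul])
    by_cases hb0 : b = 0
    · exact Or.inl (by rw [hb0, mul_zero])
    have ha' : i ≤ ord a := ha.resolve_left ha0
    have hb' : j ≤ ord b := hb.resolve_left hb0
    exact Or.inr (by rw [hord_mul a b ha0 hb0]; omega)
  have pF_meas : ∀ n : ℤ, MeasurableSet (pF ord n) := fun n => (hopen n).measurableSet
  have pF_closed : ∀ n : ℤ, IsClosed (pF ord n) := by
    intro n
    rw [← isOpen_compl_iff, isOpen_iff_mem_nhds]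
    intro x hx
    have hopen' : IsOpen ((fun y : F => y - x) ⁻¹' pF ord n) :=
      (hopen n).preimage (continuous_sub_right x)
    have hmem : x ∈ (fun y : F => y - x) ⁻¹' pF ord n := by
      simp only [Set.mem_preimage, sub_self]; exact pF_zero_mem n
    refine Filter.mem_of_superset (hopen'.mem_nhds hmem) ?_
    intro y hy hyn
    exact hx (by
      have h2 : y + -(y - x) ∈ pF ord n := pF_add_mem n y (-(y-x)) hyn (pF_neg_mem n _ hy)
      rwa [show y + -(y - x) = x by ring] at h2)
  -- powers of the uniformizer
  have ord_pow : ∀ k : ℕ, ϖ ^ k ≠ 0 ∧ ord (ϖ ^ k) = k := by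
    intro k
    induction k with
    | zero => simpa using ord_one
    | succ k ih =>
      constructor
      · rw [pow_succ]; exact mul_ne_zero (pow_ne_zero k hϖ0) hϖ0
      · rw [pow_succ, hord_mul _ _ ih.1 hϖ0, ih.2, hϖ1]; push_cast; ring
  have ord_zpow : ∀ m : ℤ, ϖ ^ m ≠ 0 ∧ ord (ϖ ^ m) = m := by
    intro m
    constructor
    · exact zpow_ne_zero m hϖ0
    · rcases m with k | k
      · rw [Int.ofNat_eq_coe, zpow_natCast]; exact (ord_pow k).2
      · rw [zpow_negSucc, ord_inv _ (pow_ne_zero _ hϖ0), (ord_pow (k+1)).2]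
        simp [Int.negSucc_eq]
  -- measures of the ideals
  set Creal : ℝ := (q:ℝ) ^ ((l : ℝ) / 2) with hCreal
  have hCreal_pos : 0 < Creal := Real.rpow_pos_of_pos hqpos _
  set volR : ℤ → ℝ := fun n => (q:ℝ) ^ (-n) * Creal with hvolR
  have volR_pos : ∀ n : ℤ, 0 < volR n := fun n =>
    mul_pos (zpow_pos hqpos _) hCreal_pos
  have pF_image : ∀ n : ℤ, pF ord n = (fun y => ϖ ^ n * y) '' pF ord 0 := by
    intro n
    ext x
    constructor
    · intro hx
      by_cases hx0 : x = 0
      · exact ⟨0, pF_zero_mem 0, by simp [hx0]⟩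
      · refine ⟨ϖ ^ (-n) * x, ?_, ?_⟩
        · refine Or.inr ?_
          rw [hord_mul _ _ (ord_zpow (-n)).1 hx0, (ord_zpow (-n)).2]
          have := hx.resolve_left hx0
          omega
        · show ϖ ^ n * (ϖ ^ (-n) * x) = x
          rw [← mul_assoc, ← zpow_add₀ hϖ0]
          norm_num
    · rintro ⟨y, hy, rfl⟩
      by_cases hy0 : y = 0
      · exact Or.inl (by simp [hy0])
      · refine Or.inr ?_
        show n ≤ ord (ϖ ^ n * y)
        rw [hord_mul _ _ (ord_zpow n).1 hy0, (ord_zpow n).2]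
        have := hy.resolve_left hy0
        omega
  have absF_zpow : ∀ n : ℤ, absF q ord (ϖ ^ n) = (q:ℝ) ^ (-n) := by
    intro n
    rw [absF, if_neg (ord_zpow n).1, (ord_zpow n).2]
  have vol : ∀ n : ℤ, μψ (pF ord n) = ENNReal.ofReal (volR n) := by
    intro n
    rw [pF_image n, hμscale _ (ord_zpow n).1, absF_zpow, hμψ, hvolR]
    rw [← ENNReal.ofReal_mul (le_of_lt (zpow_pos hqpos _))]
  have vol_toReal : ∀ n : ℤ, (μψ (pF ord n)).toReal = volR n := by
    intro n
    rw [vol n, ENNReal.toReal_ofReal (le_of_lt (volR_pos n))]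
  have volR_mul : ∀ n : ℤ, volR n * volR (l - n) = 1 := by
    intro n
    have hCC : Creal * Creal = (q:ℝ) ^ l := by
      rw [hCreal, ← Real.rpow_add hqpos]
      rw [show (l:ℝ)/2 + (l:ℝ)/2 = ((l:ℤ):ℝ) by push_cast; ring]
      rw [Real.rpow_intCast]
    calc volR n * volR (l - n) = ((q:ℝ) ^ (-n) * (q:ℝ) ^ (-(l-n))) * (Creal * Creal) := by
          rw [hvolR]; ring
      _ = (q:ℝ) ^ (-l) * (q:ℝ) ^ l := by
          rw [hCC, ← zpow_add₀ hqne]; ring_nf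
      _ = 1 := by rw [← zpow_add₀ hqne]; norm_num
  -- the nontrivial element z
  have hz0 : z ≠ 0 := by
    intro h; exact hzψ (by rw [h, ψ_zero])
  have hzord : l - 1 ≤ ord z := hzpF.resolve_left hz0
  -- the key character-sum integral
  have keyI : ∀ (m : ℤ) (x : F),
      (∫ y, (pF ord m).indicator (fun y => ψ (x * y)) y ∂μψ)
        = if x ∈ pF ord (l - m) then ((volR m : ℝ) : ℂ) else 0 := by
    intro m x
    by_cases hx : x ∈ pF ord (l - m)
    · rw [if_pos hx]
      have hcongr : (pF ord m).indicator (fun y => ψ (x * y))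
          = (pF ord m).indicator (fun _ => (1:ℂ)) := by
        apply Set.indicator_congr
        intro y hy
        apply hl1
        have := pF_mul_mem (l - m) m x y hx hy
        rwa [sub_add_cancel] at this
      rw [hcongr, integral_indicator_const (1:ℂ) (pF_meas m), measureReal_def, vol_toReal m]
      simp
    · rw [if_neg hx]
      have hx0 : x ≠ 0 := by
        intro h; exact hx (h ▸ pF_zero_mem _)
      have hxord : ord x ≤ l - m - 1 := by
        have : ¬ (l - m ≤ ord x) := fun h => hx (Or.inr h)
        omega
      set y0 : F := z * x⁻¹ with hy0def
      have hy00 : y0 ≠ 0 := mul_ne_zero hz0 (inv_ne_zero hx0)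
      have hy0mem : y0 ∈ pF ord m := by
        refine Or.inr ?_
        rw [hy0def, hord_mul _ _ hz0 (inv_ne_zero hx0), ord_inv _ hx0]
        omega
      have hxy0 : x * y0 = z := by
        rw [hy0def, mul_comm z, ← mul_assoc, mul_inv_cancel₀ hx0, one_mul]
      set G : F → ℂ := (pF ord m).indicator (fun y => ψ (x * y)) with hG
      have hGt : ∀ y, G (y + y0) = ψ z * G y := by
        intro y
        by_cases hy : y ∈ pF ord m
        · have h1 : y + y0 ∈ pF ord m := pF_add_mem m y y0 hy hy0mem
          rw [hG, Set.indicator_of_mem hy, Set.indicator_of_mem h1]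
          rw [mul_add, hψadd, hxy0]
          ring
        · have h1 : y + y0 ∉ pF ord m := by
            intro h
            apply hy
            have := pF_add_mem m _ _ h (pF_neg_mem m _ hy0mem)
            simpa using this
          rw [hG, Set.indicator_of_notMem hy, Set.indicator_of_notMem h1, mul_zero]
      have h2 : (∫ y, G y ∂μψ) = ψ z * ∫ y, G y ∂μψ := by
        conv_lhs => rw [← integral_add_right_eq_self G y0]
        simp_rw [hGt]
        rw [integral_const_mul]
      have h3 : (1 - ψ z) * ∫ y, G y ∂μψ = 0 := by
        linear_combination h2
      rcases mul_eq_zero.1 h3 with h | h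
      · exact absurd (by linear_combination -h) hzψ
      · exact h
  -- neighborhood basis at 0
  have hbasis : ∀ U : Set F, U ∈ nhds (0:F) → ∃ m : ℤ, pF ord m ⊆ U := by
    intro U hU
    obtain ⟨V, hVU, hVopen, hV0⟩ := mem_nhds_iff.1 hU
    by_contra hcon
    push_neg at hcon
    set K : ℕ → Set F := fun j => pF ord j ∩ Vᶜ with hK
    have hKne : ∀ j : ℕ, (K j).Nonempty := by
      intro j
      obtain ⟨x, hx1, hx2⟩ := Set.not_subset.1 (hcon j)
      exact ⟨x, hx1, fun hxV => hx2 (hVU hxV)⟩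
    have hdir : Directed (· ⊇ ·) K := by
      intro i j
      refine ⟨max i j, ?_, ?_⟩
      · exact Set.inter_subset_inter_left _ (pF_mono _ _ (by exact_mod_cast le_max_left i j))
      · exact Set.inter_subset_inter_left _ (pF_mono _ _ (by exact_mod_cast le_max_right i j))
    have hne := IsCompact.nonempty_iInter_of_directed_nonempty_isCompact_isClosed K hdir hKne
      (fun j => ((hcompact j).inter_right hVopen.isClosed_compl))
      (fun j => ((pF_closed j).inter hVopen.isClosed_compl))
    obtain ⟨x, hx⟩ := hne
    simp only [Set.mem_iInter, hK, Set.mem_inter_iff, Set.mem_compl_iff] at hx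
    have hx0 : x = 0 := by
      by_contra hxne
      have h1 := (hx ((ord x).toNat + 1)).1
      have h2 : ((((ord x).toNat + 1 : ℕ) : ℤ)) ≤ ord x := h1.resolve_left hxne
      have h3 : ord x ≤ ((ord x).toNat : ℤ) := Int.self_le_toNat (ord x)
      push_cast at h2
      omega
    exact (hx 0).2 (hx0 ▸ hV0)
  -- χ is close to 1 near 1
  have hχ1 : χ 1 = 1 := by
    have h := hχmul 1 1 one_ne_zero one_ne_zero
    rw [mul_one] at h
    exact (mul_left_cancel₀ (hχne 1 one_ne_zero) (by rw [← h, mul_one])).symm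
  obtain ⟨n, hn1, hχsmall⟩ : ∃ n : ℤ, 1 ≤ n ∧
      ∀ x : F, x - 1 ∈ pF ord n → ‖χ x - 1‖ < 1/2 := by
    have hc : ContinuousWithinAt χ {x : F | x ≠ 0} 1 := hχc 1 (by simp)
    have hball : Metric.ball (1:ℂ) (1/2) ∈ nhds (χ 1) := by
      rw [hχ1]; exact Metric.ball_mem_nhds _ (by norm_num)
    have h2 : χ ⁻¹' Metric.ball (1:ℂ) (1/2) ∈ nhdsWithin (1:F) {x : F | x ≠ 0} := hc hball
    rw [mem_nhdsWithin] at h2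
    obtain ⟨U, hUopen, hU1, hUsub⟩ := h2
    have hW : (fun x : F => x + 1) ⁻¹' U ∈ nhds (0:F) := by
      apply (continuous_add_right (1:F)).continuousAt.preimage_mem_nhds
      simpa using hUopen.mem_nhds hU1
    obtain ⟨m, hm⟩ := hbasis _ hW
    refine ⟨max m 1, le_max_right _ _, ?_⟩
    intro x hx
    have hx' : x - 1 ∈ pF ord m := pF_mono _ _ (le_max_left _ _) hx
    have hxU : x ∈ U := by
      have := hm hx'
      simpa using this
    have hxne : x ≠ 0 := by
      intro h
      rw [h] at hx
      have : (0:F) - 1 ≠ 0 := by norm_num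
      have h2 := hx.resolve_left (by simpa using this)
      rw [show (0:F) - 1 = -1 by ring, ord_neg 1 one_ne_zero, ord_one] at h2
      omega
    have := hUsub ⟨hxU, hxne⟩
    rw [Set.mem_preimage, Metric.mem_ball, Complex.dist_eq] at this
    exact this
  -- the test function f = indicator of 1 + pF^n
  set T : Set F := {x : F | x - 1 ∈ pF ord n} with hTdef
  set f : F → ℂ := T.indicator (fun _ => (1:ℂ)) with hfdef
  have hT_preim : T = (fun x : F => x + (-1)) ⁻¹' pF ord n := by
    ext x; simp [hTdef, sub_eq_add_neg]
  have hT_open : IsOpen T := by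
    rw [hT_preim]; exact (hopen n).preimage (continuous_add_right _)
  have hT_meas : MeasurableSet T := hT_open.measurableSet
  have hT_closed : IsClosed T := by
    rw [hT_preim]; exact (pF_closed n).preimage (continuous_add_right _)
  have hT_compact : IsCompact T := by
    have : T = (fun y : F => y + 1) '' pF ord n := by
      ext x
      constructor
      · intro hx; exact ⟨x - 1, hx, by ring⟩
      · rintro ⟨y, hy, rfl⟩; show y + 1 - 1 ∈ pF ord n; simpa using hy
    rw [this]
    exact (hcompact n).image (continuous_add_right 1)
  have hμT : μψ T = ENNReal.ofReal (volR n) := by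
    rw [hT_preim, measure_preimage_add_right, vol n]
  have hTx : ∀ x : F, x ∈ T → x ≠ 0 ∧ ord x = 0 := by
    intro x hx
    have hx' : x - 1 ∈ pF ord n := hx
    by_cases hu : x - 1 = 0
    · have : x = 1 := by linear_combination hu
      rw [this]; exact ⟨one_ne_zero, ord_one⟩
    have hordu : n ≤ ord (x - 1) := hx'.resolve_left hu
    have hx0 : x ≠ 0 := by
      intro h
      rw [h] at hu hordu
      rw [show (0:F) - 1 = -1 by ring, ord_neg 1 one_ne_zero, ord_one] at hordu
      omega
    refine ⟨hx0, ?_⟩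
    have hge : 0 ≤ ord x := by
      have h1 : x = 1 + (x - 1) := by ring
      have h2 := hord_add 1 (x-1) one_ne_zero hu (by rw [← h1]; exact hx0)
      rw [← h1, ord_one] at h2
      have : (0:ℤ) ≤ min 0 (ord (x-1)) := le_min le_rfl (by omega)
      omega
    have hle : ord x ≤ 0 := by
      by_contra hcon
      push_neg at hcon
      have h1 : (1:F) = x + (-(x-1)) := by ring
      have h2 := hord_add x (-(x-1)) hx0 (neg_ne_zero.2 hu) (by rw [← h1]; exact one_ne_zero)
      rw [← h1, ord_one, ord_neg _ hu] at h2
      have : (1:ℤ) ≤ min (ord x) (ord (x-1)) := le_min (by omega) (by omega)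
      omega
    omega
  -- f is locally constant with compact support
  have hf_lc : IsLocallyConstant f := by
    rw [IsLocallyConstant.iff_exists_open]
    intro x
    refine ⟨(fun y : F => y - x) ⁻¹' pF ord n,
      (hopen n).preimage (continuous_sub_right x), by simp [pF_zero_mem n], ?_⟩
    intro y hy
    have hy' : y - x ∈ pF ord n := hy
    have hiff : y ∈ T ↔ x ∈ T := by
      constructor
      · intro h
        show x - 1 ∈ pF ord n
        have := pF_add_mem n _ _ (pF_neg_mem n _ hy') h
        simpa [show -(y - x) + (y - 1) = x - 1 by ring] using
          (pF_add_mem n _ _ (pF_neg_mem n _ hy') (show y - 1 ∈ pF ord n from h))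
      · intro h
        show y - 1 ∈ pF ord n
        simpa [show (y - x) + (x - 1) = y - 1 by ring] using
          (pF_add_mem n _ _ hy' (show x - 1 ∈ pF ord n from h))
    rw [hfdef]
    by_cases hxT : x ∈ T
    · rw [Set.indicator_of_mem hxT, Set.indicator_of_mem (hiff.2 hxT)]
    · rw [Set.indicator_of_notMem hxT, Set.indicator_of_notMem (fun h => hxT (hiff.1 h))]
  have hf_cs : HasCompactSupport f := by
    apply hT_compact.of_isClosed_subset isClosed_closure
    apply closure_minimal _ hT_closed
    exact Set.support_indicator_subset
  -- Fourier transform of f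
  have FTf : ∀ x : F, FT ψ μψ f x
      = ψ x * (if x ∈ pF ord (l - n) then ((volR n : ℝ) : ℂ) else 0) := by
    intro x
    have step1 : FT ψ μψ f x = ∫ y, f (y + 1) * ψ (x * (y + 1)) ∂μψ := by
      rw [FT]
      exact (integral_add_right_eq_self (fun y => f y * ψ (x * y)) 1).symm
    rw [step1]
    have step2 : ∀ y : F, f (y + 1) * ψ (x * (y + 1))
        = ψ x * (pF ord n).indicator (fun y => ψ (x * y)) y := by
      intro y
      by_cases hy : y ∈ pF ord n
      · have hyT : y + 1 ∈ T := by show y + 1 - 1 ∈ pF ord n; simpa using hy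
        rw [hfdef, Set.indicator_of_mem hyT, Set.indicator_of_mem hy]
        rw [show x * (y + 1) = x * y + x by ring, hψadd]
        ring
      · have hyT : y + 1 ∉ T := by
          intro h
          exact hy (by simpa using (show y + 1 - 1 ∈ pF ord n from h))
        rw [hfdef, Set.indicator_of_notMem hyT, Set.indicator_of_notMem hy]
        ring
    simp_rw [step2]
    rw [integral_const_mul, keyI n x]
  -- the function g = FT ψ f
  set g : F → ℂ := FT ψ μψ f with hgdef
  have hg_eq : ∀ x : F, g x
      = ψ x * (if x ∈ pF ord (l - n) then ((volR n : ℝ) : ℂ) else 0) := FTf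
  have hg_lc : IsLocallyConstant g := by
    rw [IsLocallyConstant.iff_exists_open]
    intro x
    set M : ℤ := max l (l - n) with hM
    refine ⟨(fun y : F => y - x) ⁻¹' pF ord M,
      (hopen M).preimage (continuous_sub_right x), by simp [pF_zero_mem M], ?_⟩
    intro y hy
    have hy' : y - x ∈ pF ord M := hy
    have hψeq : ψ y = ψ x := by
      have h1 : y = x + (y - x) := by ring
      rw [h1, hψadd, hl1 _ (pF_mono l M (le_max_left _ _) hy'), mul_one]
    have hiff : y ∈ pF ord (l - n) ↔ x ∈ pF ord (l - n) := by
      have hyx : y - x ∈ pF ord (l - n) := pF_mono _ _ (le_max_right _ _) hy'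
      constructor
      · intro h
        simpa [show y + -(y - x) = x by ring] using pF_add_mem _ _ _ h (pF_neg_mem _ _ hyx)
      · intro h
        simpa [show x + (y - x) = y by ring] using pF_add_mem _ _ _ h hyx
    rw [hg_eq y, hg_eq x, hψeq]
    by_cases hxm : x ∈ pF ord (l - n)
    · rw [if_pos hxm, if_pos (hiff.2 hxm)]
    · rw [if_neg hxm, if_neg (fun h => hxm (hiff.1 h))]
  have hg_cs : HasCompactSupport g := by
    apply (hcompact (l - n)).of_isClosed_subset isClosed_closure
    apply closure_minimal _ (pF_closed (l - n))
    intro x hx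
    by_contra hxm
    apply hx
    rw [hg_eq x, if_neg hxm, mul_zero]
  -- double Fourier transform gives back f
  have FTg : ∀ x : F, FT (fun t => ψ (-t)) μψ g x = f x := by
    intro x
    rw [FT]
    have step : ∀ y : F, g y * ψ (-(x * y))
        = ((volR n : ℝ) : ℂ) * (pF ord (l - n)).indicator (fun y => ψ ((1 - x) * y)) y := by
      intro y
      by_cases hy : y ∈ pF ord (l - n)
      · rw [hg_eq y, if_pos hy, Set.indicator_of_mem hy]
        rw [show (1 - x) * y = y + (-(x * y)) by ring, hψadd]
        ring
      · rw [hg_eq y, if_neg hy, Set.indicator_of_notMem hy]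
        ring
    simp_rw [step]
    rw [integral_const_mul, keyI (l - n) (1 - x)]
    rw [show l - (l - n) = n by ring]
    by_cases hx : 1 - x ∈ pF ord n
    · rw [if_pos hx]
      have hxT : x ∈ T := by
        show x - 1 ∈ pF ord n
        simpa [show -(1 - x) = x - 1 by ring] using pF_neg_mem n _ hx
      rw [hfdef, Set.indicator_of_mem hxT]
      rw [← Complex.ofReal_mul, volR_mul n]
      norm_num
    · rw [if_neg hx]
      have hxT : x ∉ T := by
        intro h
        apply hx
        have : x - 1 ∈ pF ord n := h
        simpa [show -(x - 1) = 1 - x by ring] using pF_neg_mem n _ this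
      rw [hfdef, Set.indicator_of_notMem hxT, mul_zero]
  -- measurability of absF
  have hmeas0 : MeasurableSet ({0} : Set F) := by
    have : ({0} : Set F) = ⋂ k : ℕ, pF ord k := by
      ext x
      simp only [Set.mem_singleton_iff, Set.mem_iInter]
      constructor
      · intro h k; rw [h]; exact pF_zero_mem _
      · intro h
        by_contra hx
        have h1 := (h ((ord x).toNat + 1)).resolve_left hx
        have h3 : ord x ≤ ((ord x).toNat : ℤ) := Int.self_le_toNat (ord x)
        push_cast at h1
        omega
    rw [this]
    exact MeasurableSet.iInter fun k => pF_meas k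
  have hmeas_ordset : ∀ m : ℤ, MeasurableSet {x : F | x ≠ 0 ∧ ord x = m} := by
    intro m
    have : {x : F | x ≠ 0 ∧ ord x = m} = (pF ord m \ pF ord (m+1)) \ {0} := by
      ext x
      simp only [Set.mem_setOf_eq, Set.mem_diff, Set.mem_singleton_iff, pF,
        Set.mem_setOf_eq]
      constructor
      · rintro ⟨hx0, hxo⟩
        exact ⟨⟨Or.inr (by omega), by push_neg; exact ⟨hx0, by omega⟩⟩, hx0⟩
      · rintro ⟨⟨h1, h2⟩, h0⟩
        push_neg at h2
        have := h1.resolve_left h0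
        exact ⟨h0, by omega⟩
    rw [this]
    exact (((pF_meas m).diff (pF_meas (m+1)))).diff hmeas0
  have habs_meas : Measurable (absF q ord) := by
    have : absF q ord = fun x =>
        Set.indicator {(0:F)}ᶜ (fun x => ((fun k : ℤ => (q:ℝ) ^ (-k)) ∘ ord) x) x := by
      funext x
      by_cases hx : x = 0
      · simp [absF, hx]
      · simp [absF, hx, Set.indicator_of_mem (by simpa using hx : x ∈ ({(0:F)}ᶜ : Set F))]
    rw [this]
    apply Measurable.indicator _ hmeas0.compl
    apply Measurable.comp (measurable_from_top) ?_
    -- Measurable ord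
    apply measurable_to_countable'
    intro m
    have : ord ⁻¹' {m} = {x : F | x ≠ 0 ∧ ord x = m} ∪ (if ord (0:F) = m then {0} else ∅) := by
      ext x
      by_cases hx : x = 0
      · subst hx
        by_cases h0 : ord (0:F) = m <;>
          simp [h0]
      · simp [hx]
    rw [this]
    refine (hmeas_ordset m).union ?_
    split <;> simp [hmeas0]
  -- nonvanishing of the zeta integral of f
  set kR : ℝ := (q:ℝ) / ((q:ℝ) - 1) with hkR
  have hkR_pos : 0 < kR := div_pos hqpos (by linarith)
  have hχT : ContinuousOn χ T := hχc.mono (fun x hx => (hTx x hx).1)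
  have hInt : Integrable (T.indicator χ) μψ := by
    rw [integrable_indicator_iff hT_meas]
    refine Integrable.mono' (g := fun _ => (3/2 : ℝ))
      ((integrableOn_const_iff).2 (Or.inr (by rw [hμT]; exact ENNReal.ofReal_lt_top)))
      (hχT.aestronglyMeasurable hT_meas) ?_
    refine (ae_restrict_iff' hT_meas).2 (Filter.Eventually.of_forall fun x hx => ?_)
    have h1 : ‖χ x - 1‖ < 1/2 := hχsmall x hx
    have : ‖χ x‖ ≤ ‖χ x - 1‖ + ‖(1:ℂ)‖ := by
      simpa using norm_add_le (χ x - 1) 1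
    simp at this
    linarith
  set J : ℂ := ∫ x, T.indicator χ x ∂μψ with hJ
  have hJre : (1/2) * volR n ≤ J.re := by
    have h1 : J.re = ∫ x, ((T.indicator χ x) : ℂ).re ∂μψ := (integral_re hInt).symm
    have h2 : ∀ x : F, T.indicator (fun _ => (1/2 : ℝ)) x ≤ ((T.indicator χ x) : ℂ).re := by
      intro x
      by_cases hx : x ∈ T
      · rw [Set.indicator_of_mem hx, Set.indicator_of_mem hx]
        have h3 := hχsmall x hx
        have h4 : |(χ x - 1).re| ≤ ‖χ x - 1‖ := Complex.abs_re_le_norm _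
        have h5 : (χ x - 1).re = (χ x).re - 1 := by simp
        have : -(1/2 : ℝ) < (χ x).re - 1 := by
          rw [← h5]
          have := abs_le.1 h4
          linarith
        linarith
      · rw [Set.indicator_of_notMem hx, Set.indicator_of_notMem hx]
        simp
    have h6 : (∫ x, T.indicator (fun _ => (1/2 : ℝ)) x ∂μψ) ≤ ∫ x, ((T.indicator χ x) : ℂ).re ∂μψ := by
      refine integral_mono ?_ hInt.re h2
      rw [integrable_indicator_iff hT_meas]
      exact (integrableOn_const_iff).2 (Or.inr (by rw [hμT]; exact ENNReal.ofReal_lt_top))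
    rw [integral_indicator_const _ hT_meas] at h6
    rw [h1]
    refine le_trans (le_of_eq ?_) h6
    rw [measureReal_def, hμT, ENNReal.toReal_ofReal (le_of_lt (volR_pos n))]
    simp [mul_comm]
  have hJne : J ≠ 0 := by
    intro h
    rw [h] at hJre
    simp at hJre
    have := volR_pos n
    nlinarith
  -- computing the zeta integral of f
  have hzeta_ne : ∀ s : ℂ, zetaF q ord μψ χ s f ≠ 0 := by
    intro s
    set w : F → ℝ≥0 := fun x => Real.toNNReal (kR * (absF q ord x)⁻¹) with hw
    have hw_meas : Measurable w := by
      apply Measurable.real_toNNReal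
      exact (habs_meas.inv).const_mul kR
    have hmm : mulMeasure q ord μψ = μψ.withDensity (fun x => ((w x : ℝ≥0) : ℝ≥0∞)) := rfl
    have hz1 : zetaF q ord μψ χ s f = ∫ x, T.indicator χ x ∂(mulMeasure q ord μψ) := by
      rw [zetaF]
      apply integral_congr_ae
      apply Filter.Eventually.of_forall
      intro x
      beta_reduce
      by_cases hx : x ∈ T
      · obtain ⟨hx0, hordx⟩ := hTx x hx
        have habs : absF q ord x = 1 := by
          rw [absF, if_neg hx0, hordx]
          norm_num
        rw [hfdef, Set.indicator_of_mem hx, Set.indicator_of_mem hx, habs]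
        simp [one_cpow]
      · rw [hfdef, Set.indicator_of_notMem hx, Set.indicator_of_notMem hx]
        ring
    have hz2 : zetaF q ord μψ χ s f = ∫ x, w x • T.indicator χ x ∂μψ := by
      rw [hz1, hmm, integral_withDensity_eq_integral_smul hw_meas]
    have hz3 : zetaF q ord μψ χ s f = ((kR : ℝ) : ℂ) * J := by
      rw [hz2, hJ, ← integral_const_mul]
      apply integral_congr_ae
      apply Filter.Eventually.of_forall
      intro x
      beta_reduce
      by_cases hx : x ∈ T
      · obtain ⟨hx0, hordx⟩ := hTx x hx
        have habs : absF q ord x = 1 := by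
          rw [absF, if_neg hx0, hordx]
          norm_num
        have hwx : w x = Real.toNNReal kR := by rw [hw]; simp [habs]
        rw [hwx, NNReal.smul_def, Real.coe_toNNReal _ (le_of_lt hkR_pos)]
        rw [Complex.real_smul]
      · rw [Set.indicator_of_notMem hx, smul_zero, mul_zero]
    rw [hz3]
    exact mul_ne_zero (by
      simp only [ne_eq, Complex.ofReal_eq_zero]
      exact ne_of_gt hkR_pos) hJne
  -- the main identity
  have main : ∀ s : ℂ, -σ < s.re → s.re < 1 - σ →
      RatFunc.eval (RingHom.id ℂ) ((q : ℂ) ^ (-s)) Γ *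
        RatFunc.eval (RingHom.id ℂ) ((q : ℂ) ^ (-(1 - s))) Γbar = 1 := by
    intro s h1 h2
    have E1 := hΓ f hf_lc hf_cs s h1 h2
    have hb1 : -(-σ) < (1-s).re := by
      rw [Complex.sub_re, Complex.one_re]
      linarith
    have hb2 : (1-s).re < 1 - (-σ) := by
      rw [Complex.sub_re, Complex.one_re]
      linarith
    have E2 := hΓbar g hg_lc hg_cs (1-s) hb1 hb2
    rw [show (1 - (1-s)) = s by ring] at E2
    have hft : FT (fun x => ψ (-x)) μψ g = f := funext FTg
    rw [hft] at E2
    simp only [inv_inv] at E2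
    have E2' : zetaF q ord μψ χ s f
        = RatFunc.eval (RingHom.id ℂ) ((q : ℂ) ^ (-(1-s))) Γbar
          * zetaF q ord μψ (fun x => (χ x)⁻¹) (1 - s) (FT ψ μψ f) := E2
    rw [E1] at E2'
    have hZ := hzeta_ne s
    have hfin : (RatFunc.eval (RingHom.id ℂ) ((q : ℂ) ^ (-s)) Γ *
        RatFunc.eval (RingHom.id ℂ) ((q : ℂ) ^ (-(1 - s))) Γbar - 1)
        * zetaF q ord μψ χ s f = 0 := by
      linear_combination -E2'
    rcases mul_eq_zero.1 hfin with h | h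
    · linear_combination h
    · exact absurd h hZ
  refine ⟨?_, main⟩
  intro hΓ0
  have hs1 : -σ < (((1/2 - σ : ℝ) : ℂ)).re := by
    rw [Complex.ofReal_re]; linarith
  have hs2 : (((1/2 - σ : ℝ) : ℂ)).re < 1 - σ := by
    rw [Complex.ofReal_re]; linarith
  have h := main ((1/2 - σ : ℝ) : ℂ) hs1 hs2
  rw [hΓ0] at h
  simp at h
end
end

section
/- Integral formula for the abelian γ-factor: let χ : F^× → ℂ^× be a continuous character, let l be the level of ψ, and let N ≥ 1 be an integer such that χ is trivial on 1 + 𝔭_F^N. Then for every s ∈ ℂ with −σ_χ < Re(s) < 1 − σ_χ, the integral ∫_{𝔭_F^{l−N} ∖ {0}} χ(x)⁻¹ |x|_F^{−s} ψ(x) dμ_ψ(x) converges absolutely and equals γ(s,χ,ψ). -/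
open MeasureTheory Complex
open scoped Classical

noncomputable section

lemma measurable_cpow_const' (w : ℂ) : Measurable fun z : ℂ => z ^ w := by
  have h : (fun z : ℂ => z ^ w) = fun z =>
      if z = 0 then (if w = 0 then 1 else 0) else Complex.exp (Complex.log z * w) := by
    funext z; rw [Complex.cpow_def]
  rw [h]
  exact Measurable.ite (measurableSet_eq) measurable_const
    (Complex.measurable_exp.comp (Complex.measurable_log.mul_const w))

/-- Context: `F` is a non-archimedean local field with normalized additive valuation
`ord`, uniformizer `ϖ`, residue cardinality `q`, a continuous non-trivial additive
character `ψ` of level `l`, and Haar measure `μψ` normalized by `μψ(𝒪_F) = q^{l/2}`. -/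
theorem gamma_factor_integral_formula
    (F : Type) [Field F] [TopologicalSpace F] [IsTopologicalRing F]
    [LocallyCompactSpace F] [MeasurableSpace F] [BorelSpace F]
    (q : ℕ) (hq : 1 < q)
    (ord : F → ℤ)
    (hord_mul : ∀ x y : F, x ≠ 0 → y ≠ 0 → ord (x * y) = ord x + ord y)
    (hord_add : ∀ x y : F, x ≠ 0 → y ≠ 0 → x + y ≠ 0 →
      min (ord x) (ord y) ≤ ord (x + y))
    (ϖ : F) (hϖ0 : ϖ ≠ 0) (hϖ1 : ord ϖ = 1)
    (hcompact : ∀ n : ℤ, IsCompact (pF ord n))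
    (hopen : ∀ n : ℤ, IsOpen (pF ord n))
    (ψ : F → ℂ) (hψ : IsAddCharF ψ)
    (l : ℤ) (hl : IsLevel ord ψ l)
    (μψ : Measure F) [μψ.IsAddHaarMeasure]
    (hμψ : μψ (pF ord 0) = ENNReal.ofReal ((q : ℝ) ^ ((l : ℝ) / 2)))
    (hμscale : ∀ a : F, a ≠ 0 → ∀ A : Set F,
      μψ ((a * ·) '' A) = ENNReal.ofReal (absF q ord a) * μψ A)
    (χ : F → ℂ) (hχ : IsMultCharF χ)
    (σ : ℝ) (hσ : ∀ x : F, x ≠ 0 → ‖χ x‖ = (absF q ord x) ^ σ)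
    (Γ : RatFunc ℂ) (hΓ : TateFE q ord χ σ ψ μψ Γ)
    -- `N ≥ 1` is such that `χ` is trivial on `1 + 𝔭_F^N`
    (N : ℤ) (hN1 : 1 ≤ N)
    (hχN : ∀ x : F, x - 1 ∈ pF ord N → χ x = 1)
    (s : ℂ) (hs1 : -σ < s.re) (hs2 : s.re < 1 - σ) :
    -- the integral over `𝔭_F^{l-N} ∖ {0}` converges absolutely and equals
    -- `γ(s,χ,ψ)`
    IntegrableOn (fun x => (χ x)⁻¹ * (↑(absF q ord x) : ℂ) ^ (-s) * ψ x)
        {x : F | x ≠ 0 ∧ l - N ≤ ord x} μψ ∧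
    ∫ x in {x : F | x ≠ 0 ∧ l - N ≤ ord x},
        (χ x)⁻¹ * (↑(absF q ord x) : ℂ) ^ (-s) * ψ x ∂μψ
      = RatFunc.eval (RingHom.id ℂ) ((q : ℂ) ^ (-s)) Γ := by
  classical
  obtain ⟨hψc, hψadd, hψne, -⟩ := hψ
  obtain ⟨hχc, hχmul, hχne⟩ := hχ
  have q0 : (0:ℝ) < q := by exact_mod_cast Nat.zero_lt_of_lt hq
  have q1 : (1:ℝ) < q := by exact_mod_cast hq
  have hψ0 : ψ 0 = 1 := by
    have h := hψadd 0 0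
    rw [add_zero] at h
    have h2 : ψ 0 * 1 = ψ 0 * ψ 0 := by rw [mul_one, ← h]
    exact (mul_left_cancel₀ (hψne 0) h2).symm
  have hord1 : ord 1 = 0 := by
    have h := hord_mul 1 1 one_ne_zero one_ne_zero
    rw [mul_one] at h; omega
  have hordn1 : ord (-1 : F) = 0 := by
    have h := hord_mul (-1) (-1) (by simp) (by simp)
    rw [neg_mul_neg, one_mul, hord1] at h; omega
  have hordneg : ∀ x : F, x ≠ 0 → ord (-x) = ord x := by
    intro x hx
    have h := hord_mul (-1) x (by simp) hx
    rw [neg_one_mul, hordn1] at h; omega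
  have hordinv : ∀ x : F, x ≠ 0 → ord x⁻¹ = -ord x := by
    intro x hx
    have h := hord_mul x x⁻¹ hx (inv_ne_zero hx)
    rw [mul_inv_cancel₀ hx, hord1] at h; omega
  have hpow : ∀ n : ℕ, ord (ϖ ^ n) = n := by
    intro n; induction n with
    | zero => simpa using hord1
    | succ k ih =>
      have h := hord_mul (ϖ ^ k) ϖ (pow_ne_zero _ hϖ0) hϖ0
      rw [← pow_succ] at h
      rw [h, ih, hϖ1]; push_cast; ring
  have hzpow0 : ∀ n : ℤ, (ϖ : F) ^ n ≠ 0 := fun n => zpow_ne_zero n hϖ0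
  have hzpow : ∀ n : ℤ, ord (ϖ ^ n) = n := by
    intro n
    rcases le_or_gt 0 n with h | h
    · obtain ⟨m, rfl⟩ : ∃ m : ℕ, (m:ℤ) = n := ⟨n.toNat, Int.toNat_of_nonneg h⟩
      rw [zpow_natCast]; exact hpow m
    · obtain ⟨m, hm⟩ : ∃ m : ℕ, (m:ℤ) = -n := ⟨(-n).toNat, Int.toNat_of_nonneg (by omega)⟩
      have h1 : (ϖ:F) ^ n = (ϖ ^ (-n))⁻¹ := by rw [← zpow_neg, neg_neg]
      rw [h1, hordinv _ (hzpow0 _), ← hm, zpow_natCast, hpow m]; omega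
  have hA0 : ∀ n : ℤ, (0:F) ∈ pF ord n := fun n => Or.inl rfl
  have hAmem : ∀ (n : ℤ) (x : F), x ≠ 0 → (x ∈ pF ord n ↔ n ≤ ord x) := by
    intro n x hx
    constructor
    · rintro (rfl | h)
      · exact absurd rfl hx
      · exact h
    · exact fun h => Or.inr h
  have hAmono : ∀ {m n : ℤ}, m ≤ n → pF ord n ⊆ pF ord m := by
    intro m n h x hx
    rcases hx with rfl | hx
    · exact hA0 m
    · exact Or.inr (le_trans h hx)
  have hAadd : ∀ (n : ℤ), ∀ x ∈ pF ord n, ∀ y ∈ pF ord n, x + y ∈ pF ord n := by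
    intro n x hx y hy
    by_cases hx0 : x = 0
    · simpa [hx0] using hy
    · by_cases hy0 : y = 0
      · simpa [hy0] using hx
      · by_cases hxy : x + y = 0
        · exact Or.inl hxy
        · have h1 : n ≤ ord x := (hAmem n x hx0).mp hx
          have h2 : n ≤ ord y := (hAmem n y hy0).mp hy
          exact Or.inr (le_trans (le_min h1 h2) (hord_add x y hx0 hy0 hxy))
  have hAneg : ∀ (n : ℤ), ∀ x ∈ pF ord n, -x ∈ pF ord n := by
    intro n x hx
    by_cases hx0 : x = 0
    · simpa [hx0] using hA0 n
    · exact Or.inr (by rw [hordneg x hx0]; exact (hAmem n x hx0).mp hx)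
  have hAmeas : ∀ n : ℤ, MeasurableSet (pF ord n) := fun n => (hopen n).measurableSet
  have hAclosed : ∀ n : ℤ, IsClosed (pF ord n) := by
    intro n
    let G : AddSubgroup F :=
      { carrier := pF ord n
        add_mem' := fun ha hb => hAadd n _ ha _ hb
        zero_mem' := hA0 n
        neg_mem' := fun ha => hAneg n _ ha }
    exact AddSubgroup.isClosed_of_isOpen G (hopen n)
  have h0meas : MeasurableSet ({0} : Set F) := by
    have h : ({0} : Set F) = ⋂ n : ℕ, pF ord n := by
      ext x
      simp only [Set.mem_singleton_iff, Set.mem_iInter]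
      constructor
      · rintro rfl n; exact hA0 _
      · intro h
        by_contra hx
        have h1 := (hAmem ((ord x).toNat + 1) x hx).mp (by exact_mod_cast h ((ord x).toNat + 1))
        have h2 := Int.self_le_toNat (ord x)
        push_cast at h1; omega
    rw [h]; exact MeasurableSet.iInter (fun n => hAmeas _)
  have habs0 : absF q ord 0 = 0 := if_pos rfl
  have habsR : ∀ x : F, x ≠ 0 → absF q ord x = (q:ℝ) ^ (-(ord x : ℝ)) := by
    intro x hx
    simp only [absF, if_neg hx]
    rw [← Real.rpow_intCast]
    push_cast; ring_nf
  have habs_pos : ∀ x : F, x ≠ 0 → 0 < absF q ord x := by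
    intro x hx; rw [habsR x hx]; exact Real.rpow_pos_of_pos q0 _
  have hμA : ∀ n : ℤ, μψ (pF ord n) = ENNReal.ofReal ((q:ℝ) ^ ((l:ℝ)/2 - (n:ℝ))) := by
    intro n
    have himg : (fun y => ϖ ^ n * y) '' pF ord 0 = pF ord n := by
      ext x
      constructor
      · rintro ⟨y, hy, rfl⟩
        by_cases hy0 : y = 0
        · simpa [hy0] using hA0 n
        · refine Or.inr ?_
          rw [hord_mul _ _ (hzpow0 n) hy0, hzpow n]
          have := (hAmem 0 y hy0).mp hy; omega
      · intro hx
        by_cases hx0 : x = 0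
        · exact ⟨0, hA0 0, by simp [hx0]⟩
        · refine ⟨ϖ ^ (-n) * x, ?_, ?_⟩
          · refine Or.inr ?_
            rw [hord_mul _ _ (hzpow0 _) hx0, hzpow]
            have := (hAmem n x hx0).mp hx; omega
          · show ϖ ^ n * (ϖ ^ (-n) * x) = x
            rw [← mul_assoc, ← zpow_add₀ hϖ0]; simp
    have h := hμscale (ϖ ^ n) (hzpow0 n) (pF ord 0)
    rw [himg, hμψ, habsR _ (hzpow0 n), hzpow n] at h
    rw [h, ← ENNReal.ofReal_mul (by positivity), ← Real.rpow_add q0]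
    rw [show -(n:ℝ) + (l:ℝ)/2 = (l:ℝ)/2 - (n:ℝ) by ring]
  have hshell_eq : ∀ n : ℤ, {x : F | x ≠ 0 ∧ ord x = n} = pF ord n \ pF ord (n+1) := by
    intro n; ext x
    simp only [Set.mem_setOf_eq, Set.mem_diff]
    constructor
    · rintro ⟨hx0, hord⟩
      refine ⟨Or.inr (by omega), ?_⟩
      intro h
      have := (hAmem (n+1) x hx0).mp h; omega
    · rintro ⟨h1, h2⟩
      have hx0 : x ≠ 0 := fun h => h2 (by simpa [h] using hA0 (n+1))
      have h3 := (hAmem n x hx0).mp h1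
      have h4 : ¬ (n+1 ≤ ord x) := fun h => h2 (Or.inr h)
      exact ⟨hx0, by omega⟩
  have hshell_meas : ∀ n : ℤ, MeasurableSet {x : F | x ≠ 0 ∧ ord x = n} := by
    intro n; rw [hshell_eq n]; exact (hAmeas n).diff (hAmeas (n+1))
  have habs_meas : Measurable (absF q ord) := by
    intro t _
    have hdecomp : absF q ord ⁻¹' t =
        ({x : F | x = 0} ∩ absF q ord ⁻¹' t) ∪
          ⋃ n : ℤ, ({x : F | x ≠ 0 ∧ ord x = n} ∩ absF q ord ⁻¹' t) := by
      ext x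
      by_cases hx : x = 0
      · simp [hx]
      · simp only [Set.mem_union, Set.mem_inter_iff, Set.mem_iUnion, Set.mem_setOf_eq,
          Set.mem_preimage]
        constructor
        · intro h; exact Or.inr ⟨ord x, ⟨hx, rfl⟩, h⟩
        · rintro (⟨h, -⟩ | ⟨n, ⟨-, -⟩, h⟩)
          · exact absurd h hx
          · exact h
    rw [hdecomp]
    apply MeasurableSet.union
    · by_cases h0 : absF q ord 0 ∈ t
      · have heq : {x : F | x = 0} ∩ absF q ord ⁻¹' t = {x : F | x = 0} := by
          apply Set.inter_eq_left.mpr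
          rintro x (rfl : x = 0); exact h0
        rw [heq, Set.setOf_eq_eq_singleton]; exact h0meas
      · have heq : {x : F | x = 0} ∩ absF q ord ⁻¹' t = ∅ := by
          ext x
          simp only [Set.mem_inter_iff, Set.mem_setOf_eq, Set.mem_empty_iff_false, iff_false,
            Set.mem_preimage, not_and]
          rintro rfl h; exact h0 h
        rw [heq]; exact MeasurableSet.empty
    · apply MeasurableSet.iUnion
      intro n
      by_cases hn : (q:ℝ) ^ (-(n:ℝ)) ∈ t
      · have heq : {x : F | x ≠ 0 ∧ ord x = n} ∩ absF q ord ⁻¹' t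
            = {x : F | x ≠ 0 ∧ ord x = n} := by
          apply Set.inter_eq_left.mpr
          rintro x ⟨hx0, hord⟩
          show absF q ord x ∈ t
          rw [habsR x hx0, hord]; exact hn
        rw [heq]; exact hshell_meas n
      · have heq : {x : F | x ≠ 0 ∧ ord x = n} ∩ absF q ord ⁻¹' t = ∅ := by
          ext x
          simp only [Set.mem_inter_iff, Set.mem_setOf_eq, Set.mem_empty_iff_false, iff_false,
            Set.mem_preimage, not_and]
          rintro ⟨hx0, hord⟩ h
          exact hn (by rw [← hord, ← habsR x hx0]; exact h)
        rw [heq]; exact MeasurableSet.empty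
  -- the set S from the goal
  set S : Set F := {x : F | x ≠ 0 ∧ l - N ≤ ord x} with hS_def
  have hSmeas : MeasurableSet S := by
    have h : S = pF ord (l - N) \ {0} := by
      ext x
      simp only [hS_def, Set.mem_setOf_eq, Set.mem_diff, Set.mem_singleton_iff]
      constructor
      · rintro ⟨hx0, h⟩; exact ⟨Or.inr h, hx0⟩
      · rintro ⟨h, hx0⟩; exact ⟨hx0, (hAmem _ x hx0).mp h⟩
    rw [h]; exact (hAmeas _).diff h0meas
  -- the set U = 1 + 𝔭^N and the test function f
  set U : Set F := {x : F | x - 1 ∈ pF ord N} with hU_def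
  have hUopen : IsOpen U := by
    have : U = (fun x : F => x - 1) ⁻¹' pF ord N := rfl
    rw [this]
    exact (hopen N).preimage (continuous_id.sub continuous_const)
  have hUclosed : IsClosed U := by
    have : U = (fun x : F => x - 1) ⁻¹' pF ord N := rfl
    rw [this]
    exact (hAclosed N).preimage (continuous_id.sub continuous_const)
  have hUmeas : MeasurableSet U := hUopen.measurableSet
  have hUmem : ∀ x ∈ U, x ≠ 0 ∧ ord x = 0 := by
    intro x hx
    have hx' : x - 1 ∈ pF ord N := hx
    by_cases h1 : x = 1
    · exact ⟨by rw [h1]; exact one_ne_zero, by rw [h1]; exact hord1⟩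
    · have hd0 : x - 1 ≠ 0 := sub_ne_zero.mpr h1
      have hdN : N ≤ ord (x - 1) := (hAmem N _ hd0).mp hx'
      have hx0 : x ≠ 0 := by
        rintro rfl
        have : (0:F) - 1 = -1 := by ring
        rw [this] at hx'
        have := (hAmem N _ (by simp)).mp hx'
        rw [hordn1] at this; omega
      have hge : 0 ≤ ord x := by
        have h := hord_add (x - 1) 1 hd0 one_ne_zero (by simpa using hx0)
        rw [sub_add_cancel] at h
        rw [hord1] at h; omega
      have hle : ord x ≤ 0 := by
        have hne : -(x-1) ≠ 0 := neg_ne_zero.mpr hd0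
        have h := hord_add x (-(x-1)) hx0 hne (by simp)
        have hxx : x + -(x - 1) = 1 := by ring
        rw [hxx, hord1, hordneg _ hd0] at h
        omega
      exact ⟨hx0, by omega⟩
  have hUA0 : U ⊆ pF ord 0 := by
    intro x hx
    exact Or.inr (le_of_eq (hUmem x hx).2.symm)
  have hUeq : U = (fun x : F => (-1:F) + x) ⁻¹' pF ord N := by
    ext x
    show x - 1 ∈ pF ord N ↔ -1 + x ∈ pF ord N
    rw [sub_eq_neg_add, add_comm]
  set c : ℝ := (q:ℝ) ^ ((l:ℝ)/2 - (N:ℝ)) with hc_def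
  have hc_pos : 0 < c := Real.rpow_pos_of_pos q0 _
  have hμU : μψ U = ENNReal.ofReal c := by
    rw [hUeq, measure_preimage_add, hμA N]
  set f : F → ℂ := U.indicator (fun _ => 1) with hf_def
  have hf_lc : IsLocallyConstant f := by
    rw [IsLocallyConstant.iff_exists_open]
    intro x
    by_cases hx : x ∈ U
    · refine ⟨U, hUopen, hx, fun x' hx' => ?_⟩
      rw [hf_def, Set.indicator_of_mem hx', Set.indicator_of_mem hx]
    · refine ⟨Uᶜ, hUclosed.isOpen_compl, hx, fun x' hx' => ?_⟩
      rw [hf_def, Set.indicator_of_notMem hx', Set.indicator_of_notMem hx]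
  have hf_cs : HasCompactSupport f := by
    have h1 : tsupport f ⊆ U :=
      closure_minimal Set.support_indicator_subset hUclosed
    exact IsCompact.of_isClosed_subset (hcompact 0) (isClosed_closure)
      (h1.trans hUA0)
  -- vanishing of character sums over large fractional ideals
  have hvanish : ∀ m : ℤ, m ≤ l - 1 → ∫ z in pF ord m, ψ z ∂μψ = 0 := by
    intro m hm
    obtain ⟨x0, hx0A, hx0ψ⟩ := hl.2
    have hx0m : x0 ∈ pF ord m := hAmono hm hx0A
    set g : F → ℂ := (pF ord m).indicator ψ with hg_def
    have h1 : ∫ z, g z ∂μψ = ∫ z in pF ord m, ψ z ∂μψ := integral_indicator (hAmeas m)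
    have h2 : ∀ z, g (x0 + z) = ψ x0 * g z := by
      intro z
      by_cases hz : z ∈ pF ord m
      · rw [hg_def, Set.indicator_of_mem (hAadd m x0 hx0m z hz),
          Set.indicator_of_mem hz, hψadd]
      · rw [hg_def, Set.indicator_of_notMem hz, Set.indicator_of_notMem, mul_zero]
        intro hmem
        apply hz
        have h3 := hAadd m _ (hAneg m x0 hx0m) _ hmem
        rwa [neg_add_cancel_left] at h3
    have h3 : ∫ z, g z ∂μψ = ψ x0 * ∫ z, g z ∂μψ := by
      conv_lhs => rw [← integral_add_left_eq_self g x0]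
      simp_rw [h2]
      rw [integral_const_mul]
    have h4 : (1 - ψ x0) * ∫ z, g z ∂μψ = 0 := by
      rw [sub_mul, one_mul, ← h3, sub_self]
    rcases mul_eq_zero.mp h4 with h5 | h5
    · exact absurd (by linear_combination -h5 : ψ x0 = 1) hx0ψ
    · rw [← h1]; exact h5
  -- scaling of μψ under multiplication
  have hmap : ∀ a : F, a ≠ 0 →
      Measure.map (fun z : F => a * z) μψ = ENNReal.ofReal (absF q ord a⁻¹) • μψ := by
    intro a ha
    ext t ht
    rw [Measure.map_apply (continuous_mul_left a).measurable ht, Measure.smul_apply,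
      smul_eq_mul]
    have hpre : (fun z : F => a * z) ⁻¹' t = (fun z : F => a⁻¹ * z) '' t := by
      ext z
      simp only [Set.mem_preimage, Set.mem_image]
      constructor
      · intro h
        exact ⟨a * z, h, by field_simp⟩
      · rintro ⟨w, hw, rfl⟩
        have : a * (a⁻¹ * w) = w := by field_simp
        rwa [this]
    rw [hpre, hμscale a⁻¹ (inv_ne_zero ha) t]
  -- Fourier transform of f
  have hFT : ∀ x : F, x ≠ 0 →
      FT ψ μψ f x = if l - N ≤ ord x then (c:ℂ) * ψ x else 0 := by
    intro x hx
    have step1 : FT ψ μψ f x = ∫ y, U.indicator (fun y => ψ (x*y)) y ∂μψ := by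
      show (∫ y, f y * ψ (x * y) ∂μψ) = _
      congr 1
      funext y
      by_cases hy : y ∈ U
      · rw [hf_def, Set.indicator_of_mem hy, Set.indicator_of_mem hy, one_mul]
      · rw [hf_def, Set.indicator_of_notMem hy, Set.indicator_of_notMem hy, zero_mul]
    have step2 : (∫ y, U.indicator (fun y => ψ (x*y)) y ∂μψ)
        = ∫ z, U.indicator (fun y => ψ (x*y)) (1 + z) ∂μψ :=
      (integral_add_left_eq_self (U.indicator (fun y => ψ (x*y))) 1).symm
    have step3 : ∀ z : F, U.indicator (fun y => ψ (x*y)) (1 + z)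
        = ψ x * (pF ord N).indicator (fun z => ψ (x * z)) z := by
      intro z
      have hz : (1 + z ∈ U) ↔ z ∈ pF ord N := by
        show (1 + z) - 1 ∈ pF ord N ↔ z ∈ pF ord N
        rw [add_sub_cancel_left]
      by_cases h : z ∈ pF ord N
      · rw [Set.indicator_of_mem (hz.mpr h), Set.indicator_of_mem h,
          mul_one_add, hψadd]
      · rw [Set.indicator_of_notMem (fun hc => h (hz.mp hc)),
          Set.indicator_of_notMem h, mul_zero]
    have step4 : FT ψ μψ f x
        = ψ x * ∫ z, (pF ord N).indicator (fun z => ψ (x * z)) z ∂μψ := by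
      rw [step1, step2]
      simp_rw [step3]
      rw [integral_const_mul]
    by_cases hord : l - N ≤ ord x
    · rw [if_pos hord, step4]
      have hind : ∀ z : F, (pF ord N).indicator (fun z => ψ (x * z)) z
          = (pF ord N).indicator (fun _ => (1:ℂ)) z := by
        intro z
        by_cases hz : z ∈ pF ord N
        · rw [Set.indicator_of_mem hz, Set.indicator_of_mem hz]
          apply hl.1
          by_cases hz0 : z = 0
          · rw [hz0, mul_zero]; exact hA0 l
          · refine Or.inr ?_
            rw [hord_mul x z hx hz0]
            have := (hAmem N z hz0).mp hz
            omega
        · rw [Set.indicator_of_notMem hz, Set.indicator_of_notMem hz]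
      simp_rw [hind]
      rw [integral_indicator_const (1:ℂ) (hAmeas N), measureReal_def, hμA N]
      rw [ENNReal.toReal_ofReal (le_of_lt hc_pos)]
      rw [real_smul, mul_one]
      ring
    · rw [if_neg hord, step4]
      have hkey : (∫ z, (pF ord N).indicator (fun z => ψ (x * z)) z ∂μψ) = 0 := by
        set h : F → ℂ := (pF ord (N + ord x)).indicator ψ with hh_def
        have hmeas_h : Measurable h :=
          Measurable.indicator hψc.measurable (hAmeas _)
        have heq : ∀ z : F, (pF ord N).indicator (fun z => ψ (x * z)) z = h (x * z) := by
          intro z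
          by_cases hz : z ∈ pF ord N
          · rw [Set.indicator_of_mem hz, hh_def, Set.indicator_of_mem]
            by_cases hz0 : z = 0
            · rw [hz0, mul_zero]; exact hA0 _
            · refine Or.inr ?_
              rw [hord_mul x z hx hz0]
              have := (hAmem N z hz0).mp hz
              omega
          · have hz0 : z ≠ 0 := fun h0 => hz (by rw [h0]; exact hA0 N)
            rw [Set.indicator_of_notMem hz, hh_def, Set.indicator_of_notMem]
            intro hmem
            apply hz
            have hxz : x * z ≠ 0 := mul_ne_zero hx hz0
            have h1 := (hAmem _ _ hxz).mp hmem
            rw [hord_mul x z hx hz0] at h1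
            exact Or.inr (by omega)
        simp_rw [heq]
        have hcv : (∫ z, h (x * z) ∂μψ) = ∫ w, h w ∂(Measure.map (fun z : F => x * z) μψ) :=
          (integral_map (continuous_mul_left x).measurable.aemeasurable
            hmeas_h.aestronglyMeasurable).symm
        rw [hcv, hmap x hx, integral_smul_measure]
        have hvan : (∫ w, h w ∂μψ) = 0 := by
          rw [hh_def, integral_indicator (hAmeas _)]
          exact hvanish (N + ord x) (by omega)
        rw [hvan, smul_zero]
      rw [hkey, mul_zero]
  -- integrals against the multiplicative measure
  set ρ : F → NNReal := fun x => ((q:ℝ)/((q:ℝ)-1) * (absF q ord x)⁻¹).toNNReal with hρ_def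
  have hρmeas : Measurable ρ := (measurable_const.mul habs_meas.inv).real_toNNReal
  have hmul_int : ∀ g : F → ℂ,
      (∫ x, g x ∂(mulMeasure q ord μψ)) = ∫ x, ((ρ x : ℝ)) • g x ∂μψ := by
    intro g
    have hd : mulMeasure q ord μψ = μψ.withDensity (fun x => ((ρ x : NNReal) : ENNReal)) := rfl
    rw [hd, integral_withDensity_eq_integral_smul hρmeas]
    simp_rw [NNReal.smul_def]
  have hq1 : (0:ℝ) < (q:ℝ)/((q:ℝ)-1) := by
    apply div_pos (by linarith) (by linarith)
  set K : ℝ := (q:ℝ)/((q:ℝ)-1) * c with hK_def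
  have hK_pos : 0 < K := mul_pos hq1 hc_pos
  -- zeta(s, χ, f)
  have hzeta1 : zetaF q ord μψ χ s f = (K:ℂ) := by
    show (∫ x, f x * χ x * ((absF q ord x : ℝ) : ℂ) ^ s ∂(mulMeasure q ord μψ)) = (K:ℂ)
    have hind : (fun x => f x * χ x * ((absF q ord x : ℝ) : ℂ) ^ s)
        = U.indicator (fun _ => (1:ℂ)) := by
      funext x
      by_cases hx : x ∈ U
      · obtain ⟨hx0, hordx⟩ := hUmem x hx
        have habs1 : absF q ord x = 1 := by
          rw [habsR x hx0, hordx]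
          norm_num
        rw [hf_def]
        simp only [Set.indicator_of_mem hx]
        rw [hχN x hx, habs1]
        norm_num
      · rw [hf_def]
        simp only [Set.indicator_of_notMem hx]
        rw [zero_mul, zero_mul]
    rw [hind, integral_indicator_const (1:ℂ) hUmeas]
    have hmulU : mulMeasure q ord μψ U = ENNReal.ofReal K := by
      show (μψ.withDensity fun x =>
        ENNReal.ofReal ((q : ℝ) / ((q : ℝ) - 1) * (absF q ord x)⁻¹)) U = ENNReal.ofReal K
      rw [withDensity_apply _ hUmeas]
      have hcongr : ∫⁻ x in U, ENNReal.ofReal ((q : ℝ) / ((q : ℝ) - 1) * (absF q ord x)⁻¹) ∂μψ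
          = ∫⁻ _ in U, ENNReal.ofReal ((q : ℝ) / ((q : ℝ) - 1)) ∂μψ := by
        apply setLIntegral_congr_fun hUmeas
        intro x hx
        obtain ⟨hx0, hordx⟩ := hUmem x hx
        have habs1 : absF q ord x = 1 := by
          rw [habsR x hx0, hordx]; norm_num
        simp only [habs1]; norm_num
      rw [hcongr, setLIntegral_const, hμU, ← ENNReal.ofReal_mul (le_of_lt hq1)]
    rw [measureReal_def, hmulU, ENNReal.toReal_ofReal (le_of_lt hK_pos), real_smul, mul_one]
  set φ : F → ℂ := fun x => (χ x)⁻¹ * ((absF q ord x : ℝ) : ℂ) ^ (-s) * ψ x with hφ_def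
  have hzeta2 : zetaF q ord μψ (fun x => (χ x)⁻¹) (1-s) (FT ψ μψ f)
      = (K:ℂ) * ∫ x in S, φ x ∂μψ := by
    show (∫ x, FT ψ μψ f x * (χ x)⁻¹ * ((absF q ord x : ℝ) : ℂ) ^ ((1:ℂ)-s)
        ∂(mulMeasure q ord μψ)) = (K:ℂ) * ∫ x in S, φ x ∂μψ
    rw [hmul_int]
    have hpt : ∀ x : F, ((ρ x : ℝ)) • (FT ψ μψ f x * (χ x)⁻¹
        * ((absF q ord x : ℝ) : ℂ) ^ ((1:ℂ)-s)) = K • S.indicator φ x := by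
      intro x
      by_cases hx : x = 0
      · subst hx
        have hρ0 : ((ρ 0 : ℝ)) = 0 := by
          rw [hρ_def]
          simp [habs0]
        have h0S : (0:F) ∉ S := fun h => h.1 rfl
        rw [hρ0, Set.indicator_of_notMem h0S, zero_smul, smul_zero]
      · have hv : 0 < absF q ord x := habs_pos x hx
        have hρx : ((ρ x : ℝ)) = (q:ℝ)/((q:ℝ)-1) * (absF q ord x)⁻¹ :=
          Real.coe_toNNReal _ (by positivity)
        by_cases hxS : x ∈ S
        · have hordx : l - N ≤ ord x := hxS.2
          rw [hFT x hx, if_pos hordx, Set.indicator_of_mem hxS, hφ_def]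
          have hvne : ((absF q ord x : ℝ) : ℂ) ≠ 0 := by
            exact_mod_cast ne_of_gt hv
          have hcpow : ((absF q ord x : ℝ) : ℂ) ^ ((1:ℂ)-s)
              = ((absF q ord x : ℝ) : ℂ) * ((absF q ord x : ℝ) : ℂ) ^ (-s) := by
            rw [show (1:ℂ) - s = 1 + -s by ring, cpow_add _ _ hvne, cpow_one]
          have hvv : ((absF q ord x : ℝ) : ℂ)⁻¹ * ((absF q ord x : ℝ) : ℂ) = 1 :=
            inv_mul_cancel₀ hvne
          rw [hcpow, real_smul, real_smul, hρx, hK_def, Complex.ofReal_mul,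
            Complex.ofReal_mul, Complex.ofReal_inv]
          linear_combination (((((q:ℝ)/((q:ℝ)-1) : ℝ)) : ℂ) * ((c:ℝ):ℂ) * ψ x * (χ x)⁻¹
            * ((absF q ord x : ℝ):ℂ) ^ (-s)) * hvv
        · rw [hFT x hx, if_neg (fun h => hxS ⟨hx, h⟩), Set.indicator_of_notMem hxS]
          rw [zero_mul, zero_mul, smul_zero, smul_zero]
    rw [show (fun x => ((ρ x : ℝ)) • (FT ψ μψ f x * (χ x)⁻¹
        * ((absF q ord x : ℝ) : ℂ) ^ ((1:ℂ)-s))) = fun x => K • S.indicator φ x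
      from funext hpt]
    rw [integral_smul, integral_indicator hSmeas, real_smul]
  -- integrability over S
  have hSunion : S = ⋃ k : ℕ, {x : F | x ≠ 0 ∧ ord x = l - N + (k:ℤ)} := by
    ext x
    simp only [Set.mem_iUnion, Set.mem_setOf_eq, hS_def]
    constructor
    · rintro ⟨hx0, h⟩
      exact ⟨(ord x - (l - N)).toNat, hx0, by omega⟩
    · rintro ⟨k, hx0, h⟩
      exact ⟨hx0, by omega⟩
  obtain ⟨C0, hC0⟩ := (hcompact (l - N)).exists_bound_of_continuousOn hψc.continuousOn
  set C : ℝ := max C0 1 with hC_def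
  have hC1 : 0 < C := lt_of_lt_of_le one_pos (le_max_right _ _)
  have hψbound : ∀ x ∈ S, ‖ψ x‖ ≤ C := by
    intro x hx
    exact le_trans (hC0 x (Or.inr hx.2)) (le_max_left _ _)
  set a : ℝ := σ + s.re with ha_def
  have hnorm : ∀ x ∈ S, ‖φ x‖ = (q:ℝ) ^ ((ord x : ℝ) * a) * ‖ψ x‖ := by
    intro x hx
    have hx0 : x ≠ 0 := hx.1
    have hv : 0 < absF q ord x := habs_pos x hx0
    rw [hφ_def]
    rw [norm_mul, norm_mul]
    have h1 : ‖(χ x)⁻¹‖ = absF q ord x ^ (-σ) := by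
      rw [norm_inv, hσ x hx0, ← Real.rpow_neg (le_of_lt hv)]
    have h2 : ‖((absF q ord x : ℝ):ℂ) ^ (-s)‖ = absF q ord x ^ (-s.re) := by
      rw [Complex.norm_cpow_eq_rpow_re_of_pos hv, Complex.neg_re]
    rw [h1, h2, ← Real.rpow_add hv, habsR x hx0, ← Real.rpow_mul (le_of_lt q0)]
    rw [show -(ord x:ℝ) * (-σ + -s.re) = (ord x:ℝ) * a by rw [ha_def]; ring]
  set t0 : ℝ := 1 - a with ht0_def
  have ht0 : 0 < t0 := by rw [ht0_def, ha_def]; linarith [hs2]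
  set r : ℝ := (q:ℝ) ^ (-t0) with hr_def
  have hr0 : 0 ≤ r := le_of_lt (Real.rpow_pos_of_pos q0 _)
  have hr1 : r < 1 := Real.rpow_lt_one_of_one_lt_of_neg q1 (by linarith)
  set D : ℝ := C * (q:ℝ) ^ (((l:ℝ) - (N:ℝ)) * a) * (q:ℝ) ^ ((l:ℝ)/2 - ((l:ℝ) - (N:ℝ)))
    with hD_def
  have hD0 : 0 ≤ D := by
    rw [hD_def]
    positivity
  have hqpow_add : ∀ u v : ℝ, (q:ℝ) ^ (u + v) = (q:ℝ) ^ u * (q:ℝ) ^ v :=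
    fun u v => Real.rpow_add q0 u v
  have hterm : ∀ k : ℕ,
      (∫⁻ x in {x : F | x ≠ 0 ∧ ord x = l - N + (k:ℤ)}, ‖φ x‖₊ ∂μψ)
        ≤ ENNReal.ofReal (D * r ^ k) := by
    intro k
    have hb : ∀ x ∈ {x : F | x ≠ 0 ∧ ord x = l - N + (k:ℤ)}, (‖φ x‖₊ : ENNReal)
        ≤ ENNReal.ofReal (C * (q:ℝ) ^ ((((l - N + (k:ℤ)) : ℤ):ℝ) * a)) := by
      intro x hx
      have hxS : x ∈ S := ⟨hx.1, by have := hx.2; omega⟩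
      rw [← enorm_eq_nnnorm, ← ofReal_norm_eq_enorm]
      apply ENNReal.ofReal_le_ofReal
      rw [hnorm x hxS, hx.2]
      calc (q:ℝ) ^ ((((l - N + (k:ℤ)) : ℤ):ℝ) * a) * ‖ψ x‖
          ≤ (q:ℝ) ^ ((((l - N + (k:ℤ)) : ℤ):ℝ) * a) * C :=
            mul_le_mul_of_nonneg_left (hψbound x hxS)
              (le_of_lt (Real.rpow_pos_of_pos q0 _))
        _ = C * (q:ℝ) ^ ((((l - N + (k:ℤ)) : ℤ):ℝ) * a) := mul_comm _ _
    calc (∫⁻ x in {x : F | x ≠ 0 ∧ ord x = l - N + (k:ℤ)}, (‖φ x‖₊ : ENNReal) ∂μψ)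
        ≤ ∫⁻ _ in {x : F | x ≠ 0 ∧ ord x = l - N + (k:ℤ)},
            ENNReal.ofReal (C * (q:ℝ) ^ ((((l - N + (k:ℤ)) : ℤ):ℝ) * a)) ∂μψ :=
          setLIntegral_mono measurable_const hb
      _ = ENNReal.ofReal (C * (q:ℝ) ^ ((((l - N + (k:ℤ)) : ℤ):ℝ) * a))
            * μψ {x : F | x ≠ 0 ∧ ord x = l - N + (k:ℤ)} := setLIntegral_const _ _
      _ ≤ ENNReal.ofReal (C * (q:ℝ) ^ ((((l - N + (k:ℤ)) : ℤ):ℝ) * a))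
            * ENNReal.ofReal ((q:ℝ) ^ ((l:ℝ)/2 - (((l - N + (k:ℤ)) : ℤ):ℝ))) := by
          apply mul_le_mul_right
          rw [hshell_eq (l - N + (k:ℤ))]
          exact le_trans (measure_mono Set.diff_subset) (le_of_eq (hμA _))
      _ = ENNReal.ofReal (C * (q:ℝ) ^ ((((l - N + (k:ℤ)) : ℤ):ℝ) * a)
            * (q:ℝ) ^ ((l:ℝ)/2 - (((l - N + (k:ℤ)) : ℤ):ℝ))) := by
          rw [← ENNReal.ofReal_mul (by positivity)]
      _ = ENNReal.ofReal (D * r ^ k) := by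
          congr 1
          have hcast : ((((l - N + (k:ℤ)) : ℤ)):ℝ) = (l:ℝ) - (N:ℝ) + (k:ℕ) := by
            push_cast; ring
          have expand : D * r ^ k = C * (q:ℝ) ^ (((l:ℝ) - (N:ℝ)) * a
              + ((l:ℝ)/2 - ((l:ℝ) - (N:ℝ))) + (-t0 * (k:ℕ))) := by
            rw [hD_def, hr_def, ← Real.rpow_natCast ((q:ℝ) ^ (-t0)) k,
              ← Real.rpow_mul (le_of_lt q0), hqpow_add, hqpow_add]
            ring
          rw [expand, hcast, mul_assoc, ← hqpow_add]
          congr 1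
          rw [ht0_def]
          ring
  have hsum : (∫⁻ x in S, (‖φ x‖₊ : ENNReal) ∂μψ) < ⊤ := by
    rw [hSunion]
    apply lt_of_le_of_lt (lintegral_iUnion_le _ _)
    apply lt_of_le_of_lt (ENNReal.tsum_le_tsum hterm)
    have heq : ∀ k : ℕ, ENNReal.ofReal (D * r ^ k)
        = ENNReal.ofReal D * ENNReal.ofReal r ^ k := by
      intro k
      rw [ENNReal.ofReal_mul hD0, ENNReal.ofReal_pow hr0]
    rw [tsum_congr heq, ENNReal.tsum_mul_left, ENNReal.tsum_geometric]
    apply ENNReal.mul_lt_top ENNReal.ofReal_lt_top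
    rw [ENNReal.inv_lt_top]
    exact tsub_pos_of_lt (ENNReal.ofReal_lt_one.mpr hr1)
  have hIntOn : IntegrableOn φ S μψ := by
    constructor
    · have hSsub : S ⊆ {x : F | x ≠ 0} := fun x hx => hx.1
      have h1 : ContinuousOn (fun x : F => (χ x)⁻¹) S :=
        ContinuousOn.inv₀ (hχc.mono hSsub) (fun x hx => hχne x hx.1)
      have h2 : AEStronglyMeasurable (fun x : F => (χ x)⁻¹) (μψ.restrict S) :=
        h1.aestronglyMeasurable hSmeas
      have h3 : Measurable (fun x : F => ((absF q ord x : ℝ):ℂ) ^ (-s)) :=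
        (measurable_cpow_const' (-s)).comp (Complex.measurable_ofReal.comp habs_meas)
      exact (h2.mul h3.aestronglyMeasurable).mul hψc.measurable.aestronglyMeasurable
    · exact hsum
  refine ⟨hIntOn, ?_⟩
  have hFE := hΓ f hf_lc hf_cs s hs1 hs2
  rw [hzeta1, hzeta2] at hFE
  have hKne : (K:ℂ) ≠ 0 := by
    exact_mod_cast ne_of_gt hK_pos
  exact mul_left_cancel₀ hKne (hFE.trans (mul_comm _ _))
end
end

section
/- Properties of abelian root numbers: for every continuous character χ : F^× → ℂ^×, (a) ε(s,χ,ψ) · ε(1−s, χ⁻¹, ψ̄) = 1, where ψ̄ = ψ^{−1} is the conjugate additive character x ↦ ψ(−x); and (b) for every a ∈ F^×, ε(s,χ,ψ^a) = χ(a) |a|_F^{s − 1/2} ε(s,χ,ψ). -/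
open MeasureTheory Complex
open scoped Classical

noncomputable section

/-- The root number `ε(s,χ,ψ) = γ(s,χ,ψ) L(s,χ) / L(1-s,χ⁻¹)`, where the
γ-factor is realized as `Γ(q^{-s})` for a rational function `Γ ∈ ℂ(X)`. -/
def epsFactor {F : Type*} [Field F] (q : ℕ) (ord : F → ℤ) (ϖ : F)
    (Γ : RatFunc ℂ) (χ : F → ℂ) (s : ℂ) : ℂ :=
  RatFunc.eval (RingHom.id ℂ) ((q : ℂ) ^ (-s)) Γ * Lfactor q ord ϖ χ s /
    Lfactor q ord ϖ (fun x => (χ x)⁻¹) (1 - s)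

/-- If all positive powers of `z` stay within `1/2` of `1`, then `z = 1`. -/
lemma aux_pow_half (z : ℂ) (h : ∀ j : ℕ, 1 ≤ j → ‖z ^ j - 1‖ < 1/2) : z = 1 := by
  by_contra hz
  have hzpos : 0 < ‖z - 1‖ := by
    rw [norm_pos_iff]
    exact sub_ne_zero.mpr hz
  have key : ∀ k : ℕ, (3/2 : ℝ) ^ k * ‖z - 1‖ ≤ ‖z ^ (2 ^ k) - 1‖ := by
    intro k
    induction k with
    | zero => simp
    | succ k ih =>
      have h2k : 1 ≤ 2 ^ k := Nat.one_le_two_pow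
      have hlt : ‖z ^ 2 ^ k - 1‖ < 1/2 := h _ h2k
      have htri : ‖(z ^ 2 ^ k + 1) - (z ^ 2 ^ k - 1)‖
          ≤ ‖z ^ 2 ^ k + 1‖ + ‖z ^ 2 ^ k - 1‖ := by
        rw [sub_eq_add_neg]
        calc ‖(z ^ 2 ^ k + 1) + -(z ^ 2 ^ k - 1)‖
            ≤ ‖z ^ 2 ^ k + 1‖ + ‖-(z ^ 2 ^ k - 1)‖ :=
              norm_add_le _ _
          _ = ‖z ^ 2 ^ k + 1‖ + ‖z ^ 2 ^ k - 1‖ := by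
              rw [norm_neg]
      have h2 : ((z ^ 2 ^ k + 1) - (z ^ 2 ^ k - 1)) = 2 := by ring
      rw [h2, Complex.norm_two] at htri
      have hge : (3/2 : ℝ) ≤ ‖z ^ 2 ^ k + 1‖ := by linarith
      calc (3/2 : ℝ) ^ (k+1) * ‖z - 1‖
          = (3/2) * ((3/2 : ℝ) ^ k * ‖z - 1‖) := by ring
        _ ≤ (3/2) * ‖z ^ 2 ^ k - 1‖ := by
            apply mul_le_mul_of_nonneg_left ih (by norm_num)
        _ ≤ ‖z ^ 2 ^ k + 1‖ * ‖z ^ 2 ^ k - 1‖ := by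
            apply mul_le_mul_of_nonneg_right hge (norm_nonneg _)
        _ = ‖z ^ (2 ^ (k+1)) - 1‖ := by
            rw [← norm_mul]
            congr 1
            rw [pow_succ, pow_mul]
            ring
  obtain ⟨k, hk⟩ := pow_unbounded_of_one_lt ((1/2) / ‖z - 1‖) (by norm_num : (1:ℝ) < 3/2)
  have hgt : (1/2 : ℝ) < (3/2 : ℝ) ^ k * ‖z - 1‖ := by
    rw [div_lt_iff₀ hzpos] at hk
    linarith
  have := key k
  have hcontra := h (2 ^ k) Nat.one_le_two_pow
  linarith

/-- Context: `F` is a non-archimedean local field with normalized additive valuation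
`ord`, uniformizer `ϖ`, residue cardinality `q`, a continuous non-trivial additive
character `ψ` of level `l`, and Haar measure `μψ` normalized by `μψ(𝒪_F) = q^{l/2}`. -/
theorem root_number_properties
    (F : Type) [Field F] [TopologicalSpace F] [IsTopologicalRing F]
    [LocallyCompactSpace F] [MeasurableSpace F] [BorelSpace F]
    (q : ℕ) (hq : 1 < q)
    (ord : F → ℤ)
    (hord_mul : ∀ x y : F, x ≠ 0 → y ≠ 0 → ord (x * y) = ord x + ord y)
    (hord_add : ∀ x y : F, x ≠ 0 → y ≠ 0 → x + y ≠ 0 →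
      min (ord x) (ord y) ≤ ord (x + y))
    (ϖ : F) (hϖ0 : ϖ ≠ 0) (hϖ1 : ord ϖ = 1)
    (hcompact : ∀ n : ℤ, IsCompact (pF ord n))
    (hopen : ∀ n : ℤ, IsOpen (pF ord n))
    (ψ : F → ℂ) (hψ : IsAddCharF ψ)
    (l : ℤ) (hl : IsLevel ord ψ l)
    (μψ : Measure F) [μψ.IsAddHaarMeasure]
    (hμψ : μψ (pF ord 0) = ENNReal.ofReal ((q : ℝ) ^ ((l : ℝ) / 2)))
    (hμscale : ∀ a : F, a ≠ 0 → ∀ A : Set F,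
      μψ ((a * ·) '' A) = ENNReal.ofReal (absF q ord a) * μψ A)
    (χ : F → ℂ) (hχ : IsMultCharF χ)
    (σ : ℝ) (hσ : ∀ x : F, x ≠ 0 → ‖χ x‖ = (absF q ord x) ^ σ)
    (a : F) (ha : a ≠ 0)
    -- `μa` is the Haar measure normalized according to the level `l - ord a` of `ψ^a`
    (μa : Measure F) [μa.IsAddHaarMeasure]
    (hμa : μa (pF ord 0) = ENNReal.ofReal ((q : ℝ) ^ (((l - ord a : ℤ) : ℝ) / 2)))
    -- `Γ` realizes `γ(s,χ,ψ)`, `Γbar` realizes `γ(s,χ⁻¹,ψ̄)` (with `μ_{ψ̄} = μ_ψ`),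
    -- and `Γa` realizes `γ(s,χ,ψ^a)`
    (Γ Γbar Γa : RatFunc ℂ)
    (hΓ : TateFE q ord χ σ ψ μψ Γ)
    (hΓbar : TateFE q ord (fun x => (χ x)⁻¹) (-σ) (fun x => ψ (-x)) μψ Γbar)
    (hΓa : TateFE q ord χ σ (fun x => ψ (a * x)) μa Γa) :
    -- (a) `ε(s,χ,ψ) ε(1-s,χ⁻¹,ψ̄) = 1`
    (∀ s : ℂ, -σ < s.re → s.re < 1 - σ →
        epsFactor q ord ϖ Γ χ s *
          epsFactor q ord ϖ Γbar (fun x => (χ x)⁻¹) (1 - s) = 1) ∧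
    -- (b) `ε(s,χ,ψ^a) = χ(a) |a|_F^{s-1/2} ε(s,χ,ψ)`
    (∀ s : ℂ, -σ < s.re → s.re < 1 - σ →
        epsFactor q ord ϖ Γa χ s
          = χ a * (↑(absF q ord a) : ℂ) ^ (s - 1 / 2) *
              epsFactor q ord ϖ Γ χ s) := by
  obtain ⟨hψc, hψadd, hψne, -⟩ := hψ
  obtain ⟨hχc, hχmul, hχne⟩ := hχ
  obtain ⟨hψl, x0, hx0mem, hx0ne⟩ := hl
  set Q : ℝ := (q : ℝ) with hQdef
  have hQ1 : (1 : ℝ) < Q := by rw [hQdef]; exact_mod_cast hq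
  have hQ0 : (0 : ℝ) < Q := lt_trans one_pos hQ1
  -- basic valuation facts
  have hord1 : ord 1 = 0 := by
    have h := hord_mul 1 1 one_ne_zero one_ne_zero
    rw [mul_one] at h
    omega
  have hordneg1 : ord (-1 : F) = 0 := by
    have h := hord_mul (-1) (-1) (neg_ne_zero.mpr one_ne_zero) (neg_ne_zero.mpr one_ne_zero)
    rw [neg_mul_neg, one_mul, hord1] at h
    omega
  have hordneg : ∀ x : F, x ≠ 0 → ord (-x) = ord x := by
    intro x hx
    have h := hord_mul (-1) x (neg_ne_zero.mpr one_ne_zero) hx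
    rw [neg_one_mul] at h
    rw [h, hordneg1, zero_add]
  have hordinv : ∀ x : F, x ≠ 0 → ord x⁻¹ = -ord x := by
    intro x hx
    have h := hord_mul x x⁻¹ hx (inv_ne_zero hx)
    rw [mul_inv_cancel₀ hx, hord1] at h
    omega
  have hϖz0 : ∀ m : ℤ, (ϖ ^ m : F) ≠ 0 := fun m => zpow_ne_zero m hϖ0
  have hordϖ : ∀ m : ℤ, ord (ϖ ^ m) = m := by
    intro m
    induction m using Int.induction_on with
    | zero => rw [zpow_zero]; exact hord1
    | succ k ih =>
        rw [zpow_add_one₀ hϖ0, hord_mul _ _ (hϖz0 _) hϖ0, ih, hϖ1]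
    | pred k ih =>
        rw [zpow_sub_one₀ hϖ0, hord_mul _ _ (hϖz0 _) (inv_ne_zero hϖ0), ih,
          hordinv ϖ hϖ0, hϖ1]
        ring
  -- pF facts
  have hP0mem : ∀ n : ℤ, (0 : F) ∈ pF ord n := fun n => Or.inl rfl
  have hPmem : ∀ {n : ℤ} {x : F}, x ≠ 0 → (x ∈ pF ord n ↔ n ≤ ord x) := by
    intro n x hx
    constructor
    · rintro (rfl | h)
      · exact absurd rfl hx
      · exact h
    · exact fun h => Or.inr h
  have hPanti : ∀ {m n : ℤ}, m ≤ n → pF ord n ⊆ pF ord m := by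
    rintro m n hmn x (rfl | h)
    · exact Or.inl rfl
    · exact Or.inr (le_trans hmn h)
  -- pF as an additive subgroup
  have hPadd : ∀ (n : ℤ) {x y : F}, x ∈ pF ord n → y ∈ pF ord n → x + y ∈ pF ord n := by
    intro n x y hx hy
    rcases eq_or_ne x 0 with rfl | hx0
    · simpa using hy
    rcases eq_or_ne y 0 with rfl | hy0
    · simpa using hx
    rcases eq_or_ne (x + y) 0 with h | h
    · exact Or.inl h
    · refine Or.inr (le_trans ?_ (hord_add x y hx0 hy0 h))
      exact le_min ((hPmem hx0).mp hx) ((hPmem hy0).mp hy)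
  have hPneg : ∀ (n : ℤ) {x : F}, x ∈ pF ord n → -x ∈ pF ord n := by
    intro n x hx
    rcases eq_or_ne x 0 with rfl | hx0
    · simpa using hP0mem n
    · exact Or.inr (by rw [hordneg x hx0]; exact (hPmem hx0).mp hx)
  have hPclosed : ∀ n : ℤ, IsClosed (pF ord n) := by
    intro n
    let U : AddSubgroup F :=
      { carrier := pF ord n
        zero_mem' := hP0mem n
        add_mem' := fun hx hy => hPadd n hx hy
        neg_mem' := fun hx => hPneg n hx }
    exact U.isClosed_of_isOpen (hopen n)
  have hPmeas : ∀ n : ℤ, MeasurableSet (pF ord n) := fun n => (hopen n).measurableSet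
  -- absF facts
  have habs0 : absF q ord (0 : F) = 0 := if_pos rfl
  have habs : ∀ {x : F}, x ≠ 0 → absF q ord x = Q ^ (-(ord x)) := by
    intro x hx
    unfold absF
    rw [if_neg hx]
  have habspos : ∀ {x : F}, x ≠ 0 → 0 < absF q ord x := by
    intro x hx
    rw [habs hx]
    exact zpow_pos hQ0 _
  have habsnonneg : ∀ x : F, 0 ≤ absF q ord x := by
    intro x
    rcases eq_or_ne x 0 with rfl | hx
    · rw [habs0]
    · exact (habspos hx).le
  have habsmul : ∀ x y : F, absF q ord (x * y) = absF q ord x * absF q ord y := by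
    intro x y
    rcases eq_or_ne x 0 with rfl | hx
    · rw [zero_mul, habs0, zero_mul]
    rcases eq_or_ne y 0 with rfl | hy
    · rw [mul_zero, habs0, mul_zero]
    rw [habs (mul_ne_zero hx hy), habs hx, habs hy, hord_mul x y hx hy, neg_add,
      zpow_add₀ (ne_of_gt hQ0)]
  have habsϖ : ∀ m : ℤ, absF q ord (ϖ ^ m) = Q ^ (-m) := by
    intro m
    rw [habs (hϖz0 m), hordϖ]
  -- measure of pF n
  have hPimage : ∀ n : ℤ, ((ϖ ^ n * ·) '' pF ord 0) = pF ord n := by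
    intro n
    ext x
    constructor
    · rintro ⟨y, hy, rfl⟩
      rcases eq_or_ne y 0 with rfl | hy0
      · simpa using hP0mem n
      · refine Or.inr ?_
        rw [hord_mul _ _ (hϖz0 n) hy0, hordϖ]
        have := (hPmem hy0).mp hy
        omega
    · intro hx
      rcases eq_or_ne x 0 with rfl | hx0
      · exact ⟨0, hP0mem 0, by simp⟩
      · refine ⟨ϖ ^ (-n) * x, ?_, ?_⟩
        · refine Or.inr ?_
          rw [hord_mul _ _ (hϖz0 (-n)) hx0, hordϖ]
          have := (hPmem hx0).mp hx
          omega
        · show ϖ ^ n * (ϖ ^ (-n) * x) = x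
          rw [← mul_assoc, ← zpow_add₀ hϖ0]
          simp
  have hμP : ∀ n : ℤ, μψ (pF ord n) = ENNReal.ofReal (Q ^ (-n) * Q ^ ((l : ℝ) / 2)) := by
    intro n
    rw [← hPimage n, hμscale (ϖ ^ n) (hϖz0 n), hμψ, habsϖ n,
      ← ENNReal.ofReal_mul (by positivity)]
  have hμPtoReal : ∀ n : ℤ, (μψ (pF ord n)).toReal = Q ^ (-n) * Q ^ ((l : ℝ) / 2) := by
    intro n
    rw [hμP n, ENNReal.toReal_ofReal (by positivity)]
  -- ψ facts
  have hψ0 : ψ 0 = 1 := by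
    have h := hψadd 0 0
    rw [add_zero] at h
    have := hψne 0
    field_simp at h
    tauto
  -- character sum lemma
  have hI : ∀ (n : ℤ) (x : F), (∫ y in pF ord n, ψ (x * y) ∂μψ)
      = if x ∈ pF ord (l - n) then ((μψ (pF ord n)).toReal : ℂ) else 0 := by
    intro n x
    by_cases hx : x ∈ pF ord (l - n)
    · rw [if_pos hx]
      have hone : Set.EqOn (fun y => ψ (x * y)) (fun _ => (1 : ℂ)) (pF ord n) := by
        intro y hy
        show ψ (x * y) = 1
        rcases eq_or_ne x 0 with rfl | hx0
        · rw [zero_mul, hψ0]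
        rcases eq_or_ne y 0 with rfl | hy0
        · rw [mul_zero, hψ0]
        apply hψl
        refine Or.inr ?_
        rw [hord_mul x y hx0 hy0]
        have h1 := (hPmem hx0).mp hx
        have h2 := (hPmem hy0).mp hy
        omega
      rw [setIntegral_congr_fun (hPmeas n) hone, setIntegral_const]
      simp [Measure.real_def]
    · rw [if_neg hx]
      have hx0 : x ≠ 0 := fun h => hx (h ▸ hP0mem _)
      have hordx : ord x < l - n := by
        by_contra hcon
        exact hx (Or.inr (by omega))
      have hx00 : x0 ≠ 0 := by
        intro h
        rw [h, hψ0] at hx0ne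
        exact hx0ne rfl
      set z0 : F := x⁻¹ * x0 with hz0def
      have hz00 : z0 ≠ 0 := mul_ne_zero (inv_ne_zero hx0) hx00
      have hz0mem : z0 ∈ pF ord n := by
        refine Or.inr ?_
        rw [hz0def, hord_mul _ _ (inv_ne_zero hx0) hx00, hordinv x hx0]
        have := (hPmem hx00).mp hx0mem
        omega
      have hxz0 : x * z0 = x0 := by
        rw [hz0def, ← mul_assoc, mul_inv_cancel₀ hx0, one_mul]
      have htrans := integral_add_left_eq_self
        (fun y => Set.indicator (pF ord n) (fun t => ψ (x * t)) y) z0 (μ := μψ)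
      have hpt : ∀ y : F, Set.indicator (pF ord n) (fun t => ψ (x * t)) (z0 + y)
          = ψ (x * z0) * Set.indicator (pF ord n) (fun t => ψ (x * t)) y := by
        intro y
        by_cases hy : y ∈ pF ord n
        · have h1 : z0 + y ∈ pF ord n := hPadd n hz0mem hy
          rw [Set.indicator_of_mem h1, Set.indicator_of_mem hy, mul_add, hψadd]
        · have h1 : z0 + y ∉ pF ord n := by
            intro hc
            apply hy
            have := hPadd n (hPneg n hz0mem) hc
            simpa using this
          rw [Set.indicator_of_notMem h1, Set.indicator_of_notMem hy, mul_zero]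
      rw [show (fun y => Set.indicator (pF ord n) (fun t => ψ (x * t)) (z0 + y))
          = (fun y => ψ (x * z0) * Set.indicator (pF ord n) (fun t => ψ (x * t)) y)
          from funext hpt] at htrans
      rw [integral_const_mul] at htrans
      have hIint : ∫ y, Set.indicator (pF ord n) (fun t => ψ (x * t)) y ∂μψ = 0 := by
        have hψz : ψ (x * z0) ≠ 1 := by rw [hxz0]; exact hx0ne
        have hfact : (ψ (x * z0) - 1) * ∫ y, Set.indicator (pF ord n) (fun t => ψ (x * t)) y ∂μψ
            = 0 := by linear_combination htrans
        rcases mul_eq_zero.mp hfact with h | h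
        · exact absurd (sub_eq_zero.mp h) hψz
        · exact h
      rw [← integral_indicator (hPmeas n)]
      exact hIint
  -- neighborhood basis of 0 given by the pF n
  have hshrink : ∀ V : Set F, IsOpen V → (0 : F) ∈ V → ∃ m : ℕ, pF ord (m : ℤ) ⊆ V := by
    intro V hV h0
    by_contra hcon
    push_neg at hcon
    have hne : ∀ m : ℕ, (pF ord (m : ℤ) \ V).Nonempty := by
      intro m
      rcases Set.not_subset.mp (hcon m) with ⟨x, hx1, hx2⟩
      exact ⟨x, hx1, hx2⟩
    have hnested : ∀ m : ℕ, (pF ord ((m + 1 : ℕ) : ℤ) \ V) ⊆ (pF ord (m : ℤ) \ V) := by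
      intro m
      apply Set.diff_subset_diff_left
      apply hPanti
      exact_mod_cast Nat.le_succ m
    have hclosed : ∀ m : ℕ, IsClosed (pF ord (m : ℤ) \ V) := fun m =>
      (hPclosed _).sdiff hV
    have hcpt0 : IsCompact (pF ord ((0 : ℕ) : ℤ) \ V) := (hcompact _).diff hV
    obtain ⟨x, hx⟩ := IsCompact.nonempty_iInter_of_sequence_nonempty_isCompact_isClosed
      (fun m : ℕ => pF ord (m : ℤ) \ V) hnested hne hcpt0 hclosed
    simp only [Set.mem_iInter, Set.mem_diff] at hx
    have hx0 : x ≠ 0 := fun h => (hx 0).2 (h ▸ h0)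
    have : ∀ m : ℕ, (m : ℤ) ≤ ord x := fun m => (hPmem hx0).mp (hx m).1
    have hm := this (ord x).toNat.succ
    omega
  -- χ is trivial near 1
  have hχ1 : χ 1 = 1 := by
    have h := hχmul 1 1 one_ne_zero one_ne_zero
    rw [mul_one] at h
    have := hχne 1 one_ne_zero
    field_simp at h
    tauto
  have hχinv : ∀ x : F, x ≠ 0 → χ x⁻¹ = (χ x)⁻¹ := by
    intro x hx
    have h := hχmul x x⁻¹ hx (inv_ne_zero hx)
    rw [mul_inv_cancel₀ hx, hχ1] at h
    exact eq_inv_of_mul_eq_one_right h.symm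
  have hχpow : ∀ (x : F), x ≠ 0 → ∀ j : ℕ, χ (x ^ j) = (χ x) ^ j := by
    intro x hx j
    induction j with
    | zero => rw [pow_zero, pow_zero, hχ1]
    | succ j ih => rw [pow_succ, pow_succ, hχmul _ _ (pow_ne_zero j hx) hx, ih]
  -- find mV from continuity of χ at 1
  obtain ⟨mV, hmV⟩ : ∃ m : ℕ, ∀ x : F, x - 1 ∈ pF ord (m : ℤ) → x ≠ 0 →
      ‖χ x - 1‖ < 1/2 := by
    have hc1 : ContinuousWithinAt χ {x : F | x ≠ 0} 1 := hχc 1 (by simp)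
    have hball : {z : ℂ | ‖z - 1‖ < 1/2} ∈ nhds (χ 1) := by
      rw [hχ1]
      have hb : Metric.ball (1 : ℂ) (1/2) ∈ nhds (1 : ℂ) := Metric.ball_mem_nhds _ (by norm_num)
      refine Filter.mem_of_superset hb ?_
      intro z hz
      simpa [Metric.mem_ball, Complex.dist_eq] using hz
    have hpre := hc1 hball
    rw [Filter.mem_map, mem_nhdsWithin] at hpre
    obtain ⟨U, hUopen, hU1, hUsub⟩ := hpre
    have hV'open : IsOpen ((fun y : F => 1 + y) ⁻¹' U) :=
      hUopen.preimage (continuous_const.add continuous_id)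
    have hV'0 : (0 : F) ∈ (fun y : F => 1 + y) ⁻¹' U := by
      simp only [Set.mem_preimage, add_zero]
      exact hU1
    obtain ⟨m, hm⟩ := hshrink _ hV'open hV'0
    refine ⟨m, fun x hx hx0 => ?_⟩
    have hxU : x ∈ U := by
      have := hm hx
      simpa using this
    exact hUsub ⟨hxU, hx0⟩
  -- the level of triviality of χ
  set nχ : ℤ := max (mV : ℤ) 1 with hnχdef
  have hnχ1 : 1 ≤ nχ := le_max_right _ _
  have hnχm : (mV : ℤ) ≤ nχ := le_max_left _ _
  set S : Set F := {x : F | x - 1 ∈ pF ord nχ} with hSdef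
  have hSmem : ∀ {x : F}, x ∈ S ↔ x - 1 ∈ pF ord nχ := by intro x; rfl
  have hS1 : (1 : F) ∈ S := by rw [hSmem]; simpa using hP0mem nχ
  have hSne0 : ∀ {x : F}, x ∈ S → x ≠ 0 ∧ ord x = 0 := by
    intro x hx
    rw [hSmem] at hx
    rcases eq_or_ne (x - 1) 0 with h | h
    · have : x = 1 := by linear_combination h
      subst this
      exact ⟨one_ne_zero, hord1⟩
    have hordu : 1 ≤ ord (x - 1) := le_trans hnχ1 ((hPmem h).mp hx)
    have hx0 : x ≠ 0 := by
      intro hc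
      subst hc
      have : ord (0 - 1 : F) = 0 := by
        rw [zero_sub]
        exact hordneg1
      omega
    refine ⟨hx0, ?_⟩
    have h1 : x = 1 + (x - 1) := by ring
    have hle : (0 : ℤ) ≤ ord x := by
      have := hord_add 1 (x - 1) one_ne_zero h (by rw [← h1]; exact hx0)
      rw [← h1, hord1] at this
      omega
    have hge : ord x ≤ 0 := by
      have h2 : (1 : F) = x + -(x - 1) := by ring
      have h3 := hord_add x (-(x - 1)) hx0 (neg_ne_zero.mpr h) (by rw [← h2]; exact one_ne_zero)
      rw [← h2, hord1, hordneg _ h] at h3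
      omega
    omega
  have hSabs : ∀ {x : F}, x ∈ S → absF q ord x = 1 := by
    intro x hx
    obtain ⟨hx0, hordx⟩ := hSne0 hx
    rw [habs hx0, hordx]
    norm_num
  have hSmulmem : ∀ {x y : F}, x ∈ S → y ∈ S → x * y ∈ S := by
    intro x y hx hy
    rw [hSmem] at hx hy ⊢
    have hxy : x * y - 1 = (x - 1) * (y - 1) + ((x - 1) + (y - 1)) := by ring
    rw [hxy]
    apply hPadd nχ _ (hPadd nχ hx hy)
    rcases eq_or_ne (x - 1) 0 with h | h
    · rw [h, zero_mul]; exact hP0mem nχ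
    rcases eq_or_ne (y - 1) 0 with h' | h'
    · rw [h', mul_zero]; exact hP0mem nχ
    refine Or.inr ?_
    rw [hord_mul _ _ h h']
    have h1 := (hPmem h).mp hx
    have h2 := (hPmem h').mp hy
    omega
  have hχS : ∀ {x : F}, x ∈ S → χ x = 1 := by
    intro x hx
    have hx0 := (hSne0 hx).1
    apply aux_pow_half
    intro j hj
    have hxj : x ^ j ∈ S := by
      clear hj
      induction j with
      | zero => rw [pow_zero]; exact hS1
      | succ j ih => rw [pow_succ]; exact hSmulmem ih hx
    rw [← hχpow x hx0 j]
    exact hmV _ (hPanti hnχm ((hSmem).mp hxj)) (pow_ne_zero j hx0)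
  -- properties of S
  have hScont : Continuous (fun x : F => x - 1) := continuous_id.sub continuous_const
  have hSopen : IsOpen S := (hopen nχ).preimage hScont
  have hSclosed : IsClosed S := (hPclosed nχ).preimage hScont
  have hSmeas : MeasurableSet S := hSopen.measurableSet
  have hSimage : S = (fun u : F => 1 + u) '' pF ord nχ := by
    ext x
    constructor
    · intro hx
      exact ⟨x - 1, (hSmem).mp hx, by ring⟩
    · rintro ⟨u, hu, rfl⟩
      rw [hSmem]
      simpa using hu
  have hScompact : IsCompact S := by
    rw [hSimage]
    exact (hcompact nχ).image (continuous_const.add continuous_id)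
  -- the test function f and its Fourier transform g
  set Mn : ℝ := (μψ (pF ord nχ)).toReal with hMndef
  set f : F → ℂ := Set.indicator S (fun _ => (1 : ℂ)) with hfdef
  set P' : Set F := pF ord (l - nχ) with hP'def
  set g : F → ℂ := fun x => Set.indicator P' (fun t => ψ t * (Mn : ℂ)) x with hgdef
  have hFT1 : ∀ x : F, FT ψ μψ f x = g x := by
    intro x
    have hpt : (fun y => f y * ψ (x * y)) = Set.indicator S (fun y => ψ (x * y)) := by
      funext y
      by_cases hy : y ∈ S
      · rw [hfdef]
        simp only [Set.indicator_of_mem hy, one_mul]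
      · rw [hfdef]
        simp only [Set.indicator_of_notMem hy, zero_mul]
    unfold FT
    rw [hpt]
    rw [← integral_add_left_eq_self (fun y => Set.indicator S (fun t => ψ (x * t)) y) 1]
    have hpt2 : (fun y => Set.indicator S (fun t => ψ (x * t)) (1 + y))
        = fun y => ψ x * Set.indicator (pF ord nχ) (fun t => ψ (x * t)) y := by
      funext y
      by_cases hy : y ∈ pF ord nχ
      · have h1 : (1 : F) + y ∈ S := by
          rw [hSmem]
          rw [show (1 : F) + y - 1 = y from by ring]
          exact hy
        rw [Set.indicator_of_mem h1, Set.indicator_of_mem hy, mul_add, hψadd, mul_one]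
      · have h1 : (1 : F) + y ∉ S := by
          rw [hSmem]
          rw [show (1 : F) + y - 1 = y from by ring]
          exact hy
        rw [Set.indicator_of_notMem h1, Set.indicator_of_notMem hy, mul_zero]
    rw [hpt2, integral_const_mul, integral_indicator (hPmeas nχ), hI nχ x]
    simp only [hgdef]
    by_cases hx : x ∈ P'
    · rw [if_pos (by exact hx), Set.indicator_of_mem hx]
    · rw [if_neg (by exact hx), Set.indicator_of_notMem hx, mul_zero]
  have hMM : Mn * (μψ (pF ord (l - nχ))).toReal = 1 := by
    rw [hMndef, hμPtoReal, hμPtoReal]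
    have e1 : Q ^ (-nχ) * Q ^ (-(l - nχ)) = Q ^ (-l) := by
      rw [← zpow_add₀ (ne_of_gt hQ0)]
      congr 1
      ring
    have e2 : Q ^ ((l : ℝ)/2) * Q ^ ((l : ℝ)/2) = Q ^ (l : ℝ) := by
      rw [← Real.rpow_add hQ0]
      norm_num
    calc (Q ^ (-nχ) * Q ^ ((l : ℝ)/2)) * (Q ^ (-(l - nχ)) * Q ^ ((l : ℝ)/2))
        = (Q ^ (-nχ) * Q ^ (-(l - nχ))) * (Q ^ ((l : ℝ)/2) * Q ^ ((l : ℝ)/2)) := by ring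
      _ = Q ^ (-l) * Q ^ (l : ℝ) := by rw [e1, e2]
      _ = Q ^ (-l) * Q ^ (l : ℤ) := by rw [← Real.rpow_intCast Q l]
      _ = 1 := by
          rw [← zpow_add₀ (ne_of_gt hQ0)]
          norm_num
  have hFT2 : ∀ x : F, FT (fun t => ψ (-t)) μψ g x = f x := by
    intro x
    have hpt : (fun y => g y * ψ (-(x * y)))
        = fun y => Set.indicator P' (fun t => (Mn : ℂ) * ψ ((1 - x) * t)) y := by
      funext y
      by_cases hy : y ∈ P'
      · rw [hgdef]
        simp only
        rw [Set.indicator_of_mem hy, Set.indicator_of_mem hy]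
        have h3 : ψ y * ψ (-(x * y)) = ψ ((1 - x) * y) := by
          rw [← hψadd]
          congr 1
          ring
        calc ψ y * (Mn : ℂ) * ψ (-(x * y)) = (Mn : ℂ) * (ψ y * ψ (-(x * y))) := by ring
          _ = (Mn : ℂ) * ψ ((1 - x) * y) := by rw [h3]
      · rw [hgdef]
        simp only
        rw [Set.indicator_of_notMem hy, Set.indicator_of_notMem hy, zero_mul]
    show (∫ y, g y * ψ (-(x * y)) ∂μψ) = f x
    rw [show (fun y => g y * ψ (-(x * y)))
        = fun y => Set.indicator P' (fun t => (Mn : ℂ) * ψ ((1 - x) * t)) y from hpt]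
    have hpull : (fun y => Set.indicator P' (fun t => (Mn : ℂ) * ψ ((1 - x) * t)) y)
        = fun y => (Mn : ℂ) * Set.indicator P' (fun t => ψ ((1 - x) * t)) y := by
      funext y
      by_cases hy : y ∈ P'
      · rw [Set.indicator_of_mem hy, Set.indicator_of_mem hy]
      · rw [Set.indicator_of_notMem hy, Set.indicator_of_notMem hy, mul_zero]
    rw [hpull, integral_const_mul, integral_indicator (hPmeas (l - nχ))]
    rw [hI (l - nχ) (1 - x)]
    rw [show l - (l - nχ) = nχ from by ring]
    have hcond : ((1 - x) ∈ pF ord nχ) ↔ x ∈ S := by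
      constructor
      · intro h
        rw [hSmem]
        rw [show x - 1 = -(1 - x) from by ring]
        exact hPneg nχ h
      · intro h
        rw [hSmem] at h
        rw [show (1 : F) - x = -(x - 1) from by ring]
        exact hPneg nχ h
    by_cases hx : x ∈ S
    · rw [if_pos (hcond.mpr hx), hfdef, Set.indicator_of_mem hx]
      rw [← Complex.ofReal_mul]
      rw [hMM]
      norm_num
    · rw [if_neg (fun hc => hx (hcond.mp hc)), hfdef, Set.indicator_of_notMem hx, mul_zero]
  -- f and g are admissible test functions
  have hf_lc : IsLocallyConstant f := by
    rw [IsLocallyConstant.iff_exists_open]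
    intro x
    by_cases hx : x ∈ S
    · refine ⟨S, hSopen, hx, fun y hy => ?_⟩
      rw [hfdef]
      simp only [Set.indicator_of_mem hy, Set.indicator_of_mem hx]
    · refine ⟨Sᶜ, hSclosed.isOpen_compl, hx, fun y hy => ?_⟩
      rw [hfdef]
      simp only [Set.indicator_of_notMem (Set.notMem_of_mem_compl hy),
        Set.indicator_of_notMem hx]
  have hf_cs : HasCompactSupport f :=
    HasCompactSupport.intro' hScompact hSclosed (fun x hx => Set.indicator_of_notMem hx _)
  have hg_lc : IsLocallyConstant g := by
    rw [IsLocallyConstant.iff_exists_open]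
    intro x
    by_cases hx : x ∈ P'
    · refine ⟨{y : F | y - x ∈ pF ord (max l (l - nχ))}, ?_, ?_, ?_⟩
      · exact (hopen _).preimage (continuous_id.sub continuous_const)
      · show x - x ∈ pF ord (max l (l - nχ))
        rw [sub_self]
        exact hP0mem _
      · intro y hy
        have hyx : y - x ∈ pF ord (max l (l - nχ)) := hy
        have h1 : y ∈ P' := by
          have h2 := hPadd (l - nχ) hx (hPanti (le_max_right l (l - nχ)) hyx)
          rwa [show x + (y - x) = y from by ring] at h2
        have hψy : ψ y = ψ x := by
          have h3 := hψadd x (y - x)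
          rw [show x + (y - x) = y from by ring] at h3
          rw [h3, hψl _ (hPanti (le_max_left l (l - nχ)) hyx), mul_one]
        rw [hgdef]
        simp only
        rw [Set.indicator_of_mem h1, Set.indicator_of_mem hx, hψy]
    · refine ⟨{y : F | y - x ∈ pF ord (l - nχ)}, ?_, ?_, ?_⟩
      · exact (hopen _).preimage (continuous_id.sub continuous_const)
      · show x - x ∈ pF ord (l - nχ)
        rw [sub_self]
        exact hP0mem _
      · intro y hy
        have hyx : y - x ∈ pF ord (l - nχ) := hy
        have h1 : y ∉ P' := by
          intro hc
          apply hx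
          have h2 := hPadd (l - nχ) hc (hPneg _ hyx)
          rwa [show y + -(y - x) = x from by ring] at h2
        rw [hgdef]
        simp only
        rw [Set.indicator_of_notMem h1, Set.indicator_of_notMem hx]
  have hg_cs : HasCompactSupport g := by
    apply HasCompactSupport.intro' (hcompact (l - nχ)) (hPclosed _)
    intro x hx
    rw [hgdef]
    simp only
    exact Set.indicator_of_notMem hx _
  -- the zeta integral of f
  have hζ : ∀ s' : ℂ, zetaF q ord μψ χ s' f
      = (((mulMeasure q ord μψ) S).toReal : ℂ) := by
    intro s'
    unfold zetaF
    have hpt : (fun x => f x * χ x * (↑(absF q ord x) : ℂ) ^ s')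
        = Set.indicator S (fun _ => (1 : ℂ)) := by
      funext x
      by_cases hx : x ∈ S
      · rw [hfdef]
        simp only [Set.indicator_of_mem hx]
        rw [hχS hx, hSabs hx]
        norm_num
      · rw [hfdef]
        simp only [Set.indicator_of_notMem hx]
        rw [zero_mul, zero_mul]
    rw [hpt, integral_indicator_const (1 : ℂ) hSmeas]
    rw [Complex.real_smul, mul_one, Measure.real_def]
  have hνS : (mulMeasure q ord μψ) S = ENNReal.ofReal (Q / (Q - 1)) * μψ (pF ord nχ) := by
    unfold mulMeasure
    rw [withDensity_apply _ hSmeas]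
    have hpt : ∀ᵐ x ∂μψ, x ∈ S →
        ENNReal.ofReal ((q : ℝ) / ((q : ℝ) - 1) * (absF q ord x)⁻¹)
          = ENNReal.ofReal (Q / (Q - 1)) := by
      apply ae_of_all
      intro x hx
      rw [hSabs hx, hQdef]
      norm_num
    rw [setLIntegral_congr_fun_ae hSmeas hpt, setLIntegral_const]
    have hμS : μψ S = μψ (pF ord nχ) := by
      have hSpre : S = (fun y : F => (-1 : F) + y) ⁻¹' (pF ord nχ) := by
        ext y
        rw [hSmem]
        show y - 1 ∈ pF ord nχ ↔ (-1 : F) + y ∈ pF ord nχ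
        rw [show (-1 : F) + y = y - 1 from by ring]
      rw [hSpre, measure_preimage_add]
    rw [hμS]
  have hVcpos : 0 < ((mulMeasure q ord μψ) S).toReal := by
    have hQQ : 0 < Q / (Q - 1) := by
      apply div_pos hQ0
      linarith
    rw [hνS, hμP nχ]
    rw [← ENNReal.ofReal_mul hQQ.le]
    rw [ENNReal.toReal_ofReal (mul_nonneg hQQ.le (by positivity))]
    have h2 : (0:ℝ) < Q ^ (-nχ) * Q ^ ((l : ℝ)/2) := by positivity
    exact mul_pos hQQ h2
  have hVcne : (((mulMeasure q ord μψ) S).toReal : ℂ) ≠ 0 :=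
    Complex.ofReal_ne_zero.mpr (ne_of_gt hVcpos)
  -- non-vanishing of L-factors in the strip
  have habsq : ∀ w : ℂ, ‖(q : ℂ) ^ w‖ = Q ^ (w.re) := by
    intro w
    rw [show ((q : ℕ) : ℂ) = ((Q : ℝ) : ℂ) from by rw [hQdef]; push_cast; rfl]
    exact Complex.norm_cpow_eq_rpow_re_of_pos hQ0 w
  have habsχϖ : ‖χ ϖ‖ = Q ^ (-σ : ℝ) := by
    rw [hσ ϖ hϖ0, habs hϖ0, hϖ1]
    rw [show (Q ^ (-(1 : ℤ)) : ℝ) = Q ^ ((-1 : ℝ)) from by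
      rw [← Real.rpow_intCast Q (-1)]; norm_num]
    rw [← Real.rpow_mul (le_of_lt hQ0)]
    norm_num
  have hLne : ∀ s : ℂ, -σ < s.re → s.re < 1 - σ →
      Lfactor q ord ϖ χ s ≠ 0 ∧ Lfactor q ord ϖ (fun x => (χ x)⁻¹) (1 - s) ≠ 0 := by
    intro s h1 h2
    constructor
    · unfold Lfactor
      split_ifs with hram
      · apply inv_ne_zero
        intro hzero
        have h0 : χ ϖ * (q : ℂ) ^ (-s) = 1 := by linear_combination -hzero
        have habs1 : ‖χ ϖ * (q : ℂ) ^ (-s)‖ = 1 := by rw [h0, norm_one]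
        rw [norm_mul, habsχϖ, habsq, Complex.neg_re, ← Real.rpow_add hQ0] at habs1
        have hlt : Q ^ (-σ + -s.re) < 1 :=
          Real.rpow_lt_one_of_one_lt_of_neg hQ1 (by linarith)
        linarith
      · exact one_ne_zero
    · unfold Lfactor
      split_ifs with hram
      · apply inv_ne_zero
        intro hzero
        have h0 : (χ ϖ)⁻¹ * (q : ℂ) ^ (-(1 - s)) = 1 := by linear_combination -hzero
        have habs1 : ‖(χ ϖ)⁻¹ * (q : ℂ) ^ (-(1 - s))‖ = 1 := by rw [h0, norm_one]
        rw [norm_mul, norm_inv, habsχϖ, habsq] at habs1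
        rw [show (Q ^ (-σ : ℝ))⁻¹ = Q ^ (σ : ℝ) from by
          rw [← Real.rpow_neg (le_of_lt hQ0)]; norm_num] at habs1
        rw [show (-(1 - s)).re = s.re - 1 from by
          simp [Complex.neg_re, Complex.sub_re, Complex.one_re]] at habs1
        rw [← Real.rpow_add hQ0] at habs1
        have hlt : Q ^ (σ + (s.re - 1)) < 1 :=
          Real.rpow_lt_one_of_one_lt_of_neg hQ1 (by linarith)
        linarith
      · exact one_ne_zero
  refine ⟨?_, ?_⟩
  · -- part (a)
    intro s h1 h2
    have E1 := hΓ f hf_lc hf_cs s h1 h2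
    have E2 := hΓbar g hg_lc hg_cs (1 - s)
      (by simp only [Complex.sub_re, Complex.one_re]; linarith)
      (by simp only [Complex.sub_re, Complex.one_re]; linarith)
    rw [show FT ψ μψ f = g from funext hFT1] at E1
    rw [hζ s] at E1
    rw [show FT (fun x => ψ (-x)) μψ g = f from funext hFT2] at E2
    simp only [inv_inv] at E2
    rw [show (1 : ℂ) - (1 - s) = s from by ring] at E2
    rw [hζ s, E1] at E2
    have hBA : RatFunc.eval (RingHom.id ℂ) ((q : ℂ) ^ (-(1 - s))) Γbar
        * RatFunc.eval (RingHom.id ℂ) ((q : ℂ) ^ (-s)) Γ = 1 := by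
      apply mul_right_cancel₀ hVcne
      rw [one_mul, mul_assoc]
      exact E2.symm
    obtain ⟨hL1, hL2⟩ := hLne s h1 h2
    unfold epsFactor
    simp only [inv_inv]
    rw [sub_sub_cancel]
    have habstract : ∀ (A B L1 L2 : ℂ), L1 ≠ 0 → L2 ≠ 0 → B * A = 1 →
        A * L1 / L2 * (B * L2 / L1) = 1 := by
      intro A B L1 L2 hh1 hh2 hh3
      rw [div_mul_div_comm, div_eq_one_iff_eq (mul_ne_zero hh2 hh1)]
      linear_combination (L1 * L2) * hh3
    exact habstract _ _ _ _ hL1 hL2 hBA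
  · -- part (b)
    intro s h1 h2
    -- topological niceties: T1, σ-compact, metrizable
    have h0closed : IsClosed ({(0 : F)} : Set F) := by
      have hsing : ({(0 : F)} : Set F) = ⋂ m : ℕ, pF ord (m : ℤ) := by
        ext x
        simp only [Set.mem_singleton_iff, Set.mem_iInter]
        constructor
        · rintro rfl m
          exact hP0mem _
        · intro h
          by_contra hx
          have hb := fun m : ℕ => (hPmem hx).mp (h m)
          have h2 := hb (ord x).toNat.succ
          omega
      rw [hsing]
      exact isClosed_iInter (fun m => hPclosed _)
    haveI : T1Space F := IsTopologicalAddGroup.t1Space F h0closed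
    haveI : SigmaCompactSpace F := by
      refine ⟨⟨fun n : ℕ => pF ord (-(n : ℤ)), fun n => hcompact _, ?_⟩⟩
      ext x
      simp only [Set.mem_iUnion, Set.mem_univ, iff_true]
      rcases eq_or_ne x 0 with rfl | hx
      · exact ⟨0, hP0mem _⟩
      · refine ⟨(-(ord x)).toNat, Or.inr ?_⟩
        have := Int.self_le_toNat (-(ord x))
        omega
    have hbasis0 : (nhds (0 : F)).HasBasis (fun _ : ℕ => True) (fun m : ℕ => pF ord (m : ℤ)) := by
      refine ⟨fun U => ⟨?_, ?_⟩⟩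
      · intro hU
        rcases mem_nhds_iff.mp hU with ⟨V, hVU, hVopen, hV0⟩
        obtain ⟨m, hm⟩ := hshrink V hVopen hV0
        exact ⟨m, trivial, hm.trans hVU⟩
      · rintro ⟨m, -, hm⟩
        exact Filter.mem_of_superset ((hopen _).mem_nhds (hP0mem _)) hm
    haveI hncg : (nhds (0 : F)).IsCountablyGenerated := hbasis0.isCountablyGenerated
    letI UF : UniformSpace F := IsTopologicalAddGroup.rightUniformSpace F
    haveI hucg : (uniformity F).IsCountablyGenerated := by
      have heq : uniformity F = Filter.comap (fun p : F × F => p.2 - p.1) (nhds 0) :=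
        by simp only [sub_eq_add_neg]; exact uniformity_eq_comap_nhds_zero' F
      rw [heq]
      exact Filter.comap.isCountablyGenerated _ _
    haveI hmet : TopologicalSpace.PseudoMetrizableSpace F :=
      UniformSpace.pseudoMetrizableSpace
    haveI hreg1 : μψ.Regular := inferInstance
    haveI hreg2 : μa.Regular := inferInstance
    have huniq := Measure.isAddLeftInvariant_eq_smul_of_regular μa μψ
    -- determine the scalar
    set c : ℝ := Q ^ (-((ord a : ℝ))/2) with hcdef
    have hcpos : 0 < c := Real.rpow_pos_of_pos hQ0 _
    set κ : NNReal := μa.addHaarScalarFactor μψ with hκdef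
    have hk0 : μa (pF ord 0) = (κ : ENNReal) * μψ (pF ord 0) := by
      conv_lhs => rw [huniq]
      rw [Measure.smul_apply, ENNReal.smul_def, smul_eq_mul]
    have hκc : (κ : ℝ) = c := by
      rw [hμa, hμψ] at hk0
      have h := congrArg ENNReal.toReal hk0
      rw [ENNReal.toReal_ofReal (by positivity), ENNReal.toReal_mul,
        ENNReal.toReal_ofReal (by positivity), ENNReal.coe_toReal] at h
      have hQl : (0 : ℝ) < Q ^ ((l : ℝ)/2) := Real.rpow_pos_of_pos hQ0 _
      have hκval : (κ : ℝ) = Q ^ (((l - ord a : ℤ) : ℝ)/2) / Q ^ ((l : ℝ)/2) := by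
        field_simp at h ⊢
        linarith [h]
      rw [hκval, ← Real.rpow_sub hQ0, hcdef]
      congr 1
      push_cast
      ring
    have hcoeκ : ENNReal.ofReal c = (κ : ENNReal) := by
      rw [← hκc, ENNReal.ofReal_coe_nnreal]
    have hμa2 : μa = ENNReal.ofReal c • μψ := by
      rw [huniq]
      refine Measure.ext (fun B hB => ?_)
      rw [Measure.smul_apply, Measure.smul_apply, hcoeκ, ENNReal.smul_def]
    have hcC : ((c : ℝ) : ℂ) ≠ 0 := Complex.ofReal_ne_zero.mpr (ne_of_gt hcpos)
    -- zeta and FT over μa reduce to μψ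
    have hmulν : mulMeasure q ord μa = ENNReal.ofReal c • mulMeasure q ord μψ := by
      unfold mulMeasure
      rw [hμa2, withDensity_smul_measure]
    have hza : ∀ (χ' : F → ℂ) (s' : ℂ) (h : F → ℂ),
        zetaF q ord μa χ' s' h = (c : ℂ) * zetaF q ord μψ χ' s' h := by
      intro χ' s' h
      unfold zetaF
      rw [hmulν, integral_smul_measure, ENNReal.toReal_ofReal hcpos.le, Complex.real_smul]
    have hFTa : ∀ x : F, FT (fun t => ψ (a * t)) μa f x = (c : ℂ) * g (a * x) := by
      intro x
      show (∫ y, f y * ψ (a * (x * y)) ∂μa) = (c : ℂ) * g (a * x)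
      rw [hμa2, integral_smul_measure, ENNReal.toReal_ofReal hcpos.le, Complex.real_smul]
      congr 1
      rw [show (fun y => f y * ψ (a * (x * y))) = (fun y => f y * ψ ((a * x) * y)) from by
        funext y; rw [mul_assoc]]
      exact hFT1 (a * x)
    -- multiplicative invariance of the multiplicative Haar measure
    set em : F ≃ᵐ F := (Homeomorph.mulLeft₀ a ha).toMeasurableEquiv with hemdef
    have hem : ∀ x : F, em x = a * x := fun x => rfl
    have hmapμψ : Measure.map (⇑em) μψ = ENNReal.ofReal (absF q ord a⁻¹) • μψ := by
      refine Measure.ext (fun B hB => ?_)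
      rw [MeasurableEquiv.map_apply]
      have hpre : ⇑em ⁻¹' B = (fun y => a⁻¹ * y) '' B := by
        ext x
        constructor
        · intro hx
          refine ⟨a * x, hx, ?_⟩
          show a⁻¹ * (a * x) = x
          exact inv_mul_cancel_left₀ ha x
        · rintro ⟨b, hb, rfl⟩
          show em (a⁻¹ * b) ∈ B
          rw [hem, mul_inv_cancel_left₀ ha]
          exact hb
      rw [hpre, hμscale a⁻¹ (inv_ne_zero ha) B, Measure.smul_apply, smul_eq_mul]
    have habsainv : 0 < absF q ord a⁻¹ := habspos (inv_ne_zero ha)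
    have hmapν : Measure.map (⇑em) (mulMeasure q ord μψ) = mulMeasure q ord μψ := by
      refine Measure.ext (fun B hB => ?_)
      rw [MeasurableEquiv.map_apply]
      show (mulMeasure q ord μψ) (⇑em ⁻¹' B) = (mulMeasure q ord μψ) B
      unfold mulMeasure
      rw [withDensity_apply _ (em.measurable hB), withDensity_apply _ hB]
      rw [← lintegral_indicator (em.measurable hB), ← lintegral_indicator hB]
      set dd : F → ENNReal :=
        fun x => ENNReal.ofReal ((q : ℝ) / ((q : ℝ) - 1) * (absF q ord x)⁻¹) with hdd
      have hpt : ∀ x : F, Set.indicator (⇑em ⁻¹' B) dd x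
          = Set.indicator B (fun y => dd (a⁻¹ * y)) (em x) := by
        intro x
        by_cases hx : a * x ∈ B
        · rw [Set.indicator_of_mem (show x ∈ ⇑em ⁻¹' B from by
            simp only [Set.mem_preimage, hem]; exact hx)]
          rw [hem, Set.indicator_of_mem hx, inv_mul_cancel_left₀ ha]
        · rw [Set.indicator_of_notMem (show x ∉ ⇑em ⁻¹' B from by
            simp only [Set.mem_preimage, hem]; exact hx)]
          rw [hem, Set.indicator_of_notMem hx]
      have hdpt : ∀ y : F, Set.indicator B (fun t => dd (a⁻¹ * t)) y
          = ENNReal.ofReal ((absF q ord a⁻¹)⁻¹) * Set.indicator B dd y := by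
        intro y
        by_cases hy : y ∈ B
        · rw [Set.indicator_of_mem hy, Set.indicator_of_mem hy, hdd]
          simp only
          rw [habsmul]
          rw [show (q : ℝ) / ((q : ℝ) - 1) * (absF q ord a⁻¹ * absF q ord y)⁻¹
              = (absF q ord a⁻¹)⁻¹ * ((q : ℝ) / ((q : ℝ) - 1) * (absF q ord y)⁻¹) from by
            rw [mul_inv]; ring]
          rw [ENNReal.ofReal_mul (inv_nonneg.mpr (habsnonneg _))]
        · rw [Set.indicator_of_notMem hy, Set.indicator_of_notMem hy, mul_zero]
      calc ∫⁻ x, Set.indicator (⇑em ⁻¹' B) dd x ∂μψ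
          = ∫⁻ x, Set.indicator B (fun y => dd (a⁻¹ * y)) (em x) ∂μψ := lintegral_congr hpt
        _ = ∫⁻ y, Set.indicator B (fun t => dd (a⁻¹ * t)) y ∂(Measure.map (⇑em) μψ) :=
            (lintegral_map_equiv _ em).symm
        _ = ENNReal.ofReal (absF q ord a⁻¹)
            * ∫⁻ y, Set.indicator B (fun t => dd (a⁻¹ * t)) y ∂μψ := by
            rw [hmapμψ, lintegral_smul_measure, smul_eq_mul]
        _ = ENNReal.ofReal (absF q ord a⁻¹) * (ENNReal.ofReal ((absF q ord a⁻¹)⁻¹)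
            * ∫⁻ y, Set.indicator B dd y ∂μψ) := by
            rw [lintegral_congr hdpt, lintegral_const_mul' _ _ ENNReal.ofReal_ne_top]
        _ = ∫⁻ y, Set.indicator B dd y ∂μψ := by
            rw [← mul_assoc, ← ENNReal.ofReal_mul (habsnonneg _),
              mul_inv_cancel₀ (ne_of_gt habsainv), ENNReal.ofReal_one, one_mul]
    have hinvint : ∀ h : F → ℂ, (∫ x, h (a * x) ∂(mulMeasure q ord μψ))
        = ∫ x, h x ∂(mulMeasure q ord μψ) := by
      intro h
      have h1 : (∫ x, h (a * x) ∂(mulMeasure q ord μψ))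
          = ∫ x, h (em x) ∂(mulMeasure q ord μψ) := rfl
      rw [h1, ← MeasureTheory.integral_map_equiv em h, hmapν]
    -- the multiplicative measure gives no mass to 0
    have hν0 : (mulMeasure q ord μψ) ({(0 : F)} : Set F) = 0 := by
      unfold mulMeasure
      rw [withDensity_apply _ (measurableSet_singleton (0 : F)), lintegral_singleton]
      rw [habs0]
      norm_num
    have haene : ∀ᵐ x ∂(mulMeasure q ord μψ), x ≠ (0 : F) := by
      rw [MeasureTheory.ae_iff]
      convert hν0 using 2
      ext x
      simp
    -- main computation
    have E1 := hΓ f hf_lc hf_cs s h1 h2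
    rw [show FT ψ μψ f = g from funext hFT1] at E1
    rw [hζ s] at E1
    have E3 := hΓa f hf_lc hf_cs s h1 h2
    rw [show FT (fun x => ψ (a * x)) μa f = fun x => (c : ℂ) * g (a * x) from funext hFTa] at E3
    rw [hza _ _ _, hza _ _ _, hζ s] at E3
    have hzc : zetaF q ord μψ (fun x => (χ x)⁻¹) (1 - s) (fun x => (c : ℂ) * g (a * x))
        = (c : ℂ) * ∫ x, g (a * x) * (χ x)⁻¹ * (↑(absF q ord x) : ℂ) ^ (1 - s)
            ∂(mulMeasure q ord μψ) := by
      show (∫ x, ((c : ℂ) * g (a * x)) * (χ x)⁻¹ * (↑(absF q ord x) : ℂ) ^ (1 - s)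
          ∂(mulMeasure q ord μψ)) = _
      rw [show (fun x => ((c : ℂ) * g (a * x)) * (χ x)⁻¹ * (↑(absF q ord x) : ℂ) ^ (1 - s))
          = fun x => (c : ℂ) * (g (a * x) * (χ x)⁻¹ * (↑(absF q ord x) : ℂ) ^ (1 - s)) from by
        funext x; ring]
      rw [integral_const_mul]
    have hαne : (↑(absF q ord a) : ℂ) ≠ 0 := Complex.ofReal_ne_zero.mpr (ne_of_gt (habspos ha))
    have hJ : (∫ x, g (a * x) * (χ x)⁻¹ * (↑(absF q ord x) : ℂ) ^ (1 - s)
          ∂(mulMeasure q ord μψ))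
        = (χ a * (↑(absF q ord a) : ℂ) ^ (s - 1))
            * zetaF q ord μψ (fun x => (χ x)⁻¹) (1 - s) g := by
      set H : F → ℂ :=
        fun y => g y * (χ (a⁻¹ * y))⁻¹ * (↑(absF q ord (a⁻¹ * y)) : ℂ) ^ (1 - s) with hHdef
      have hcomp : (fun x => g (a * x) * (χ x)⁻¹ * (↑(absF q ord x) : ℂ) ^ (1 - s))
          = fun x => H (a * x) := by
        funext x
        rw [hHdef]
        simp only
        rw [inv_mul_cancel_left₀ ha]
      have hstep : (∫ x, g (a * x) * (χ x)⁻¹ * (↑(absF q ord x) : ℂ) ^ (1 - s)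
          ∂(mulMeasure q ord μψ)) = ∫ x, H x ∂(mulMeasure q ord μψ) := by
        rw [hcomp]
        exact hinvint H
      rw [hstep]
      have habsainv2 : absF q ord a⁻¹ = (absF q ord a)⁻¹ := by
        rw [habs (inv_ne_zero ha), hordinv a ha, habs ha, zpow_neg]
      have hae : H =ᵐ[mulMeasure q ord μψ]
          fun y => (χ a * (↑(absF q ord a) : ℂ) ^ (s - 1))
            * (g y * (χ y)⁻¹ * (↑(absF q ord y) : ℂ) ^ (1 - s)) := by
        filter_upwards [haene] with y hy
        rw [hHdef]
        simp only
        have hχa : (χ (a⁻¹ * y))⁻¹ = χ a * (χ y)⁻¹ := by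
          rw [hχmul a⁻¹ y (inv_ne_zero ha) hy, hχinv a ha, mul_inv, inv_inv]
        have habsa : (↑(absF q ord (a⁻¹ * y)) : ℂ) ^ (1 - s)
            = (↑(absF q ord a) : ℂ) ^ (s - 1) * (↑(absF q ord y) : ℂ) ^ (1 - s) := by
          rw [habsmul, habsainv2, Complex.ofReal_mul,
            mul_cpow_ofReal_nonneg (inv_nonneg.mpr (habsnonneg a)) (habsnonneg y)]
          congr 1
          rw [Complex.ofReal_inv]
          rw [Complex.inv_cpow _ _ (by
            rw [Complex.arg_ofReal_of_nonneg (habsnonneg a)]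
            exact Real.pi_ne_zero.symm)]
          rw [← Complex.cpow_neg, neg_sub]
        rw [hχa, habsa]
        ring
      rw [integral_congr_ae hae, integral_const_mul]
      rfl
    rw [hzc, hJ, E1] at E3
    -- E3 : c * ((χ a * α^(s-1)) * (A * Vc) scaled) = Aa * (c * Vc)
    have hAa : RatFunc.eval (RingHom.id ℂ) ((q : ℂ) ^ (-s)) Γa
        = (c : ℂ) * (χ a * (↑(absF q ord a) : ℂ) ^ (s - 1))
            * RatFunc.eval (RingHom.id ℂ) ((q : ℂ) ^ (-s)) Γ := by
      apply mul_right_cancel₀ (mul_ne_zero hcC hVcne)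
      linear_combination -E3
    have hkey : (c : ℂ) * (↑(absF q ord a) : ℂ) ^ (s - 1)
        = (↑(absF q ord a) : ℂ) ^ (s - 1/2) := by
      have hc2 : c = (absF q ord a) ^ ((1 : ℝ)/2) := by
        rw [habs ha, hcdef]
        rw [show ((Q : ℝ) ^ (-(ord a) : ℤ)) = Q ^ (((-(ord a) : ℤ)) : ℝ) from
          (Real.rpow_intCast Q _).symm]
        rw [← Real.rpow_mul hQ0.le]
        congr 1
        push_cast
        ring
      rw [hc2, Complex.ofReal_cpow (habsnonneg a)]
      rw [← Complex.cpow_add _ _ hαne]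
      congr 1
      push_cast
      ring
    unfold epsFactor
    rw [hAa]
    rw [show (c : ℂ) * (χ a * (↑(absF q ord a) : ℂ) ^ (s - 1))
        = χ a * ((c : ℂ) * (↑(absF q ord a) : ℂ) ^ (s - 1)) from by ring]
    rw [hkey]
    ring
end
end
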